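/- arXiv:2006.15499 — 10 statements merged into one kernel-verified Lean document; each statement's English description precedes it below -/
import Mathlib

section
/- Let n ≥ 2 and m ≥ 0 be integers with n + m ≥ 3. Then there exist elements x_1, …, x_n and y_1, …, y_m of G_{p,q} such that each x_i has order p, each y_j has order q, the product x_1⋯x_n·y_1⋯y_m equals 1, and the elements x_1, …, x_n, y_1, …, y_m generate G_{p,q}. (This is the group-theoretic content of the existence direction of Theorem 1: it produces a surface-kernel epimorphism of signature (0; p,…,p, q,…,q) with n periods p and m periods q.) -/
/-- Existence direction of Theorem 1: for `n ≥ 2`, `m ≥ 0`, `n + m ≥ 3`, the nonabelian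
group `G_{p,q}` admits a generating vector of signature `(0; p,…,p, q,…,q)`. -/
theorem exists_generating_vector_of_signature
    {G : Type*} [Group G] (p q : ℕ) (hp : p.Prime) (hq : q.Prime)
    (hp2 : Odd p) (hq2 : Odd q) (hpq : p ∣ q - 1) (r : ℕ)
    (hr : orderOf (r : ZMod q) = p) (a b : G)
    (ha : orderOf a = q) (hb : orderOf b = p)
    (hrel : b * a * b⁻¹ = a ^ r)
    (hgen : Subgroup.closure ({a, b} : Set G) = ⊤)
    (hcard : Nat.card G = p * q)
    (n m : ℕ) (hn : 2 ≤ n) (hnm : 3 ≤ n + m) :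
    ∃ (x : Fin n → G) (y : Fin m → G),
      (∀ i, orderOf (x i) = p) ∧
      (∀ j, orderOf (y j) = q) ∧
      (List.ofFn x).prod * (List.ofFn y).prod = 1 ∧
      Subgroup.closure (Set.range x ∪ Set.range y) = ⊤ := by
  haveI : Fact p.Prime := ⟨hp⟩
  haveI : Fact q.Prime := ⟨hq⟩
  haveI : NeZero p := ⟨hp.pos.ne'⟩
  haveI : NeZero q := ⟨hq.pos.ne'⟩
  have hp3 : 3 ≤ p := by
    have h1 := hp.two_le
    have h2 := hp2
    rw [Nat.odd_iff] at h2
    omega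
  have hq3 : 3 ≤ q := by
    have h1 := hq.two_le
    have h2 := hq2
    rw [Nat.odd_iff] at h2
    omega
  haveI : Finite G := by
    have h0 : 0 < Nat.card G := by rw [hcard]; positivity
    exact (Nat.card_pos_iff.mp h0).2
  -- a ^ r ≠ a
  have hL0 : a ^ r ≠ a := by
    intro h
    have h1 : a ^ r = a ^ 1 := by simpa using h
    have h2 : r ≡ 1 [MOD q] := by
      have := pow_eq_pow_iff_modEq.mp h1
      rwa [ha] at this
    have h3 : (r : ZMod q) = 1 := by
      have := (ZMod.natCast_eq_natCast_iff r 1 q).mpr h2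
      simpa using this
    rw [h3, orderOf_one] at hr
    omega
  -- conjugation formula
  have hconj : ∀ j : ℕ, b ^ j * a * (b ^ j)⁻¹ = a ^ (r ^ j) := by
    intro j
    induction j with
    | zero => simp
    | succ j ih =>
      have e1 : b ^ (j + 1) * a * (b ^ (j + 1))⁻¹ = b * (b ^ j * a * (b ^ j)⁻¹) * b⁻¹ := by
        group
      rw [e1, ih]
      calc b * a ^ (r ^ j) * b⁻¹ = (b * a * b⁻¹) ^ (r ^ j) := by rw [conj_pow]
        _ = (a ^ r) ^ (r ^ j) := by rw [hrel]
        _ = a ^ (r ^ (j + 1)) := by rw [← pow_mul, pow_succ, mul_comm (r ^ j) r]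
  set N : Subgroup G := Subgroup.zpowers a with hN
  have haN : a ∈ N := Subgroup.mem_zpowers a
  have hbp : b ^ p = 1 := by rw [← hb]; exact pow_orderOf_eq_one b
  have hbinv : b⁻¹ = b ^ (p - 1) := by
    have h1 : b ^ (p - 1) * b = 1 := by
      rw [← pow_succ, Nat.sub_add_cancel hp.one_le]; exact hbp
    exact (eq_inv_of_mul_eq_one_left h1).symm
  -- all conjugates of a lie in N
  have hNsub : ∀ g : G, g * a * g⁻¹ ∈ N ∧ g⁻¹ * a * g ∈ N := by
    intro g
    have hg : g ∈ Subgroup.closure ({a, b} : Set G) := by rw [hgen]; trivial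
    induction hg using Subgroup.closure_induction with
    | mem z hz =>
      simp only [Set.mem_insert_iff, Set.mem_singleton_iff] at hz
      rcases hz with h | h
      · rw [h]
        constructor
        · have e : a * a * a⁻¹ = a := by group
          rw [e]; exact haN
        · have e : a⁻¹ * a * a = a := by group
          rw [e]; exact haN
      · rw [h]
        constructor
        · rw [hrel]; exact N.pow_mem haN r
        · have hz2 : (b ^ (p - 1))⁻¹ = b := by rw [← hbinv, inv_inv]
          have e : b⁻¹ * a * b = b ^ (p - 1) * a * (b ^ (p - 1))⁻¹ := by
            rw [hz2, ← hbinv]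
          rw [e, hconj (p - 1)]
          exact N.pow_mem haN _
    | one => constructor <;> · simpa using haN
    | mul g h hg hh ihg ihh =>
      obtain ⟨hg1, hg2⟩ := ihg
      obtain ⟨hh1, hh2⟩ := ihh
      obtain ⟨i, hi⟩ := hh1
      obtain ⟨j, hj⟩ := hg2
      constructor
      · have e : g * h * a * (g * h)⁻¹ = g * (h * a * h⁻¹) * g⁻¹ := by group
        rw [e, ← hi]
        have e2 : g * a ^ i * g⁻¹ = (g * a * g⁻¹) ^ i := conj_zpow.symm
        rw [e2]
        exact N.zpow_mem hg1 i
      · have e : (g * h)⁻¹ * a * (g * h) = h⁻¹ * (g⁻¹ * a * g) * h := by group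
        rw [e, ← hj]
        have e2 : h⁻¹ * a ^ j * h = (h⁻¹ * a * (h⁻¹)⁻¹) ^ j := by
          rw [conj_zpow, inv_inv]
        rw [e2, inv_inv]
        exact N.zpow_mem hh2 j
    | inv g hg ihg =>
      obtain ⟨h1, h2⟩ := ihg
      constructor
      · simpa using h2
      · simpa using h1
  haveI hNnormal : N.Normal := by
    constructor
    intro x hx g
    obtain ⟨i, hi⟩ := hx
    rw [← hi]
    have e : g * a ^ i * g⁻¹ = (g * a * g⁻¹) ^ i := conj_zpow.symm
    rw [e]
    exact N.zpow_mem (hNsub g).1 i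
  set φ : G →* G ⧸ N := QuotientGroup.mk' N with hφ
  have hφa : φ a = 1 := (QuotientGroup.eq_one_iff a).mpr haN
  have hbN : b ∉ N := by
    intro hmem
    obtain ⟨i, hi⟩ := hmem
    apply hL0
    rw [← hrel, ← hi]
    group
  have hφb : orderOf (φ b) = p := by
    have h1 : orderOf (φ b) ∣ p := by rw [← hb]; exact orderOf_map_dvd φ b
    have h2 : φ b ≠ 1 := fun hone => hbN ((QuotientGroup.eq_one_iff b).mp hone)
    rcases hp.eq_one_or_self_of_dvd _ h1 with h | h
    · exact absurd (orderOf_eq_one_iff.mp h) h2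
    · exact h
  have hcardQ : Nat.card (G ⧸ N) = p := by
    have h1 : Nat.card N = q := by rw [hN, Nat.card_zpowers, ha]
    have h2 := Subgroup.card_mul_index N
    rw [h1, hcard, mul_comm p q] at h2
    have h3 : N.index = p := Nat.eq_of_mul_eq_mul_left (by omega) h2
    rw [← Subgroup.index_eq_card, h3]
  -- any element with nontrivial image in the quotient has order p
  have hord_p : ∀ g : G, φ g ≠ 1 → orderOf g = p := by
    intro g hg
    have hdvd : orderOf g ∣ p * q := by rw [← hcard]; exact orderOf_dvd_natCard g
    have hpd : p ∣ orderOf g := by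
      have h1 : orderOf (φ g) ∣ p := by rw [← hcardQ]; exact orderOf_dvd_natCard (φ g)
      have h2 : orderOf (φ g) = p := by
        rcases hp.eq_one_or_self_of_dvd _ h1 with h | h
        · exact absurd (orderOf_eq_one_iff.mp h) hg
        · exact h
      rw [← h2]
      exact orderOf_map_dvd φ g
    obtain ⟨e, he⟩ := hpd
    have heq : e ∣ q := by
      rw [he] at hdvd
      exact (mul_dvd_mul_iff_left (by omega : p ≠ 0)).mp hdvd
    rcases hq.eq_one_or_self_of_dvd e heq with h | h
    · rw [he, h, mul_one]
    · exfalso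
      have hgo : orderOf g = Nat.card G := by rw [hcard, he, h]
      have htop : Subgroup.zpowers g = ⊤ := by
        apply Subgroup.eq_top_of_card_eq
        rw [Nat.card_zpowers, hgo]
      have haz : a ∈ Subgroup.zpowers g := htop ▸ Subgroup.mem_top a
      have hbz : b ∈ Subgroup.zpowers g := htop ▸ Subgroup.mem_top b
      obtain ⟨i, hi⟩ := haz
      obtain ⟨j, hj⟩ := hbz
      apply hL0
      rw [← hrel, ← hi, ← hj, ← zpow_add, ← zpow_sub, add_sub_cancel_left]
  -- choice of the auxiliary exponent k
  set k : ℕ := if p ∣ (n - 1) then 2 else 1 with hkdef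
  have hkb : 1 ≤ k ∧ k ≤ 2 := by rw [hkdef]; split_ifs <;> omega
  have hk1 : ¬ p ∣ k := by
    intro hd
    have := Nat.le_of_dvd (by omega) hd
    omega
  have hk2 : ¬ p ∣ (k + (n - 2)) := by
    rw [hkdef]
    split_ifs with h
    · intro hd
      have h1 : p ∣ (2 + (n - 2)) - (n - 1) := Nat.dvd_sub hd h
      have h2 : (2 + (n - 2)) - (n - 1) = 1 := by omega
      rw [h2] at h1
      have := Nat.le_of_dvd one_pos h1
      omega
    · intro hd
      apply h
      have h2 : 1 + (n - 2) = n - 1 := by omega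
      rwa [h2] at hd
  set c : G := a * b ^ k * a⁻¹ with hcdef
  set t : G := c⁻¹ * (b ^ (n - 2))⁻¹ * (a ^ m)⁻¹ with htdef
  have hφc : φ c = (φ b) ^ k := by
    rw [hcdef]
    simp [map_mul, map_pow, map_inv, hφa]
  have hφc_ne : φ c ≠ 1 := by
    rw [hφc]
    intro h
    exact hk1 (hφb ▸ orderOf_dvd_of_pow_eq_one h)
  have hφt_ne : φ t ≠ 1 := by
    have e : φ t = ((φ b) ^ (k + (n - 2)))⁻¹ := by
      rw [htdef]
      simp only [map_mul, map_inv, map_pow, hφa, hφc, one_pow, inv_one, mul_one, pow_add]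
      group
    rw [e]
    intro h
    have h2 : (φ b) ^ (k + (n - 2)) = 1 := by
      rw [← inv_inv ((φ b) ^ (k + (n - 2))), h, inv_one]
    exact hk2 (hφb ▸ orderOf_dvd_of_pow_eq_one h2)
  have hoc : orderOf c = p := hord_p c hφc_ne
  have hot : orderOf t = p := hord_p t hφt_ne
  -- the list of x-entries
  set L : List G := List.replicate (n - 2) b ++ [c, t] with hLdef
  have hlen : L.length = n := by
    rw [hLdef]
    simp only [List.length_append, List.length_replicate, List.length_cons,
      List.length_nil]
    omega
  have hofn : List.ofFn (fun i : Fin n => L.get (Fin.cast hlen.symm i)) = L := by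
    apply List.ext_get
    · simp [hlen]
    · intro i h1 h2
      simp [List.get_ofFn]
  refine ⟨fun i : Fin n => L.get (Fin.cast hlen.symm i), fun _ => a, ?_, ?_, ?_, ?_⟩
  · intro i
    dsimp only
    obtain ⟨z, hzL, hz⟩ : ∃ z, z ∈ L ∧ L.get (Fin.cast hlen.symm i) = z :=
      ⟨_, L.get_mem _, rfl⟩
    rw [hz]
    rw [hLdef] at hzL
    simp only [List.mem_append, List.mem_replicate, List.mem_cons, List.mem_singleton,
      List.not_mem_nil, or_false] at hzL
    rcases hzL with ⟨-, h⟩ | h | h <;> rw [h]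
    · exact hb
    · exact hoc
    · exact hot
  · intro j
    exact ha
  · rw [hofn, List.ofFn_const, List.prod_replicate, hLdef]
    rw [List.prod_append, List.prod_replicate, List.prod_cons, List.prod_cons, List.prod_nil,
      htdef]
    group
  · -- generation
    set K := Subgroup.closure (Set.range (fun i : Fin n => L.get (Fin.cast hlen.symm i)) ∪
      Set.range (fun _ : Fin m => a)) with hK
    have hmemL : ∀ z ∈ L, z ∈ K := by
      intro z hz
      apply Subgroup.subset_closure
      left
      exact List.mem_ofFn.mp (by rw [hofn]; exact hz)
    have hcK : c ∈ K := hmemL c (by rw [hLdef]; simp)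
    have htK : t ∈ K := hmemL t (by rw [hLdef]; simp)
    -- b^k ∈ K → b ∈ K
    have hbk_of : b ^ k ∈ K → b ∈ K := by
      intro h
      have hku : (k : ZMod p) ≠ 0 := by
        rw [Ne, ZMod.natCast_eq_zero_iff]
        exact hk1
      set e : ℕ := ((k : ZMod p)⁻¹).val with hedef
      have hmod : k * e ≡ 1 [MOD p] := by
        rw [← ZMod.natCast_eq_natCast_iff]
        push_cast
        rw [hedef, ZMod.natCast_val, ZMod.cast_id]
        exact mul_inv_cancel₀ hku
      have hb1 : b ^ 1 = b ^ (k * e) := pow_eq_pow_iff_modEq.mpr (by rw [hb]; exact hmod.symm)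
      have hbe : b = (b ^ k) ^ e := by rw [← pow_mul, ← hb1, pow_one]
      rw [hbe]
      exact K.pow_mem h e
    suffices hab : a ∈ K ∧ b ∈ K by
      rw [eq_top_iff, ← hgen]
      apply (Subgroup.closure_le _).mpr
      intro z hz
      simp only [Set.mem_insert_iff, Set.mem_singleton_iff] at hz
      rcases hz with rfl | rfl
      · exact hab.1
      · exact hab.2
    rcases Nat.eq_zero_or_pos m with hm | hm
    · -- m = 0 forces n ≥ 3 and b occurs among the x's
      have hn3 : 3 ≤ n := by omega
      have hbL : b ∈ L := by
        rw [hLdef]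
        refine List.mem_append_left _ ?_
        rw [List.mem_replicate]
        exact ⟨by omega, rfl⟩
      have hbK : b ∈ K := hmemL b hbL
      have hbkK : b ^ k ∈ K := K.pow_mem hbK k
      have hwK : c * (b ^ k)⁻¹ ∈ K := K.mul_mem hcK (K.inv_mem hbkK)
      set s : ℤ := 1 - (r : ℤ) ^ k with hsdef
      have hw : c * (b ^ k)⁻¹ = a ^ s := by
        have h1 := hconj k
        have h2 : b ^ k * a⁻¹ * (b ^ k)⁻¹ = (a ^ (r ^ k))⁻¹ := by
          rw [← h1]; group
        have hcast : ((r : ℤ)) ^ k = ((r ^ k : ℕ) : ℤ) := by push_cast; ring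
        calc c * (b ^ k)⁻¹ = a * (b ^ k * a⁻¹ * (b ^ k)⁻¹) := by rw [hcdef]; group
          _ = a * (a ^ (r ^ k))⁻¹ := by rw [h2]
          _ = a ^ s := by
              rw [hsdef, zpow_sub, zpow_one, hcast, zpow_natCast]
      have hs0 : ((s : ℤ) : ZMod q) ≠ 0 := by
        rw [hsdef]
        push_cast
        intro hcontra
        have h2 : (r : ZMod q) ^ k = 1 := (sub_eq_zero.mp hcontra).symm
        exact hk1 (hr ▸ orderOf_dvd_of_pow_eq_one h2)
      set f : ℤ := (((s : ZMod q)⁻¹).val : ℤ) with hfdef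
      have hmq : s * f ≡ 1 [ZMOD q] := by
        rw [← ZMod.intCast_eq_intCast_iff]
        push_cast
        rw [hfdef]
        push_cast
        rw [ZMod.natCast_val, ZMod.cast_id]
        exact mul_inv_cancel₀ hs0
      have ha1 : a = (a ^ s) ^ f := by
        rw [← zpow_mul]
        have h1 : a ^ (s * f) = a ^ (1 : ℤ) :=
          zpow_eq_zpow_iff_modEq.mpr (by rw [ha]; exact hmq)
        rw [h1, zpow_one]
      refine ⟨?_, hbK⟩
      rw [ha1]
      exact K.zpow_mem (hw ▸ hwK) f
    · -- m ≥ 1 : a occurs among the y's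
      have haK : a ∈ K := Subgroup.subset_closure (Or.inr ⟨⟨0, hm⟩, rfl⟩)
      have hbkK : b ^ k ∈ K := by
        have e : b ^ k = a⁻¹ * c * a := by rw [hcdef]; group
        rw [e]
        exact K.mul_mem (K.mul_mem (K.inv_mem haK) hcK) haK
      exact ⟨haK, hbk_of hbkK⟩
end

section
/- (Normal form for signature (0; p,p,q,q), Theorem 3(1).) Suppose x_1, x_2, y_1, y_2 ∈ G_{p,q} are such that x_1 and x_2 have order p, y_1 and y_2 have order q, x_1 x_2 y_1 y_2 = 1, and x_1, x_2, y_1, y_2 generate G_{p,q}. Then there exist an automorphism ω of G_{p,q}, an element l ∈ ℤ/qℤ and a nonzero n ∈ ℤ/pℤ such that ω(x_1) = a^l b^n, ω(x_2) = b^{−n}, ω(y_1) = a^{−l−1} and ω(y_2) = a. Consequently, the number of orbits of such quadruples under the entrywise action of Aut(G_{p,q}) is at most q(p − 1). -/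
namespace NFppqq

set_option linter.unusedSectionVars false

/-- `r^{j}` as an element of `ZMod q`, for `j : ZMod p`. -/
def cc (q r : ℕ) {p : ℕ} (j : ZMod p) : ZMod q := (r : ZMod q) ^ j.val

variable {p q r : ℕ} [NeZero p]

theorem cc_zero : cc q r (0 : ZMod p) = 1 := by
  simp [cc, ZMod.val_zero]

theorem cc_add (hr : orderOf (r : ZMod q) = p) (j j' : ZMod p) :
    cc q r (j + j') = cc q r j * cc q r j' := by
  have h := pow_mod_orderOf (r : ZMod q) (j.val + j'.val)
  rw [hr] at h
  rw [cc, cc, cc, ZMod.val_add, h, pow_add]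

theorem cc_mul_cc_neg (hr : orderOf (r : ZMod q) = p) (j : ZMod p) :
    cc q r j * cc q r (-j) = 1 := by
  rw [← cc_add hr, add_neg_cancel, cc_zero]

theorem cc_eq_one (hr : orderOf (r : ZMod q) = p) {j : ZMod p}
    (h : cc q r j = 1) : j = 0 := by
  have h1 := orderOf_dvd_of_pow_eq_one h
  rw [hr] at h1
  have h2 : j.val = 0 := Nat.eq_zero_of_dvd_of_lt h1 (ZMod.val_lt j)
  have h3 : ((j.val : ℕ) : ZMod p) = j := ZMod.natCast_rightInverse j
  rw [h2] at h3
  exact h3.symm.trans (by norm_num)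

/-- The action homomorphism for the semidirect product model. -/
def phiAux (q r : ℕ) {p : ℕ} [NeZero p] (hr : orderOf (r : ZMod q) = p) :
    Multiplicative (ZMod p) →* MulAut (Multiplicative (ZMod q)) :=
  MonoidHom.mk' (fun j => AddEquiv.toMultiplicative
    { toFun := fun x => cc q r j.toAdd * x
      invFun := fun x => cc q r (-j.toAdd) * x
      left_inv := fun x => by
        show cc q r (-j.toAdd) * (cc q r j.toAdd * x) = x
        rw [← mul_assoc, mul_comm (cc q r (-j.toAdd)), cc_mul_cc_neg hr, one_mul]
      right_inv := fun x => by
        show cc q r j.toAdd * (cc q r (-j.toAdd) * x) = x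
        rw [← mul_assoc, cc_mul_cc_neg hr, one_mul]
      map_add' := fun x y => mul_add _ x y })
    (fun j j' => by
      ext x
      show Multiplicative.ofAdd (cc q r (j.toAdd + j'.toAdd) * x.toAdd)
        = Multiplicative.ofAdd (cc q r j.toAdd * (cc q r j'.toAdd * x.toAdd))
      rw [cc_add hr, mul_assoc])

theorem phiAux_apply (hr : orderOf (r : ZMod q) = p) (j : Multiplicative (ZMod p))
    (x : Multiplicative (ZMod q)) :
    (phiAux q r hr j) x = Multiplicative.ofAdd (cc q r j.toAdd * x.toAdd) := rfl

end NFppqq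

open NFppqq SemidirectProduct Multiplicative

/-- Normal form for signature `(0; p,p,q,q)` (Theorem 3(1)): every generating quadruple is
equivalent, under `Aut(G_{p,q})`, to one of at most `q(p-1)` normal forms. -/
theorem normal_form_signature_ppqq
    {G : Type*} [Group G] (p q : ℕ) (hp : p.Prime) (hq : q.Prime)
    (hp2 : Odd p) (hq2 : Odd q) (hpq : p ∣ q - 1) (r : ℕ)
    (hr : orderOf (r : ZMod q) = p) (a b : G)
    (ha : orderOf a = q) (hb : orderOf b = p)
    (hrel : b * a * b⁻¹ = a ^ r)
    (hgen : Subgroup.closure ({a, b} : Set G) = ⊤)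
    (hcard : Nat.card G = p * q) :
    (∀ x₁ x₂ y₁ y₂ : G, orderOf x₁ = p → orderOf x₂ = p →
      orderOf y₁ = q → orderOf y₂ = q →
      x₁ * x₂ * y₁ * y₂ = 1 →
      Subgroup.closure ({x₁, x₂, y₁, y₂} : Set G) = ⊤ →
      ∃ (ω : G ≃* G) (l : ZMod q) (n : ZMod p), n ≠ 0 ∧
        ω x₁ = a ^ l.val * b ^ n.val ∧
        ω x₂ = b ^ (-n).val ∧
        ω y₁ = a ^ (-l - 1).val ∧
        ω y₂ = a) ∧
    (∃ T : Finset (G × G × G × G), T.card ≤ q * (p - 1) ∧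
      ∀ x₁ x₂ y₁ y₂ : G, orderOf x₁ = p → orderOf x₂ = p →
        orderOf y₁ = q → orderOf y₂ = q →
        x₁ * x₂ * y₁ * y₂ = 1 →
        Subgroup.closure ({x₁, x₂, y₁, y₂} : Set G) = ⊤ →
        ∃ ω : G ≃* G, (ω x₁, ω x₂, ω y₁, ω y₂) ∈ T) := by
  classical
  haveI : Fact p.Prime := ⟨hp⟩
  haveI : Fact q.Prime := ⟨hq⟩
  haveI : NeZero p := ⟨hp.pos.ne'⟩
  haveI : NeZero q := ⟨hq.pos.ne'⟩
  haveI : Fact (1 < p) := ⟨hp.one_lt⟩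
  haveI : Fact (1 < q) := ⟨hq.one_lt⟩
  have hpqne : p ≠ q := by
    have hq2' : 2 ≤ q := hq.two_le
    have h1 : 1 ≤ q - 1 := by omega
    have h2 : p ≤ q - 1 := Nat.le_of_dvd h1 hpq
    omega
  have hcop : Nat.Coprime p q := (Nat.coprime_primes hp hq).mpr hpqne
  have hapow : ∀ m n : ℕ, ((m : ZMod q) = (n : ZMod q)) → a ^ m = a ^ n := by
    intro m n h
    rw [pow_eq_pow_iff_modEq, ha]
    exact (ZMod.natCast_eq_natCast_iff _ _ _).mp h
  have hbpow : ∀ m n : ℕ, ((m : ZMod p) = (n : ZMod p)) → b ^ m = b ^ n := by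
    intro m n h
    rw [pow_eq_pow_iff_modEq, hb]
    exact (ZMod.natCast_eq_natCast_iff _ _ _).mp h
  have hvq : ∀ x : ZMod q, ((x.val : ℕ) : ZMod q) = x := fun x => ZMod.natCast_rightInverse x
  have hvp : ∀ x : ZMod p, ((x.val : ℕ) : ZMod p) = x := fun x => ZMod.natCast_rightInverse x
  have hconj : ∀ m n : ℕ, b ^ m * a ^ n * (b ^ m)⁻¹ = a ^ (n * r ^ m) := by
    intro m
    induction m with
    | zero => intro n; simp
    | succ m ih =>
      intro n
      have h1 : b ^ (m + 1) * a ^ n * (b ^ (m + 1))⁻¹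
          = b * (b ^ m * a ^ n * (b ^ m)⁻¹) * b⁻¹ := by
        rw [pow_succ']; group
      rw [h1, ih n, ← conj_pow, hrel, ← pow_mul]
      congr 1
      ring
  -- the two legs of the lift
  let f₁ : Multiplicative (ZMod q) →* G := MonoidHom.mk'
    (fun i => a ^ (Multiplicative.toAdd i).val)
    (by
      intro i i'
      show a ^ (Multiplicative.toAdd i + Multiplicative.toAdd i').val
          = a ^ (Multiplicative.toAdd i).val * a ^ (Multiplicative.toAdd i').val
      rw [← pow_add]
      apply hapow
      rw [hvq, Nat.cast_add, hvq, hvq])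
  let f₂ : Multiplicative (ZMod p) →* G := MonoidHom.mk'
    (fun j => b ^ (Multiplicative.toAdd j).val)
    (by
      intro j j'
      show b ^ (Multiplicative.toAdd j + Multiplicative.toAdd j').val
          = b ^ (Multiplicative.toAdd j).val * b ^ (Multiplicative.toAdd j').val
      rw [← pow_add]
      apply hbpow
      rw [hvp, Nat.cast_add, hvp, hvp])
  have hcompat : ∀ g : Multiplicative (ZMod p),
      f₁.comp (MulEquiv.toMonoidHom (phiAux q r hr g))
        = (MulEquiv.toMonoidHom (MulAut.conj (f₂ g))).comp f₁ := by
    intro j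
    refine MonoidHom.ext fun i => ?_
    show f₁ ((phiAux q r hr j) i) = MulAut.conj (f₂ j) (f₁ i)
    rw [MulAut.conj_apply, phiAux_apply]
    show a ^ ((cc q r (Multiplicative.toAdd j) * Multiplicative.toAdd i).val)
        = b ^ (Multiplicative.toAdd j).val * a ^ (Multiplicative.toAdd i).val
          * (b ^ (Multiplicative.toAdd j).val)⁻¹
    rw [hconj]
    apply hapow
    rw [hvq, cc]
    push_cast
    rw [hvq]
    ring
  let Φ₀ : (Multiplicative (ZMod q) ⋊[phiAux q r hr] Multiplicative (ZMod p)) →* G :=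
    SemidirectProduct.lift f₁ f₂ hcompat
  have hΦ : ∀ g : Multiplicative (ZMod q) ⋊[phiAux q r hr] Multiplicative (ZMod p),
      Φ₀ g = a ^ (Multiplicative.toAdd g.left).val * b ^ (Multiplicative.toAdd g.right).val := by
    intro g
    conv_lhs => rw [← SemidirectProduct.inl_left_mul_inr_right g]
    rw [map_mul, SemidirectProduct.lift_inl, SemidirectProduct.lift_inr]
    rfl
  have hinj : Function.Injective Φ₀ := by
    rw [injective_iff_map_eq_one]
    intro g hg
    rw [hΦ] at hg
    have h1 : a ^ (Multiplicative.toAdd g.left).val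
        = (b ^ (Multiplicative.toAdd g.right).val)⁻¹ := eq_inv_of_mul_eq_one_left hg
    have hdvd1 : orderOf (a ^ (Multiplicative.toAdd g.left).val) ∣ q := by
      have h := orderOf_pow_dvd (x := a) (Multiplicative.toAdd g.left).val
      rw [ha] at h; exact h
    have hdvd2 : orderOf (a ^ (Multiplicative.toAdd g.left).val) ∣ p := by
      have h := orderOf_pow_dvd (x := b) (Multiplicative.toAdd g.right).val
      rw [hb] at h
      rw [h1, orderOf_inv]
      exact h
    have h3 : orderOf (a ^ (Multiplicative.toAdd g.left).val) ∣ 1 :=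
      hcop ▸ Nat.dvd_gcd hdvd2 hdvd1
    have h4 : a ^ (Multiplicative.toAdd g.left).val = 1 :=
      orderOf_eq_one_iff.mp (Nat.dvd_one.mp h3)
    have h5 : b ^ (Multiplicative.toAdd g.right).val = 1 := by
      rw [h4, one_mul] at hg; exact hg
    have h6 : (Multiplicative.toAdd g.left).val = 0 := by
      have := orderOf_dvd_of_pow_eq_one h4
      rw [ha] at this
      exact Nat.eq_zero_of_dvd_of_lt this (ZMod.val_lt _)
    have h7 : (Multiplicative.toAdd g.right).val = 0 := by
      have := orderOf_dvd_of_pow_eq_one h5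
      rw [hb] at this
      exact Nat.eq_zero_of_dvd_of_lt this (ZMod.val_lt _)
    have h8 : g.left = 1 := by
      have h := hvq (Multiplicative.toAdd g.left)
      rw [h6] at h
      have h9 : Multiplicative.toAdd g.left = 0 := by simpa using h.symm
      simpa using congrArg Multiplicative.ofAdd h9
    have h10 : g.right = 1 := by
      have h := hvp (Multiplicative.toAdd g.right)
      rw [h7] at h
      have h9 : Multiplicative.toAdd g.right = 0 := by simpa using h.symm
      simpa using congrArg Multiplicative.ofAdd h9
    exact SemidirectProduct.ext h8 h10
  have hsur : Function.Surjective Φ₀ := by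
    have htop : (⊤ : Subgroup G) ≤ Φ₀.range := by
      rw [← hgen]
      apply (Subgroup.closure_le _).mpr
      intro z hz
      rcases hz with hz | hz
      · refine ⟨SemidirectProduct.inl (Multiplicative.ofAdd (1 : ZMod q)), ?_⟩
        rw [SemidirectProduct.lift_inl]
        show a ^ ((1 : ZMod q)).val = z
        rw [ZMod.val_one, pow_one]; exact hz.symm
      · refine ⟨SemidirectProduct.inr (Multiplicative.ofAdd (1 : ZMod p)), ?_⟩
        rw [SemidirectProduct.lift_inr]
        show b ^ ((1 : ZMod p)).val = z
        rw [ZMod.val_one, pow_one]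
        exact (Set.eq_of_mem_singleton hz).symm
    intro y
    obtain ⟨g, hg⟩ := htop (Subgroup.mem_top y)
    exact ⟨g, hg⟩
  let Φ : (Multiplicative (ZMod q) ⋊[phiAux q r hr] Multiplicative (ZMod p)) ≃* G :=
    MulEquiv.ofBijective Φ₀ ⟨hinj, hsur⟩
  have hΦ' : ∀ g, Φ g = Φ₀ g := fun g => rfl
  have hcardMq : Nat.card (Multiplicative (ZMod q)) = q := by
    rw [Nat.card_congr (Multiplicative.toAdd (α := ZMod q)), Nat.card_zmod]
  have hcardMp : Nat.card (Multiplicative (ZMod p)) = p := by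
    rw [Nat.card_congr (Multiplicative.toAdd (α := ZMod p)), Nat.card_zmod]
  have hright1 : ∀ g : Multiplicative (ZMod q) ⋊[phiAux q r hr] Multiplicative (ZMod p),
      orderOf g = q → g.right = 1 := by
    intro g hg
    have h1 : orderOf (SemidirectProduct.rightHom g) ∣ q := by
      have h := orderOf_map_dvd SemidirectProduct.rightHom g
      rw [hg] at h; exact h
    have h2 : orderOf (SemidirectProduct.rightHom g) ∣ p := by
      have h := orderOf_dvd_natCard (SemidirectProduct.rightHom g)
      rw [hcardMp] at h; exact h
    have h3 : orderOf (SemidirectProduct.rightHom g) ∣ 1 := hcop ▸ Nat.dvd_gcd h2 h1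
    have h4 : SemidirectProduct.rightHom g = 1 := orderOf_eq_one_iff.mp (Nat.dvd_one.mp h3)
    simpa [SemidirectProduct.rightHom_eq_right] using h4
  have hrightp : ∀ g : Multiplicative (ZMod q) ⋊[phiAux q r hr] Multiplicative (ZMod p),
      orderOf g = p → g.right ≠ 1 := by
    intro g hg hcon
    have hgeq : g = SemidirectProduct.inl g.left := by
      conv_lhs => rw [← SemidirectProduct.inl_left_mul_inr_right g]
      rw [hcon, map_one, mul_one]
    have h1 : orderOf g = orderOf g.left := by
      have h := orderOf_injective (SemidirectProduct.inl (φ := phiAux q r hr))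
        SemidirectProduct.inl_injective g.left
      rw [← hgeq] at h
      exact h
    have h2 : orderOf g.left ∣ q := by
      have h := orderOf_dvd_natCard g.left
      rw [hcardMq] at h; exact h
    have h3 : p ∣ q := by rw [← hg, h1]; exact h2
    exact hpqne ((Nat.prime_dvd_prime_iff_eq hp hq).mp h3)
  have hordsymm : ∀ x : G, orderOf (Φ.symm x) = orderOf x := by
    intro x
    have h1 : orderOf (Φ₀ (Φ.symm x)) = orderOf (Φ.symm x) := orderOf_injective Φ₀ hinj _
    have h2 : Φ₀ (Φ.symm x) = x := Φ.apply_symm_apply x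
    rw [h2] at h1
    exact h1.symm
  have hmain : ∀ x₁ x₂ y₁ y₂ : G, orderOf x₁ = p → orderOf x₂ = p →
      orderOf y₁ = q → orderOf y₂ = q →
      x₁ * x₂ * y₁ * y₂ = 1 →
      Subgroup.closure ({x₁, x₂, y₁, y₂} : Set G) = ⊤ →
      ∃ (ω : G ≃* G) (l : ZMod q) (n : ZMod p), n ≠ 0 ∧
        ω x₁ = a ^ l.val * b ^ n.val ∧
        ω x₂ = b ^ (-n).val ∧
        ω y₁ = a ^ (-l - 1).val ∧
        ω y₂ = a := by
    intro x₁ x₂ y₁ y₂ hx₁ hx₂ hy₁ hy₂ hprod _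
    set g₁ := Φ.symm x₁ with hgd₁
    set g₂ := Φ.symm x₂ with hgd₂
    set g₃ := Φ.symm y₁ with hgd₃
    set g₄ := Φ.symm y₂ with hgd₄
    have ho1 : orderOf g₁ = p := by rw [hgd₁, hordsymm, hx₁]
    have ho3 : orderOf g₃ = q := by rw [hgd₃, hordsymm, hy₁]
    have ho4 : orderOf g₄ = q := by rw [hgd₄, hordsymm, hy₂]
    have hn1 : g₁.right ≠ 1 := hrightp _ ho1
    have hg3r : g₃.right = 1 := hright1 _ ho3
    have hg4r : g₄.right = 1 := hright1 _ ho4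
    set n := Multiplicative.toAdd g₁.right with hnd
    have hn : n ≠ 0 := by
      intro h
      apply hn1
      rw [← ofAdd_toAdd g₁.right, ← hnd, h, ofAdd_zero]
    set i₁ := Multiplicative.toAdd g₁.left with hi₁d
    set i₂ := Multiplicative.toAdd g₂.left with hi₂d
    set t := Multiplicative.toAdd g₃.left with htd
    set s := Multiplicative.toAdd g₄.left with hsd
    have hs : s ≠ 0 := by
      intro h
      have hg4 : g₄ = 1 := by
        apply SemidirectProduct.ext
        · show g₄.left = 1
          rw [← ofAdd_toAdd g₄.left, ← hsd, h, ofAdd_zero]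
        · simpa using hg4r
      rw [hg4, orderOf_one] at ho4
      exact hq.one_lt.ne' ho4.symm
    have hprodH : g₁ * g₂ * g₃ * g₄ = 1 := by
      apply Φ.injective
      rw [map_mul, map_mul, map_mul, map_one]
      rw [hgd₁, hgd₂, hgd₃, hgd₄]
      simp only [MulEquiv.apply_symm_apply]
      exact hprod
    have hj2 : g₂.right = g₁.right⁻¹ := by
      have h := congrArg SemidirectProduct.rightHom hprodH
      simp only [map_mul, map_one, SemidirectProduct.rightHom_eq_right,
        hg3r, hg4r, mul_one] at h
      exact eq_inv_of_mul_eq_one_right h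
    have htj2 : Multiplicative.toAdd g₂.right = -n := by
      rw [hj2, toAdd_inv, hnd]
    have hL : i₁ + cc q r n * i₂ + t + s = 0 := by
      have h := congrArg (fun z : Multiplicative (ZMod q) ⋊[phiAux q r hr]
        Multiplicative (ZMod p) => Multiplicative.toAdd z.left) hprodH
      simp only [SemidirectProduct.mul_left, SemidirectProduct.mul_right, phiAux_apply,
        hg3r, hg4r, hj2, mul_inv_cancel, toAdd_mul, toAdd_ofAdd, toAdd_one, cc_zero,
        SemidirectProduct.one_left, one_mul, mul_one] at h
      linear_combination h
    -- the automorphism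
    set k : ZMod q := s⁻¹ with hkd
    have hk : k * s = 1 := inv_mul_cancel₀ hs
    have hk0 : k ≠ 0 := inv_ne_zero hs
    set d := cc q r n with hdd
    set d' := cc q r (-n) with hdd'
    have hd : d * d' = 1 := cc_mul_cc_neg hr n
    have he : d' - 1 ≠ 0 := by
      intro h
      have h1 : d' = 1 := by linear_combination h
      exact hn (neg_eq_zero.mp (cc_eq_one hr h1))
    have hee : (d' - 1)⁻¹ * (d' - 1) = 1 := inv_mul_cancel₀ he
    set m' := -(k * i₂) * (d' - 1)⁻¹ with hm'd
    let af : ZMod q → ZMod q →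
        (Multiplicative (ZMod q) ⋊[phiAux q r hr] Multiplicative (ZMod p)) →
        (Multiplicative (ZMod q) ⋊[phiAux q r hr] Multiplicative (ZMod p)) :=
      fun κ μ g => ⟨Multiplicative.ofAdd (κ * Multiplicative.toAdd g.left
        + μ * (cc q r (Multiplicative.toAdd g.right) - 1)), g.right⟩
    have haf_left : ∀ κ μ g, (af κ μ g).left = Multiplicative.ofAdd
        (κ * Multiplicative.toAdd g.left
          + μ * (cc q r (Multiplicative.toAdd g.right) - 1)) := fun _ _ _ => rfl
    have haf_right : ∀ κ μ g, (af κ μ g).right = g.right := fun _ _ _ => rfl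
    let α : (Multiplicative (ZMod q) ⋊[phiAux q r hr] Multiplicative (ZMod p)) ≃*
        (Multiplicative (ZMod q) ⋊[phiAux q r hr] Multiplicative (ZMod p)) :=
    { toFun := af k m'
      invFun := af k⁻¹ (-(k⁻¹ * m'))
      left_inv := by
        intro g
        apply SemidirectProduct.ext
        · rw [haf_left, haf_right, haf_left, toAdd_ofAdd]
          conv_rhs => rw [← ofAdd_toAdd g.left]
          congr 1
          field_simp <;> ring
        · rfl
      right_inv := by
        intro g
        apply SemidirectProduct.ext
        · rw [haf_left, haf_right, haf_left, toAdd_ofAdd]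
          conv_rhs => rw [← ofAdd_toAdd g.left]
          congr 1
          field_simp <;> ring
        · rfl
      map_mul' := by
        intro g h
        apply SemidirectProduct.ext
        · show (af k m' (g * h)).left = (af k m' g * af k m' h).left
          simp only [haf_left, haf_right, SemidirectProduct.mul_left,
            SemidirectProduct.mul_right, phiAux_apply, toAdd_mul, toAdd_ofAdd, cc_add hr]
          rw [← ofAdd_add]
          congr 1
          ring
        · show (af k m' (g * h)).right = (af k m' g * af k m' h).right
          simp only [haf_right, SemidirectProduct.mul_right] }
    have hα : ∀ g, α g = af k m' g := fun _ => rfl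
    set L : ZMod q := -(k * t) - 1 with hLdef
    refine ⟨(Φ.symm.trans α).trans Φ, L, n, hn, ?_, ?_, ?_, ?_⟩
    · show Φ (α (Φ.symm x₁)) = a ^ L.val * b ^ n.val
      rw [← hgd₁, hα, hΦ']
      have h1 : af k m' g₁ = ⟨Multiplicative.ofAdd L, g₁.right⟩ := by
        apply SemidirectProduct.ext
        · rw [haf_left]
          show Multiplicative.ofAdd (k * i₁ + m' * (d - 1)) = Multiplicative.ofAdd L
          congr 1
          rw [hLdef, hm'd]
          linear_combination k * hL - hk - (k * i₂ * (d' - 1)⁻¹) * hd + (k * i₂ * d) * hee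
        · rfl
      rw [h1, hΦ]
      simp only [toAdd_ofAdd]
      rfl
    · show Φ (α (Φ.symm x₂)) = b ^ (-n).val
      rw [← hgd₂, hα, hΦ']
      have h1 : af k m' g₂ = ⟨1, g₂.right⟩ := by
        apply SemidirectProduct.ext
        · rw [haf_left, htj2]
          show Multiplicative.ofAdd (k * i₂ + m' * (d' - 1)) = 1
          rw [← ofAdd_zero]
          congr 1
          rw [hm'd]
          linear_combination (-(k * i₂)) * hee
        · rfl
      rw [h1, hΦ]
      simp only [toAdd_one, ZMod.val_zero, pow_zero, one_mul, htj2]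
    · show Φ (α (Φ.symm y₁)) = a ^ (-L - 1).val
      rw [← hgd₃, hα, hΦ']
      have h1 : af k m' g₃ = ⟨Multiplicative.ofAdd (-L - 1), 1⟩ := by
        apply SemidirectProduct.ext
        · rw [haf_left, hg3r]
          show Multiplicative.ofAdd (k * t + m' * (cc q r (Multiplicative.toAdd
            (1 : Multiplicative (ZMod p))) - 1)) = Multiplicative.ofAdd (-L - 1)
          rw [toAdd_one, cc_zero]
          congr 1
          rw [hLdef]
          ring
        · rw [haf_right, hg3r]
      rw [h1, hΦ]
      simp only [toAdd_ofAdd, toAdd_one, ZMod.val_zero, pow_zero, mul_one]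
    · show Φ (α (Φ.symm y₂)) = a
      rw [← hgd₄, hα, hΦ']
      have h1 : af k m' g₄ = ⟨Multiplicative.ofAdd (1 : ZMod q), 1⟩ := by
        apply SemidirectProduct.ext
        · rw [haf_left, hg4r]
          show Multiplicative.ofAdd (k * s + m' * (cc q r (Multiplicative.toAdd
            (1 : Multiplicative (ZMod p))) - 1)) = Multiplicative.ofAdd (1 : ZMod q)
          rw [toAdd_one, cc_zero]
          congr 1
          linear_combination hk
        · rw [haf_right, hg4r]
      rw [h1, hΦ]
      simp only [toAdd_ofAdd, toAdd_one, ZMod.val_zero, pow_zero, mul_one,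
        ZMod.val_one, pow_one]
  refine ⟨hmain, ?_⟩
  refine ⟨(Finset.univ ×ˢ (Finset.univ.erase (0 : ZMod p))).image
    (fun z : ZMod q × ZMod p =>
      (a ^ z.1.val * b ^ z.2.val, b ^ (-z.2).val, a ^ (-z.1 - 1).val, a)), ?_, ?_⟩
  · refine le_trans Finset.card_image_le ?_
    rw [Finset.card_product, Finset.card_erase_of_mem (Finset.mem_univ _),
      Finset.card_univ, Finset.card_univ, ZMod.card, ZMod.card]
  · intro x₁ x₂ y₁ y₂ h1 h2 h3 h4 h5 h6
    obtain ⟨ω, l, n, hn, e1, e2, e3, e4⟩ := hmain x₁ x₂ y₁ y₂ h1 h2 h3 h4 h5 h6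
    refine ⟨ω, ?_⟩
    rw [e1, e2, e3, e4]
    have hmem : (l, n) ∈ (Finset.univ ×ˢ (Finset.univ.erase (0 : ZMod p))) :=
      Finset.mem_product.mpr ⟨Finset.mem_univ _, Finset.mem_erase.mpr ⟨hn, Finset.mem_univ _⟩⟩
    exact Finset.mem_image_of_mem _ hmem
end

section
/- (Classification of order-2pq overgroups, from the proof of Theorem 3(2).) Let G' be a group of order 2pq containing a subgroup isomorphic to G_{p,q}. Then G' is isomorphic either to the direct product G_{p,q} × C_2, or to the group ⟨a, c : a^q = c^{2p} = 1, c a c⁻¹ = a^{−r}⟩, i.e. the semidirect product (ℤ/qℤ) ⋊ (ℤ/2pℤ) in which the generator c acts on ℤ/qℤ by multiplication by −r. -/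
open Subgroup

namespace OvergroupAux

variable {G' : Type*} [Group G'] {q : ℕ}

lemma pow_val_inj {a' : G'} (hq : 1 < q) (ha : orderOf a' = q)
    {k l : ZMod q} (h : a' ^ k.val = a' ^ l.val) : k = l := by
  haveI : NeZero q := ⟨by omega⟩
  rw [pow_eq_pow_iff_modEq, ha] at h
  have h2 : ((k.val : ℕ) : ZMod q) = ((l.val : ℕ) : ZMod q) :=
    (ZMod.natCast_eq_natCast_iff _ _ _).mpr h
  rwa [ZMod.natCast_rightInverse k, ZMod.natCast_rightInverse l] at h2

lemma pow_val_natCast {a' : G'} (hq : 1 < q) (ha : orderOf a' = q) (n : ℕ) :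
    a' ^ ((n : ZMod q)).val = a' ^ n := by
  haveI : NeZero q := ⟨by omega⟩
  rw [pow_eq_pow_iff_modEq, ha, ZMod.val_natCast]
  exact (Nat.mod_modEq n q)

lemma zpow_val_intCast {a' : G'} (hq : 1 < q) (ha : orderOf a' = q) (m : ℤ) :
    a' ^ ((((m : ZMod q)).val : ℤ)) = a' ^ m := by
  haveI : NeZero q := ⟨by omega⟩
  rw [zpow_eq_zpow_iff_modEq, ha]
  have : ((((m : ZMod q)).val : ℤ) : ZMod q) = (m : ZMod q) := by
    push_cast
    rw [ZMod.natCast_rightInverse]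
  exact (ZMod.intCast_eq_intCast_iff _ _ _).mp this

open scoped Classical in
variable (q) in
noncomputable def cexp (a' : G') (g : G') : ZMod q :=
  if h : ∃ k : ZMod q, g * a' * g⁻¹ = a' ^ k.val then h.choose else 0

lemma cexp_exists {a' : G'} (hnorm : (zpowers a').Normal) (hq : 1 < q) (ha : orderOf a' = q)
    (g : G') : ∃ k : ZMod q, g * a' * g⁻¹ = a' ^ (k.val) := by
  obtain ⟨m, hm⟩ := Subgroup.mem_zpowers_iff.mp (hnorm.conj_mem a' (mem_zpowers a') g)
  exact ⟨(m : ZMod q), by rw [← hm, ← zpow_natCast, zpow_val_intCast hq ha]⟩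

lemma cexp_spec {a' : G'} (hnorm : (zpowers a').Normal) (hq : 1 < q) (ha : orderOf a' = q)
    (g : G') : g * a' * g⁻¹ = a' ^ (cexp q a' g).val := by
  classical
  have h := cexp_exists hnorm hq ha g
  rw [cexp, dif_pos h]
  exact h.choose_spec

lemma cexp_eq_iff {a' : G'} (hnorm : (zpowers a').Normal) (hq : 1 < q) (ha : orderOf a' = q)
    {g : G'} {k : ZMod q} : cexp q a' g = k ↔ g * a' * g⁻¹ = a' ^ k.val := by
  constructor
  · rintro rfl; exact cexp_spec hnorm hq ha g
  · intro h
    exact pow_val_inj hq ha ((cexp_spec hnorm hq ha g).symm.trans h)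

lemma cexp_conj_zpow {a' : G'} (hnorm : (zpowers a').Normal) (hq : 1 < q) (ha : orderOf a' = q)
    (g : G') (z : ℤ) : g * a' ^ z * g⁻¹ = a' ^ (((cexp q a' g).val : ℤ) * z) := by
  have h := cexp_spec hnorm hq ha g
  calc g * a' ^ z * g⁻¹ = (g * a' * g⁻¹) ^ z := conj_zpow.symm
    _ = (a' ^ ((cexp q a' g).val)) ^ z := by rw [h]
    _ = a' ^ (((cexp q a' g).val : ℤ) * z) := by rw [← zpow_natCast, ← zpow_mul]

lemma cexp_mul {a' : G'} (hnorm : (zpowers a').Normal) (hq : 1 < q) (ha : orderOf a' = q)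
    (g h : G') : cexp q a' (g * h) = cexp q a' g * cexp q a' h := by
  haveI : NeZero q := ⟨by omega⟩
  rw [cexp_eq_iff hnorm hq ha]
  have h1 : g * h * a' * (g * h)⁻¹ = g * (h * a' * h⁻¹) * g⁻¹ := by group
  rw [h1, cexp_spec hnorm hq ha h, ← zpow_natCast a', cexp_conj_zpow hnorm hq ha]
  rw [← Int.natCast_mul, zpow_natCast, ← pow_val_natCast hq ha ((cexp q a' g).val * (cexp q a' h).val)]
  congr 1
  congr 1
  push_cast
  rw [ZMod.natCast_rightInverse, ZMod.natCast_rightInverse]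

lemma cexp_one {a' : G'} (hnorm : (zpowers a').Normal) (hq : 1 < q) (ha : orderOf a' = q) :
    cexp q a' 1 = 1 := by
  rw [cexp_eq_iff hnorm hq ha, ← Nat.cast_one (R := ZMod q), pow_val_natCast hq ha, pow_one]
  group

variable (q) in
noncomputable def cexpHom (a' : G') (hnorm : (zpowers a').Normal) (hq : 1 < q)
    (ha : orderOf a' = q) : G' →* ZMod q where
  toFun := cexp q a'
  map_one' := cexp_one hnorm hq ha
  map_mul' := cexp_mul hnorm hq ha

end OvergroupAux

namespace OvergroupAux

lemma orderOf_mem_dvd_card {M : Type*} [Group M] (K : Subgroup M) {x : M} (hx : x ∈ K) :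
    orderOf x ∣ Nat.card K := by
  have h1 := orderOf_injective K.subtype Subtype.coe_injective ⟨x, hx⟩
  have h2 := orderOf_dvd_natCard (⟨x, hx⟩ : K)
  simpa [h1] using h2

lemma eq_of_sq_helper {M : Type*} [Group M] {v s : M} (hv : v ^ (2:ℤ) = 1) (m : ℤ)
    (hs : s = v ^ m) (hs1 : s ≠ 1) : s = v := by
  rcases Int.even_or_odd m with ⟨k, hk⟩ | ⟨k, hk⟩
  · exact absurd (by rw [hs, hk, (by ring : k + k = 2 * k), zpow_mul, hv, one_zpow]) hs1
  · rw [hs, hk, zpow_add, zpow_mul, hv, one_zpow, one_mul, zpow_one]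

end OvergroupAux

open OvergroupAux

/-- Classification of order-`2pq` overgroups (proof of Theorem 3(2)): a group of order
`2pq` containing a subgroup isomorphic to `G_{p,q}` is isomorphic either to
`G_{p,q} × C₂` or to `⟨a, c : a^q = c^{2p} = 1, c a c⁻¹ = a^{-r}⟩ ≅ C_q ⋊ C_{2p}`. -/
theorem overgroup_of_order_two_pq_classification
    {G : Type*} [Group G] (p q : ℕ) (hp : p.Prime) (hq : q.Prime)
    (hp2 : Odd p) (hq2 : Odd q) (hpq : p ∣ q - 1) (r : ℕ)
    (hr : orderOf (r : ZMod q) = p) (a b : G)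
    (ha : orderOf a = q) (hb : orderOf b = p)
    (hrel : b * a * b⁻¹ = a ^ r)
    (hgen : Subgroup.closure ({a, b} : Set G) = ⊤)
    (hcard : Nat.card G = p * q)
    {G' : Type*} [Group G'] (hcard' : Nat.card G' = 2 * p * q)
    (H : Subgroup G') (hH : Nonempty (H ≃* G)) :
    Nonempty (G' ≃* G × Multiplicative (ZMod 2)) ∨
    (∃ a' c' : G', orderOf a' = q ∧ orderOf c' = 2 * p ∧
      c' * a' * c'⁻¹ = (a' ^ r)⁻¹ ∧
      Subgroup.closure ({a', c'} : Set G') = ⊤) := by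
  classical
  obtain ⟨e⟩ := hH
  haveI : Fact q.Prime := ⟨hq⟩
  haveI : Fact p.Prime := ⟨hp⟩
  haveI : Fact (Nat.Prime 2) := ⟨Nat.prime_two⟩
  have hp1 : 1 < p := hp.one_lt
  have hq1 : 1 < q := hq.one_lt
  have hp3 : 3 ≤ p := by
    rcases hp2 with ⟨k, hk⟩; omega
  haveI hFin' : Finite G' := Nat.finite_of_card_ne_zero (by rw [hcard']; positivity)
  haveI hFinG : Finite G := Nat.finite_of_card_ne_zero (by rw [hcard]; positivity)
  -- 2p < q
  have h2pq : 2 * p ∣ q - 1 := by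
    have h2 : 2 ∣ q - 1 := by rcases hq2 with ⟨k, hk⟩; omega
    exact Nat.Coprime.mul_dvd_of_dvd_of_dvd (Nat.coprime_two_left.mpr hp2) h2 hpq
  have hq2p : 2 * p < q := by
    have := Nat.le_of_dvd (by omega) h2pq
    omega
  have hqnd : ¬ q ∣ 2 * p := fun h => by have := Nat.le_of_dvd (by omega) h; omega
  haveI : Fact (2 < q) := ⟨by omega⟩
  -- the elements a' b'
  set a' : G' := ((e.symm a : H) : G') with ha'def
  set b' : G' := ((e.symm b : H) : G') with hb'def
  have horder : ∀ x : G, orderOf (((e.symm x : H) : G')) = orderOf x := by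
    intro x
    have h1 : orderOf (((e.symm x : H) : G')) = orderOf (e.symm x) :=
      orderOf_injective H.subtype Subtype.coe_injective (e.symm x)
    have h2 : orderOf (e.symm x) = orderOf x :=
      orderOf_injective e.symm.toMonoidHom e.symm.injective x
    rw [h1, h2]
  have ha' : orderOf a' = q := by rw [ha'def, horder, ha]
  have hb' : orderOf b' = p := by rw [hb'def, horder, hb]
  have hrel' : b' * a' * b'⁻¹ = a' ^ r := by
    have h1 : e.symm b * e.symm a * (e.symm b)⁻¹ = (e.symm a) ^ r := by
      rw [← map_inv, ← map_mul, ← map_mul, ← map_pow, hrel]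
    have h2 := congrArg (fun z : H => (z : G')) h1
    simpa using h2
  -- the subgroup generated by a' is normal
  have hQcard : Nat.card (zpowers a') = q := by rw [Nat.card_zpowers, ha']
  obtain ⟨P, hle⟩ := (IsPGroup.of_card (n := 1) (by rw [hQcard, pow_one]) :
    IsPGroup q (zpowers a')).exists_le_sylow
  have hqP : q ∣ Nat.card (P : Subgroup G') :=
    dvd_of_eq hQcard.symm |>.trans (Subgroup.card_dvd_of_le hle)
  have hPG : Nat.card (P : Subgroup G') ∣ Nat.card G' := Subgroup.card_subgroup_dvd_card _
  have hcardP : Nat.card (P : Subgroup G') = q := by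
    obtain ⟨k, hk⟩ := IsPGroup.exists_card_eq P.2
    rcases k with _ | _ | k
    · rw [hk, pow_zero] at hqP
      exact absurd (Nat.dvd_one.mp hqP) (by omega)
    · rw [hk, pow_one]
    · exfalso
      have h1 : q * q ∣ Nat.card (P : Subgroup G') := by
        rw [hk, ← sq]
        exact pow_dvd_pow q (by omega)
      have h2 : q * q ∣ 2 * p * q := by
        rw [← hcard']
        exact h1.trans hPG
      exact hqnd ((Nat.mul_dvd_mul_iff_right (show 0 < q by omega)).mp h2)
  have hQP : zpowers a' = (P : Subgroup G') :=
    Subgroup.eq_of_le_of_card_ge hle (by rw [hcardP, hQcard])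
  -- Sylow q-subgroup is unique hence normal
  have hindex : (P : Subgroup G').index = 2 * p := by
    have h1 := Subgroup.card_mul_index (P : Subgroup G')
    rw [hcardP, hcard'] at h1
    have : q * (P : Subgroup G').index = q * (2 * p) := by rw [h1]; ring
    exact Nat.eq_of_mul_eq_mul_left (by omega) this
  have hn1 : Nat.card (Sylow q G') = 1 := by
    have hmod := card_sylow_modEq_one q G'
    have hdvd := Sylow.card_dvd_index P
    rw [hindex] at hdvd
    have hlt : Nat.card (Sylow q G') ≤ 2 * p := Nat.le_of_dvd (by omega) hdvd
    rw [Nat.ModEq, Nat.mod_eq_of_lt (by omega), Nat.mod_eq_of_lt (by omega)] at hmod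
    exact hmod
  haveI hsing : Subsingleton (Sylow q G') := (Nat.card_eq_one_iff_unique.mp hn1).1
  have hnorm : (zpowers a').Normal := by
    rw [hQP]
    apply Subgroup.normalizer_eq_top_iff.mp
    rw [eq_top_iff']
    intro g
    exact Sylow.smul_eq_iff_mem_normalizer.mp (Subsingleton.elim _ _)
  -- the conjugation homomorphism
  set f : G' →* ZMod q := cexpHom q a' hnorm hq1 ha' with hfdef
  set φ : G' →* (ZMod q)ˣ := f.toHomUnits with hφdef
  have hfval : ∀ g : G', ((φ g : (ZMod q)ˣ) : ZMod q) = cexp q a' g := fun g => rfl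
  have hfb : cexp q a' b' = (r : ZMod q) := by
    rw [cexp_eq_iff hnorm hq1 ha', pow_val_natCast hq1 ha']
    exact hrel'
  have hob : orderOf (φ b') = p := by
    rw [← orderOf_units, hfval, hfb, hr]
  have hkermem : ∀ g : G', g ∈ φ.ker ↔ g * a' * g⁻¹ = a' := by
    intro g
    rw [MonoidHom.mem_ker]
    constructor
    · intro h
      have h0 : cexp q a' g = 1 := by
        have := congrArg (Units.val) h
        rwa [hfval, Units.val_one] at this
      have := (cexp_eq_iff hnorm hq1 ha').mp h0
      rwa [← Nat.cast_one (R := ZMod q), pow_val_natCast hq1 ha', pow_one] at this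
    · intro h
      apply Units.ext
      rw [hfval, Units.val_one]
      rw [cexp_eq_iff hnorm hq1 ha', ← Nat.cast_one (R := ZMod q),
        pow_val_natCast hq1 ha', pow_one]
      exact h
  have haker : a' ∈ φ.ker := by
    rw [hkermem]
    group
  have hzker : zpowers a' ≤ φ.ker := Subgroup.zpowers_le.mpr haker
  -- counting
  have hsplit : Nat.card φ.ker * Nat.card φ.range = 2 * p * q := by
    have h1 := Subgroup.card_mul_index φ.ker
    rw [Subgroup.index_eq_card,
      Nat.card_congr (QuotientGroup.quotientKerEquivRange φ).toEquiv, hcard'] at h1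
    exact h1
  have hpt : p ∣ Nat.card φ.range := by
    have h1 : orderOf (φ b') ∣ Nat.card φ.range :=
      orderOf_mem_dvd_card _ ⟨b', rfl⟩
    rwa [hob] at h1
  have ht1 : Nat.card φ.range ∣ q - 1 := by
    have h1 := Subgroup.card_subgroup_dvd_card φ.range
    have h2 : Nat.card (ZMod q)ˣ = q - 1 := by
      rw [Nat.card_eq_fintype_card, ZMod.card_units_eq_totient, Nat.totient_prime hq]
    rwa [h2] at h1
  have hqt : ¬ q ∣ Nat.card φ.range := by
    intro h
    have := Nat.le_of_dvd (by omega) (h.trans ht1)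
    omega
  have ht2p : Nat.card φ.range ∣ 2 * p := by
    refine (Nat.Coprime.symm ((Nat.Prime.coprime_iff_not_dvd hq).mpr hqt)).dvd_of_dvd_mul_right
      (m := 2 * p) ?_
    exact ⟨Nat.card φ.ker, by rw [← hsplit]; ring⟩
  obtain ⟨s, hs⟩ := hpt
  have hs2 : s ∣ 2 := by
    have h1 : p * s ∣ p * 2 := by rw [← hs, mul_comm p 2]; exact ht2p
    exact (Nat.mul_dvd_mul_iff_left (by omega : 0 < p)).mp h1
  rcases (Nat.prime_two.eq_one_or_self_of_dvd s hs2) with hs1 | hs1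
  · -- t = p : direct product case
    left
    have htp : Nat.card φ.range = p := by rw [hs, hs1, mul_one]
    have hkq : Nat.card φ.ker = 2 * q := by
      have h1 := hsplit
      rw [htp] at h1
      have h2 : Nat.card φ.ker * p = 2 * q * p := by rw [h1]; ring
      exact Nat.eq_of_mul_eq_mul_right (by omega) h2
    obtain ⟨x, hx⟩ := exists_prime_orderOf_dvd_card' 2
      (show 2 ∣ Nat.card φ.ker by rw [hkq]; exact ⟨q, rfl⟩)
    set τ : G' := (x : G') with hτdef
    have hoτ : orderOf τ = 2 := by
      rw [← hx]
      exact orderOf_injective φ.ker.subtype Subtype.coe_injective x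
    have hτker : τ ∈ φ.ker := x.2
    have hcommτa : Commute a' τ := by
      have h1 := (hkermem τ).mp hτker
      have h2 : τ * a' = a' * τ := by
        conv_rhs => rw [← h1]
        group
      exact h2.symm
    set w : G' := a' * τ with hwdef
    have how : orderOf w = q * 2 := by
      rw [hwdef, hcommτa.orderOf_mul_eq_mul_orderOf_of_coprime
        (by rw [ha', hoτ]; exact (Nat.coprime_two_left.mpr hq2).symm), ha', hoτ]
    have hwker : w ∈ φ.ker := mul_mem haker hτker
    have hkerw : zpowers w = φ.ker := by
      apply Subgroup.eq_of_le_of_card_ge (Subgroup.zpowers_le.mpr hwker)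
      rw [Nat.card_zpowers, how, hkq]
      omega
    set v : G' := w ^ (q : ℤ) with hvdef
    have hv2 : v ^ (2 : ℤ) = 1 := by
      rw [hvdef, ← zpow_mul]
      have h1 := pow_orderOf_eq_one w
      rw [how] at h1
      rw [show ((q : ℤ) * 2) = ((q * 2 : ℕ) : ℤ) by push_cast; ring, zpow_natCast, h1]
    have huniq : ∀ s' : G', orderOf s' = 2 → s' = v := by
      intro s' hs'
      have hmap : orderOf (φ s') ∣ 2 := hs' ▸ orderOf_map_dvd φ s'
      have hmap2 : orderOf (φ s') ∣ p := by
        have h0 := orderOf_mem_dvd_card φ.range ⟨s', rfl⟩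
        rwa [htp] at h0
      have ho1 : orderOf (φ s') = 1 := by
        rcases (Nat.dvd_prime Nat.prime_two).mp hmap with h | h
        · exact h
        · exfalso
          rw [h] at hmap2
          rcases hp2 with ⟨k, hk⟩
          omega
      have hker' : s' ∈ φ.ker := by
        rw [MonoidHom.mem_ker, ← orderOf_eq_one_iff]
        exact ho1
      rw [← hkerw] at hker'
      obtain ⟨m, hm⟩ := Subgroup.mem_zpowers_iff.mp hker'
      have hs'1 : s' ^ (2:ℤ) = 1 := by
        have h0 := pow_orderOf_eq_one s'
        rw [hs'] at h0
        rw [show (2:ℤ) = ((2:ℕ):ℤ) by norm_num, zpow_natCast, h0]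
      have hdvd : ((q * 2 : ℕ) : ℤ) ∣ m * 2 := by
        rw [← how, orderOf_dvd_iff_zpow_eq_one, zpow_mul, hm, hs'1]
      have hqm : (q : ℤ) ∣ m := by
        have h2 : (q : ℤ) * 2 ∣ m * 2 := by
          rw [show ((q:ℤ) * 2) = ((q * 2 : ℕ) : ℤ) by push_cast; ring]
          exact hdvd
        exact (mul_dvd_mul_iff_right (by norm_num : (2:ℤ) ≠ 0)).mp h2
      obtain ⟨m₀, hm₀⟩ := hqm
      refine eq_of_sq_helper hv2 m₀ ?_ ?_
      · rw [hvdef, ← zpow_mul, ← hm₀, hm]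
      · intro h0
        rw [h0] at hs'
        simp at hs'
    have hcen : ∀ g : G', g * τ = τ * g := by
      intro g
      have h2 : orderOf ((MulAut.conj g) τ) = orderOf τ :=
        orderOf_injective (MulAut.conj g).toMonoidHom (MulAut.conj g).injective τ
      rw [MulAut.conj_apply, hoτ] at h2
      have h3 := (huniq _ h2).trans (huniq τ hoτ).symm
      calc g * τ = g * τ * g⁻¹ * g := by group
        _ = τ * g := by rw [h3]
    -- build the isomorphism
    have hHcard : Nat.card H = p * q := by rw [Nat.card_congr e.toEquiv, hcard]
    have hτH : τ ∉ H := by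
      intro hmem
      have h2 := orderOf_mem_dvd_card H hmem
      rw [hoτ, hHcard] at h2
      have hodd : Odd (p * q) := hp2.mul hq2
      rcases hodd with ⟨k, hk⟩
      omega
    set f₁ : G →* G' := H.subtype.comp e.symm.toMonoidHom with hf₁
    have hf₁x : ∀ x' : G, f₁ x' = ((e.symm x' : H) : G') := fun _ => rfl
    haveI : NeZero (2:ℕ) := ⟨by norm_num⟩
    set f₂ : Multiplicative (ZMod 2) →* G' :=
      { toFun := fun x' => τ ^ (Multiplicative.toAdd x').val
        map_one' := by simp
        map_mul' := by
          intro x' y'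
          show τ ^ (Multiplicative.toAdd x' + Multiplicative.toAdd y').val =
            τ ^ (Multiplicative.toAdd x').val * τ ^ (Multiplicative.toAdd y').val
          rw [← pow_add, pow_eq_pow_iff_modEq, hoτ, ZMod.val_add]
          exact Nat.mod_modEq _ 2 } with hf₂
    have hcomm : ∀ (m : G) (n : Multiplicative (ZMod 2)), Commute (f₁ m) (f₂ n) := by
      intro m n
      have h1 : Commute (f₁ m) τ := hcen (f₁ m)
      exact h1.pow_right _
    set F := f₁.noncommCoprod f₂ hcomm with hF
    have hinj : Function.Injective F := by
      rw [injective_iff_map_eq_one]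
      rintro ⟨g, x'⟩ hgx
      have hgx' : f₁ g * τ ^ (Multiplicative.toAdd x').val = 1 := hgx
      have hval : (Multiplicative.toAdd x').val = 0 ∨ (Multiplicative.toAdd x').val = 1 := by
        have := ZMod.val_lt (Multiplicative.toAdd x')
        omega
      rcases hval with h | h
      · rw [h, pow_zero, mul_one] at hgx'
        have hg : g = 1 := by
          have h2 : ((e.symm g : H) : G') = ((1 : H) : G') := by
            rw [← hf₁x]
            simpa using hgx'
          have h2' : e.symm g = (1 : H) := Subtype.coe_injective h2
          have h3 := congrArg e h2'
          rwa [MulEquiv.apply_symm_apply, map_one] at h3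
        have hx0 : Multiplicative.toAdd x' = 0 := (ZMod.val_eq_zero _).mp h
        have hx : x' = 1 := Multiplicative.toAdd.injective (by rw [hx0]; rfl)
        rw [Prod.mk_eq_one]
        exact ⟨hg, hx⟩
      · exfalso
        rw [h, pow_one] at hgx'
        have h2 : τ = (f₁ g)⁻¹ := eq_inv_of_mul_eq_one_right
          (by exact hgx')
        apply hτH
        rw [h2, hf₁x]
        exact inv_mem (SetLike.coe_mem (e.symm g))
    have hcards : Nat.card (G × Multiplicative (ZMod 2)) = Nat.card G' := by
      rw [Nat.card_prod, hcard, hcard', Nat.card_congr (Multiplicative.toAdd (α := ZMod 2)),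
        Nat.card_zmod]
      ring
    exact ⟨(MulEquiv.ofBijective F
      ((Nat.bijective_iff_injective_and_card F).mpr ⟨hinj, hcards⟩)).symm⟩
  · -- t = 2p : semidirect product case
    right
    have ht2 : Nat.card φ.range = 2 * p := by rw [hs, hs1]; ring
    have hkq : Nat.card φ.ker = q := by
      have h1 := hsplit
      rw [ht2] at h1
      have h2 : Nat.card φ.ker * (2 * p) = q * (2 * p) := by rw [h1]; ring
      exact Nat.eq_of_mul_eq_mul_right (by omega) h2
    have hkerz : φ.ker = zpowers a' := by
      symm
      apply Subgroup.eq_of_le_of_card_ge hzker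
      rw [hQcard, hkq]
    have hneg1 : orderOf (-1 : (ZMod q)ˣ) = 2 := by
      apply orderOf_eq_prime
      · exact neg_one_sq
      · intro h
        have h2 := congrArg Units.val h
        rw [Units.val_neg, Units.val_one] at h2
        exact ZMod.neg_one_ne_one h2
    have hu : orderOf ((-1) * φ b') = 2 * p := by
      rw [(Commute.all _ _).orderOf_mul_eq_mul_orderOf_of_coprime
        (by rw [hneg1, hob]; exact Nat.coprime_two_left.mpr hp2), hneg1, hob]
    have hmem : (-1) * φ b' ∈ φ.range := by
      set S : Finset (ZMod q)ˣ := Finset.filter (fun x => x ^ (2 * p) = 1) Finset.univ with hS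
      have hcardS : S.card ≤ 2 * p := by
        have h0 := IsCyclic.card_pow_eq_one_le (α := (ZMod q)ˣ) (n := 2 * p) (by omega)
        convert h0 using 2
      set T : Finset (ZMod q)ˣ := (φ.range : Set (ZMod q)ˣ).toFinset with hT
      have hTcard : T.card = 2 * p := by
        rw [hT, Set.toFinset_card, ← Nat.card_eq_fintype_card]
        exact ht2
      have hsub : T ⊆ S := by
        intro x hx
        rw [hT, Set.mem_toFinset] at hx
        rw [hS, Finset.mem_filter]
        refine ⟨Finset.mem_univ _, ?_⟩
        have h0 := orderOf_mem_dvd_card φ.range hx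
        rw [ht2] at h0
        exact orderOf_dvd_iff_pow_eq_one.mp h0
      have hTS : T = S := Finset.eq_of_subset_of_card_le hsub (by rw [hTcard]; exact hcardS)
      have hin : (-1) * φ b' ∈ S := by
        rw [hS, Finset.mem_filter]
        exact ⟨Finset.mem_univ _, by rw [← hu]; exact pow_orderOf_eq_one _⟩
      rw [← hTS, hT, Set.mem_toFinset] at hin
      exact hin
    obtain ⟨c, hc⟩ := hmem
    have hcval : cexp q a' c = -(r : ZMod q) := by
      have h1 := congrArg Units.val hc
      rw [hfval, Units.val_mul, Units.val_neg, Units.val_one, hfval, hfb] at h1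
      rw [h1]
      ring
    have hφc : orderOf (φ c) = 2 * p := by rw [hc]; exact hu
    have hdvd1 : 2 * p ∣ orderOf c := hφc ▸ orderOf_map_dvd φ c
    have hrneg : (r : ZMod q) ≠ -1 := by
      intro h0
      rw [h0] at hr
      have h6 : orderOf (-1 : ZMod q) = 2 :=
        orderOf_eq_prime neg_one_sq (ZMod.neg_one_ne_one)
      omega
    have hc2p : c ^ (2 * p) = 1 := by
      have h1 : c ^ (2 * p) ∈ φ.ker := by
        rw [MonoidHom.mem_ker, map_pow, ← hφc, pow_orderOf_eq_one]
      rw [hkerz] at h1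
      obtain ⟨m, hm⟩ := Subgroup.mem_zpowers_iff.mp h1
      have h2 : c * (c ^ (2 * p)) * c⁻¹ = c ^ (2 * p) := by group
      rw [← hm, cexp_conj_zpow hnorm hq1 ha' c m] at h2
      have h3 : (((cexp q a' c).val : ℤ) * m) ≡ m [ZMOD (q : ℕ)] := by
        have := zpow_eq_zpow_iff_modEq.mp h2
        rwa [ha'] at this
      have h4 : (cexp q a' c) * (m : ZMod q) = (m : ZMod q) := by
        have h5 := (ZMod.intCast_eq_intCast_iff _ _ _).mpr h3
        push_cast at h5
        rwa [ZMod.natCast_rightInverse] at h5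
      have h5 : (m : ZMod q) = 0 := by
        by_contra hne
        have h6 : cexp q a' c = 1 :=
          mul_right_cancel₀ hne (by rw [h4, one_mul])
        rw [hcval] at h6
        apply hrneg
        linear_combination -h6
      have h6 : (q : ℤ) ∣ m := by
        exact_mod_cast (ZMod.intCast_zmod_eq_zero_iff_dvd m q).mp h5
      obtain ⟨m₀, hm₀⟩ := h6
      rw [← hm, hm₀, zpow_mul, show ((q : ℤ)) = ((q : ℕ) : ℤ) by rfl, zpow_natCast,
        ← ha', pow_orderOf_eq_one, one_zpow]
    have hoc : orderOf c = 2 * p := Nat.dvd_antisymm (orderOf_dvd_of_pow_eq_one hc2p) hdvd1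
    have hrelc : c * a' * c⁻¹ = (a' ^ r)⁻¹ := by
      have h1 := cexp_spec hnorm hq1 ha' c
      rw [hcval] at h1
      rw [h1, show ((a' ^ r)⁻¹) = a' ^ (-(r : ℤ)) by rw [zpow_neg, zpow_natCast],
        ← zpow_natCast, zpow_eq_zpow_iff_modEq, ha']
      apply (ZMod.intCast_eq_intCast_iff _ _ _).mp
      push_cast
      rw [ZMod.natCast_rightInverse]
    have hclos : Subgroup.closure ({a', c} : Set G') = ⊤ := by
      set K := Subgroup.closure ({a', c} : Set G') with hK
      have haK : a' ∈ K := Subgroup.subset_closure (by simp)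
      have hcK : c ∈ K := Subgroup.subset_closure (by simp)
      have hqK : q ∣ Nat.card K := by
        have h0 := orderOf_mem_dvd_card K haK
        rwa [ha'] at h0
      have hpK : 2 * p ∣ Nat.card K := by
        have h0 := orderOf_mem_dvd_card K hcK
        rwa [hoc] at h0
      have hco : Nat.Coprime q (2 * p) := (Nat.Prime.coprime_iff_not_dvd hq).mpr hqnd
      have hlcm : q * (2 * p) ∣ Nat.card K := hco.mul_dvd_of_dvd_of_dvd hqK hpK
      have hKG : Nat.card K ∣ Nat.card G' := Subgroup.card_subgroup_dvd_card K
      have hcardK : Nat.card K = Nat.card G' := by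
        refine Nat.dvd_antisymm hKG ?_
        rw [hcard', show 2 * p * q = q * (2 * p) by ring]
        exact hlcm
      exact Subgroup.eq_top_of_card_eq K hcardK
    exact ⟨a', c, ha', hoc, hrelc, hclos⟩
end

section
/- (Key lemma in the proof of Theorem 3(2).) Let G' be a group of order 2pq containing a subgroup isomorphic to G_{p,q}. Then for any two involutions t_1, t_2 ∈ G' (elements of order 2), the product t_1 t_2 does not have order p. (This rules out extending a G_{p,q}-action of signature (0; p,p,q,q) to a group of order 2pq acting with signature (0; 2,2,p,q).) -/
/-- Any two automorphisms of a cyclic group commute. -/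
lemma mulAut_comm_of_isCyclic' {K : Type*} [Group K] [IsCyclic K] (φ ψ : MulAut K) :
    φ * ψ = ψ * φ := by
  obtain ⟨g, hg⟩ := IsCyclic.exists_generator (α := K)
  obtain ⟨m, hm⟩ := hg (ψ g)
  obtain ⟨n, hn⟩ := hg (φ g)
  have hm' : g ^ m = ψ g := hm
  have hn' : g ^ n = φ g := hn
  ext x
  obtain ⟨k, hk⟩ := hg x
  subst hk
  show φ (ψ (g ^ k)) = ψ (φ (g ^ k))
  have l1 : φ (ψ (g ^ k)) = g ^ (n * (m * k)) := by
    rw [map_zpow, ← hm', ← zpow_mul, map_zpow, ← hn', ← zpow_mul]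
  have l2 : ψ (φ (g ^ k)) = g ^ (m * (n * k)) := by
    rw [map_zpow, ← hn', ← zpow_mul, map_zpow, ← hm', ← zpow_mul]
  rw [l1, l2, show n * (m * k) = m * (n * k) by ring]

/-- Key lemma in the proof of Theorem 3(2): in a group of order `2pq` containing a copy of
`G_{p,q}`, the product of two involutions never has order `p`. -/
theorem product_of_involutions_order_ne_p
    {G : Type*} [Group G] (p q : ℕ) (hp : p.Prime) (hq : q.Prime)
    (hp2 : Odd p) (hq2 : Odd q) (hpq : p ∣ q - 1) (r : ℕ)
    (hr : orderOf (r : ZMod q) = p) (a b : G)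
    (ha : orderOf a = q) (hb : orderOf b = p)
    (hrel : b * a * b⁻¹ = a ^ r)
    (hgen : Subgroup.closure ({a, b} : Set G) = ⊤)
    (hcard : Nat.card G = p * q)
    {G' : Type*} [Group G'] (hcard' : Nat.card G' = 2 * p * q)
    (H : Subgroup G') (hH : Nonempty (H ≃* G))
    (t₁ t₂ : G') (ht₁ : orderOf t₁ = 2) (ht₂ : orderOf t₂ = 2) :
    orderOf (t₁ * t₂) ≠ p := by
  intro hx
  obtain ⟨e⟩ := hH
  have hp1 : 1 < p := hp.one_lt
  have hq1 : 1 < q := hq.one_lt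
  -- q > 2p
  have hq2p : 2 * p < q := by
    obtain ⟨k, hk⟩ := hpq
    have hqk : q = p * k + 1 := by omega
    have hek : Even k := by
      have hev : Even (p * k) := by
        obtain ⟨t, ht⟩ := hq2
        exact ⟨t, by omega⟩
      rcases Nat.even_mul.mp hev with h | h
      · exact absurd h (Nat.not_even_iff_odd.mpr hp2)
      · exact h
    have hk0 : k ≠ 0 := by rintro rfl; omega
    have hk2 : 2 ≤ k := by
      obtain ⟨j, hj⟩ := hek; omega
    have : p * 2 ≤ p * k := Nat.mul_le_mul_left p hk2
    omega
  haveI : Finite G' := Nat.finite_of_card_ne_zero (by rw [hcard']; positivity)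
  haveI : Finite G := Nat.finite_of_card_ne_zero (by rw [hcard]; positivity)
  haveI : Fact q.Prime := ⟨hq⟩
  -- card and index of H
  have hcardH : Nat.card H = p * q := by rw [Nat.card_congr e.toEquiv, hcard]
  have hidx : H.index = 2 := by
    have h1 := H.card_mul_index
    rw [hcardH, hcard'] at h1
    have hpq0 : 0 < p * q := by positivity
    nlinarith [h1]
  -- elements a', b' in H
  set a' : H := e.symm a with ha'def
  set b' : H := e.symm b with hb'def
  have hea : e a' = a := e.apply_symm_apply a
  have heb : e b' = b := e.apply_symm_apply b
  have ha'o : orderOf a' = q := by rw [← ha, ← hea, e.orderOf_eq]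
  have hb'o : orderOf b' = p := by rw [← hb, ← heb, e.orderOf_eq]
  have ha'c : orderOf ((a' : G')) = q :=
    (orderOf_injective H.subtype Subtype.coe_injective a').trans ha'o
  have hrelH : b' * a' * b'⁻¹ = a' ^ r := by
    apply e.injective
    rw [map_mul, map_mul, map_inv, map_pow, hea, heb, hrel]
  -- the subgroup generated by a' is a normal Sylow q-subgroup of G'
  set A : Subgroup G' := Subgroup.zpowers ((a' : G')) with hAdef
  have hcardA : Nat.card A = q := by rw [Nat.card_zpowers, ha'c]
  have hfact : Nat.card A = q ^ (Nat.card G').factorization q := by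
    have hnd : ¬ q ∣ 2 * p := fun h => by
      have := Nat.le_of_dvd (by positivity) h; omega
    have : (Nat.card G').factorization q = 1 := by
      rw [hcard', Nat.factorization_mul (by positivity) hq.pos.ne', Finsupp.add_apply,
        Nat.factorization_eq_zero_of_not_dvd hnd, Nat.Prime.factorization_self hq]
    rw [this, pow_one, hcardA]
  let S : Sylow q G' := Sylow.ofCard A hfact
  have hScoe : (S : Subgroup G') = A := Sylow.coe_ofCard A hfact
  have hnums : Nat.card (Sylow q G') = 1 := by
    have h1 : Nat.card (Sylow q G') % q = 1 % q := card_sylow_modEq_one q G'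
    have h2 : Nat.card (Sylow q G') ∣ (S : Subgroup G').index := S.card_dvd_index
    have hSidx : (S : Subgroup G').index = 2 * p := by
      have h3 := (S : Subgroup G').card_mul_index
      rw [hScoe] at h3 ⊢
      rw [hcardA, hcard'] at h3
      exact Nat.eq_of_mul_eq_mul_left hq.pos (by rw [h3]; ring)
    rw [hSidx] at h2
    have hle : Nat.card (Sylow q G') ≤ 2 * p := Nat.le_of_dvd (by positivity) h2
    have hlt : Nat.card (Sylow q G') < q := lt_of_le_of_lt hle hq2p
    rwa [Nat.mod_eq_of_lt hlt, Nat.mod_eq_of_lt hq1] at h1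
  have hAnorm : A.Normal := by
    have h4 : (Subgroup.normalizer (S : Set G')).index = 1 := by
      rw [← S.card_eq_index_normalizer, hnums]
    rw [Subgroup.index_eq_one] at h4
    rw [← hScoe]
    exact Subgroup.normalizer_eq_top_iff.mp h4
  haveI := hAnorm
  haveI : IsCyclic A := isCyclic_of_prime_card hcardA
  -- t₁, t₂ ∉ H, so t₁ * t₂ ∈ H
  have hoddpq : Odd (p * q) := hp2.mul hq2
  have htnot : ∀ t : G', orderOf t = 2 → t ∉ H := by
    intro t hto htH
    have := H.orderOf_dvd_natCard htH
    rw [hto, hcardH] at this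
    exact (Nat.not_even_iff_odd.mpr hoddpq) ((even_iff_two_dvd).mpr this)
  have hxH : t₁ * t₂ ∈ H :=
    (Subgroup.mul_mem_iff_of_index_two hidx).mpr
      (by simp [htnot t₁ ht₁, htnot t₂ ht₂])
  -- t₁ conjugates x := t₁ * t₂ to its inverse
  have ht1sq : t₁ * t₁ = 1 := by rw [← pow_two]; rw [← ht₁]; exact pow_orderOf_eq_one t₁
  have ht2sq : t₂ * t₂ = 1 := by rw [← pow_two]; rw [← ht₂]; exact pow_orderOf_eq_one t₂
  have ht1inv : t₁⁻¹ = t₁ := inv_eq_of_mul_eq_one_left ht1sq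
  have ht2inv : t₂⁻¹ = t₂ := inv_eq_of_mul_eq_one_left ht2sq
  have hconj : t₁ * (t₁ * t₂) * t₁⁻¹ = (t₁ * t₂)⁻¹ := by
    rw [mul_inv_rev, ht1inv, ht2inv, ← mul_assoc, ht1sq, one_mul]
  -- conjugation by x acts trivially on A
  set α : G' →* MulAut A := MulAut.conjNormal with hαdef
  have hαx : α (t₁ * t₂) = 1 := by
    have h5 : α t₁ * α (t₁ * t₂) * (α t₁)⁻¹ = (α (t₁ * t₂))⁻¹ := by
      rw [← map_mul, ← map_inv, ← map_mul, hconj, map_inv]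
    rw [mulAut_comm_of_isCyclic' (α t₁) (α (t₁ * t₂)), mul_assoc, mul_inv_cancel,
      mul_one] at h5
    have hsq : α (t₁ * t₂) ^ 2 = 1 := by
      rw [pow_two]
      nth_rewrite 1 [h5]
      rw [inv_mul_cancel]
    have hd2 : orderOf (α (t₁ * t₂)) ∣ 2 := orderOf_dvd_of_pow_eq_one hsq
    have hdp : orderOf (α (t₁ * t₂)) ∣ p := hx ▸ orderOf_map_dvd α (t₁ * t₂)
    have hcop : Nat.Coprime 2 p := by
      rw [Nat.coprime_primes Nat.prime_two hp]
      have := Nat.odd_iff.mp hp2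
      omega
    have : orderOf (α (t₁ * t₂)) ∣ 1 := by
      have := Nat.dvd_gcd hd2 hdp
      rwa [Nat.Coprime.gcd_eq_one hcop] at this
    rw [Nat.dvd_one] at this
    exact orderOf_eq_one_iff.mp this
  -- hence x commutes with a'
  have hcomm' : (t₁ * t₂) * (a' : G') = (a' : G') * (t₁ * t₂) := by
    have h6 := MulAut.conjNormal_apply (t₁ * t₂) ⟨(a' : G'), Subgroup.mem_zpowers _⟩
    rw [show MulAut.conjNormal (t₁ * t₂) = α (t₁ * t₂) from rfl, hαx] at h6
    simp only [MulAut.one_apply] at h6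
    calc (t₁ * t₂) * (a' : G') = ((t₁ * t₂) * (a' : G') * (t₁ * t₂)⁻¹) * (t₁ * t₂) := by group
    _ = (a' : G') * (t₁ * t₂) := by rw [← h6]
  -- transfer to G : the element y := e ⟨t₁ t₂⟩ has order p and commutes with a
  set x' : H := ⟨t₁ * t₂, hxH⟩ with hx'def
  have hx'o : orderOf x' = p := by
    rw [← hx]
    exact (orderOf_injective H.subtype Subtype.coe_injective x').symm
  have hx'comm : x' * a' = a' * x' := Subtype.ext hcomm'
  set y : G := e x' with hydef
  have hyo : orderOf y = p := by rw [hydef, e.orderOf_eq, hx'o]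
  have hycomm : y * a = a * y := by
    rw [hydef, ← hea, ← map_mul, ← map_mul, hx'comm]
  -- the centralizer of a in G is all of G
  set C : Subgroup G := Subgroup.centralizer {a} with hCdef
  have haC : a ∈ C := Subgroup.mem_centralizer_iff.mpr (by rintro h rfl; rfl)
  have hyC : y ∈ C := Subgroup.mem_centralizer_iff.mpr (by
    rintro h rfl
    exact hycomm.symm)
  have hpC : p ∣ Nat.card C := hyo ▸ C.orderOf_dvd_natCard hyC
  have hqC : q ∣ Nat.card C := ha ▸ C.orderOf_dvd_natCard haC
  have hpne : p ≠ q := by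
    rintro rfl
    have := Nat.le_of_dvd (by omega) hpq
    omega
  have hpqC : p * q ∣ Nat.card C :=
    (Nat.Coprime.mul_dvd_of_dvd_of_dvd ((Nat.coprime_primes hp hq).mpr hpne)) hpC hqC
  have hCcard : Nat.card C = p * q := by
    refine Nat.dvd_antisymm ?_ hpqC
    rw [← hcard]
    exact C.card_subgroup_dvd_card
  have hCtop : C = ⊤ := Subgroup.eq_top_of_card_eq C (by rw [hCcard, hcard])
  -- so a is central, contradicting b * a * b⁻¹ = a ^ r with r ≢ 1 mod q
  have hbC : b ∈ C := hCtop ▸ Subgroup.mem_top b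
  have hba : a * b = b * a := Subgroup.mem_centralizer_iff.mp hbC a rfl
  have har : a ^ r = a ^ 1 := by
    rw [pow_one, ← hrel, ← hba, mul_assoc, mul_inv_cancel, mul_one]
  have hmod : r ≡ 1 [MOD q] := by
    have := pow_eq_pow_iff_modEq.mp har
    rwa [ha] at this
  have : (r : ZMod q) = 1 := by
    have := (ZMod.natCast_eq_natCast_iff r 1 q).mpr hmod
    simpa using this
  rw [this, orderOf_one] at hr
  omega
end

section
/- (Normal form for signature (0; p,p,p,p), Theorem 4(1).) Let ~ be the smallest equivalence relation on the set of quadruples of elements of G_{p,q} such that (x_1, x_2, x_3, x_4) ~ (ω(x_1), ω(x_2), ω(x_3), ω(x_4)) for every automorphism ω of G_{p,q}, and (x_1, …, x_i, x_{i+1}, …, x_4) ~ (x_1, …, x_{i+1}, x_{i+1}⁻¹ x_i x_{i+1}, …, x_4) for each braid move at position i ∈ {1, 2, 3}. Then every quadruple (x_1, x_2, x_3, x_4) of elements of order p in G_{p,q} with x_1 x_2 x_3 x_4 = 1 that generates G_{p,q} is ~-equivalent to a quadruple of the form (b^{n_1}, a b^{n_2}, a^{l_3} b^{n_3}, (b^{n_1}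 · a b^{n_2} · a^{l_3} b^{n_3})⁻¹) where n_1, n_2, n_3 are nonzero elements of ℤ/pℤ with n_1 + n_2 + n_3 ≠ 0 and l_3 ∈ ℤ/qℤ. Consequently the number of ~-classes of such quadruples is at most q(p − 1)(p² − 3p + 3). -/
section PowVal
variable {M : Type*} [Monoid M] {x : M} {n : ℕ}

lemma pv_natCast [NeZero n] (hx : orderOf x = n) (k : ℕ) : x ^ ((k : ZMod n)).val = x ^ k := by
  rw [ZMod.val_natCast, ← hx, pow_mod_orderOf]

lemma pv_add [NeZero n] (hx : orderOf x = n) (u v : ZMod n) :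
    x ^ (u + v).val = x ^ u.val * x ^ v.val := by
  have h : ((u.val + v.val : ℕ) : ZMod n) = u + v := by
    push_cast [ZMod.natCast_val, ZMod.cast_id]
    ring
  rw [← h, pv_natCast hx, pow_add]

lemma pv_zero : x ^ ((0 : ZMod n)).val = 1 := by
  rw [ZMod.val_zero, pow_zero]

lemma pv_cast_eq [NeZero n] (hx : orderOf x = n) {u : ZMod n} {k : ℕ}
    (h : (k : ZMod n) = u) : x ^ u.val = x ^ k := by
  rw [← h, pv_natCast hx]

end PowVal

section PowValG
variable {G : Type*} [Group G] {x : G} {n : ℕ}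

lemma pv_neg [NeZero n] (hx : orderOf x = n) (u : ZMod n) :
    x ^ (-u).val = (x ^ u.val)⁻¹ := by
  rw [eq_inv_iff_mul_eq_one, ← pv_add hx, neg_add_cancel, pv_zero]

lemma pv_inj [NeZero n] (hx : orderOf x = n) {u v : ZMod n}
    (h : x ^ u.val = x ^ v.val) : u = v := by
  have h2 := (pow_eq_pow_iff_modEq (x := x)).mp h
  rw [hx] at h2
  exact ZMod.val_injective n
    ((Nat.mod_eq_of_lt u.val_lt) ▸ (Nat.mod_eq_of_lt v.val_lt) ▸ h2)

end PowValG

/-- One step of the equivalence on quadruples generated by entrywise automorphisms of `G`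
and the three braid moves. -/
def BraidAutStep {G : Type*} [Group G] (v w : G × G × G × G) : Prop :=
  (∃ ω : G ≃* G, w = (ω v.1, ω v.2.1, ω v.2.2.1, ω v.2.2.2)) ∨
  w = (v.2.1, (v.2.1)⁻¹ * v.1 * v.2.1, v.2.2.1, v.2.2.2) ∨
  w = (v.1, v.2.2.1, (v.2.2.1)⁻¹ * v.2.1 * v.2.2.1, v.2.2.2) ∨
  w = (v.1, v.2.1, v.2.2.2, (v.2.2.2)⁻¹ * v.2.2.1 * v.2.2.2)

section Eqv
variable {G : Type*} [Group G]

lemma eqv_aut (ω : G ≃* G) (x₁ x₂ x₃ x₄ : G) :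
    Relation.EqvGen BraidAutStep (x₁, x₂, x₃, x₄) (ω x₁, ω x₂, ω x₃, ω x₄) :=
  Relation.EqvGen.rel _ _ (Or.inl ⟨ω, rfl⟩)

lemma eqv_braid2 (x₁ x₂ x₃ x₄ : G) :
    Relation.EqvGen BraidAutStep (x₁, x₂, x₃, x₄) (x₂, x₂⁻¹ * x₁ * x₂, x₃, x₄) :=
  Relation.EqvGen.rel _ _ (Or.inr (Or.inl rfl))

lemma eqv_braid3 (x₁ x₂ x₃ x₄ : G) :
    Relation.EqvGen BraidAutStep (x₁, x₂, x₃, x₄) (x₁, x₃, x₃⁻¹ * x₂ * x₃, x₄) :=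
  Relation.EqvGen.rel _ _ (Or.inr (Or.inr (Or.inl rfl)))

lemma eqv_braid4 (x₁ x₂ x₃ x₄ : G) :
    Relation.EqvGen BraidAutStep (x₁, x₂, x₃, x₄) (x₁, x₂, x₄, x₄⁻¹ * x₃ * x₄) :=
  Relation.EqvGen.rel _ _ (Or.inr (Or.inr (Or.inr rfl)))

end Eqv

/-- Bundled hypotheses for the nonabelian group of order `p*q`. -/
structure PQSetup {G : Type*} [Group G] (p q r : ℕ) (a b : G) : Prop where
  hp : p.Prime
  hq : q.Prime
  hpq : p ∣ q - 1
  hr : orderOf ((r : ZMod q)) = p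
  ha : orderOf a = q
  hb : orderOf b = p
  hrel : b * a * b⁻¹ = a ^ r

namespace PQSetup

variable {G : Type*} [Group G] {p q r : ℕ} {a b : G} (S : PQSetup p q r a b)
include S

lemma qpos : 0 < q := S.hq.pos
lemma ppos : 0 < p := S.hp.pos

lemma p_lt_q : p < q :=
  lt_of_le_of_lt (Nat.le_of_dvd (Nat.sub_pos_of_lt S.hq.one_lt) S.hpq) (Nat.sub_lt S.hq.pos one_pos)

lemma p_ne_q : p ≠ q := ne_of_lt S.p_lt_q

lemma nzq : NeZero q := ⟨S.qpos.ne'⟩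
lemma nzp : NeZero p := ⟨S.ppos.ne'⟩

lemma conj_a_pow (k : ℕ) : b * a ^ k * b⁻¹ = a ^ (r * k) := by
  induction k with
  | zero => simp
  | succ m ih =>
    have h : b * a ^ (m + 1) * b⁻¹ = (b * a ^ m * b⁻¹) * (b * a * b⁻¹) := by
      rw [pow_succ]; group
    rw [h, ih, S.hrel, ← pow_add, Nat.mul_succ]

lemma b_pow_mul_a_pow (m k : ℕ) : b ^ m * a ^ k = a ^ (r ^ m * k) * b ^ m := by
  induction m with
  | zero => simp
  | succ m ih =>
    calc b ^ (m + 1) * a ^ k = b * (a ^ (r ^ m * k) * b ^ m) := by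
          rw [pow_succ', mul_assoc, ih]
      _ = (b * a ^ (r ^ m * k) * b⁻¹) * (b * b ^ m) := by group
      _ = a ^ (r * (r ^ m * k)) * b ^ (m + 1) := by rw [S.conj_a_pow, pow_succ']
      _ = a ^ (r ^ (m + 1) * k) * b ^ (m + 1) := by ring_nf

lemma comm_rule (m : ℕ) (l : ZMod q) :
    b ^ m * a ^ l.val = a ^ ((r : ZMod q) ^ m * l).val * b ^ m := by
  haveI := S.nzq
  have hc : ((r ^ m * l.val : ℕ) : ZMod q) = (r : ZMod q) ^ m * l := by
    push_cast [ZMod.natCast_val, ZMod.cast_id]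
    ring
  rw [S.b_pow_mul_a_pow, ← hc, pv_natCast S.ha]

lemma mul_rule (l l' : ZMod q) (n n' : ZMod p) :
    (a ^ l.val * b ^ n.val) * (a ^ l'.val * b ^ n'.val)
      = a ^ (l + (r : ZMod q) ^ n.val * l').val * b ^ (n + n').val := by
  haveI := S.nzq; haveI := S.nzp
  calc (a ^ l.val * b ^ n.val) * (a ^ l'.val * b ^ n'.val)
      = a ^ l.val * (b ^ n.val * a ^ l'.val) * b ^ n'.val := by group
    _ = a ^ l.val * (a ^ ((r : ZMod q) ^ n.val * l').val * b ^ n.val) * b ^ n'.val := by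
        rw [S.comm_rule]
    _ = (a ^ l.val * a ^ ((r : ZMod q) ^ n.val * l').val) * (b ^ n.val * b ^ n'.val) := by group
    _ = _ := by rw [← pv_add S.ha, ← pv_add S.hb]

lemma inv_rule (l : ZMod q) (n : ZMod p) :
    (a ^ l.val * b ^ n.val)⁻¹
      = a ^ (-((r : ZMod q) ^ (-n).val * l)).val * b ^ (-n).val := by
  haveI := S.nzq; haveI := S.nzp
  rw [mul_inv_rev, ← pv_neg S.ha, ← pv_neg S.hb, S.comm_rule, neg_mul_eq_mul_neg]

lemma repr_surj (hgen : Subgroup.closure ({a, b} : Set G) = ⊤) (g : G) :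
    ∃ (l : ZMod q) (n : ZMod p), g = a ^ l.val * b ^ n.val := by
  haveI := S.nzq; haveI := S.nzp
  haveI : Fact (1 < q) := ⟨S.hq.one_lt⟩
  haveI : Fact (1 < p) := ⟨S.hp.one_lt⟩
  let H : Subgroup G :=
    { carrier := {g | ∃ (l : ZMod q) (n : ZMod p), g = a ^ l.val * b ^ n.val}
      one_mem' := ⟨0, 0, by rw [pv_zero, pv_zero, one_mul]⟩
      mul_mem' := by
        rintro x y ⟨l, n, rfl⟩ ⟨l', n', rfl⟩
        exact ⟨_, _, S.mul_rule l l' n n'⟩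
      inv_mem' := by
        rintro x ⟨l, n, rfl⟩
        exact ⟨_, _, S.inv_rule l n⟩ }
  have hab : Subgroup.closure ({a, b} : Set G) ≤ H := by
    rw [Subgroup.closure_le]
    rintro x (rfl | rfl)
    · exact ⟨1, 0, by rw [pv_zero, ZMod.val_one, pow_one, mul_one]⟩
    · exact ⟨0, 1, by rw [pv_zero, ZMod.val_one, pow_one, one_mul]⟩
  have : g ∈ H := by rw [hgen] at hab; exact hab trivial
  exact this

lemma repr_uniq {l l' : ZMod q} {n n' : ZMod p}
    (h : a ^ l.val * b ^ n.val = a ^ l'.val * b ^ n'.val) : l = l' ∧ n = n' := by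
  haveI := S.nzq; haveI := S.nzp
  have haq : a ^ q = 1 := S.ha ▸ pow_orderOf_eq_one a
  have hbp : b ^ p = 1 := S.hb ▸ pow_orderOf_eq_one b
  have key : a ^ (-l' + l).val = b ^ (n' + -n).val := by
    rw [pv_add S.ha, pv_add S.hb, pv_neg S.ha, pv_neg S.hb, eq_comm, mul_inv_eq_iff_eq_mul,
      mul_assoc, h, inv_mul_cancel_left]
  have h1 : (a ^ (-l' + l).val) ^ q = 1 := by
    rw [← pow_mul, mul_comm, pow_mul, haq, one_pow]
  have h2 : (a ^ (-l' + l).val) ^ p = 1 := by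
    rw [key, ← pow_mul, mul_comm, pow_mul, hbp, one_pow]
  have hco : Nat.Coprime q p := (Nat.coprime_primes S.hq S.hp).mpr S.p_ne_q.symm
  have hdvd : orderOf (a ^ (-l' + l).val) ∣ 1 := by
    rw [← Nat.Coprime.gcd_eq_one hco]
    exact Nat.dvd_gcd (orderOf_dvd_of_pow_eq_one h1) (orderOf_dvd_of_pow_eq_one h2)
  have hg1 : a ^ (-l' + l).val = 1 := orderOf_eq_one_iff.mp (Nat.eq_one_of_dvd_one hdvd)
  have e1 : a ^ (-l' + l).val = a ^ ((0 : ZMod q)).val := by rw [hg1, pv_zero]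
  have e2 : b ^ (n' + -n).val = b ^ ((0 : ZMod p)).val := by rw [← key, hg1, pv_zero]
  have f1 := pv_inj S.ha e1
  have f2 := pv_inj S.hb e2
  constructor
  · have : l - l' = 0 := by linear_combination f1
    exact sub_eq_zero.mp this
  · have : n' - n = 0 := by linear_combination f2
    exact (sub_eq_zero.mp this).symm

lemma pow_formula (l : ZMod q) (n : ZMod p) (k : ℕ) :
    (a ^ l.val * b ^ n.val) ^ k
      = a ^ (l * (∑ j ∈ Finset.range k, ((r : ZMod q) ^ n.val) ^ j)).val
          * b ^ ((k : ZMod p) * n).val := by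
  haveI := S.nzq; haveI := S.nzp
  induction k with
  | zero => simp [pv_zero]
  | succ k ih =>
    have hc : ((r : ZMod q)) ^ (((k : ZMod p)) * n).val = ((r : ZMod q) ^ n.val) ^ k := by
      have : ((k * n.val : ℕ) : ZMod p) = (k : ZMod p) * n := by
        push_cast [ZMod.natCast_val, ZMod.cast_id]; ring
      rw [← this, pv_natCast S.hr, mul_comm, pow_mul]
    have e1 : l * ∑ j ∈ Finset.range k, ((r : ZMod q) ^ n.val) ^ j
          + (r : ZMod q) ^ (((k : ZMod p)) * n).val * l
        = l * ∑ j ∈ Finset.range (k + 1), ((r : ZMod q) ^ n.val) ^ j := by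
      rw [hc, Finset.sum_range_succ]; ring
    have e2 : ((k : ZMod p)) * n + n = ((k + 1 : ℕ) : ZMod p) * n := by push_cast; ring
    rw [pow_succ, ih, S.mul_rule, e1, e2]

lemma order_eq_p (l : ZMod q) {n : ZMod p} (hn : n ≠ 0) :
    orderOf (a ^ l.val * b ^ n.val) = p := by
  haveI := S.nzq; haveI := S.nzp
  haveI : Fact p.Prime := ⟨S.hp⟩
  haveI : Fact q.Prime := ⟨S.hq⟩
  have hrp : (r : ZMod q) ^ p = 1 := S.hr ▸ pow_orderOf_eq_one (r : ZMod q)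
  set c : ZMod q := (r : ZMod q) ^ n.val with hcdef
  have hc1 : c ≠ 1 := by
    intro h
    have hd := orderOf_dvd_of_pow_eq_one h
    rw [S.hr] at hd
    have hv : n.val = 0 := Nat.eq_zero_of_dvd_of_lt hd n.val_lt
    exact hn ((ZMod.val_eq_zero n).mp hv)
  have hcp : c ^ p = 1 := by
    rw [hcdef, ← pow_mul, mul_comm, pow_mul, hrp, one_pow]
  have hsum : (∑ j ∈ Finset.range p, c ^ j) = 0 := by
    have := geom_sum_mul c p
    rw [hcp, sub_self] at this
    rcases mul_eq_zero.mp this with h | h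
    · exact h
    · exact absurd (sub_eq_zero.mp h) hc1
  have hgp : (a ^ l.val * b ^ n.val) ^ p = 1 := by
    rw [S.pow_formula, hsum, mul_zero, ZMod.natCast_self, zero_mul, pv_zero, pv_zero, one_mul]
  have hne : a ^ l.val * b ^ n.val ≠ 1 := by
    intro h
    have h' : a ^ l.val * b ^ n.val = a ^ ((0:ZMod q)).val * b ^ ((0:ZMod p)).val := by
      rw [pv_zero, pv_zero, one_mul, h]
    exact hn (S.repr_uniq h').2
  exact orderOf_eq_prime hgp hne

lemma n_ne_zero {l : ZMod q} {n : ZMod p}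
    (h : orderOf (a ^ l.val * b ^ n.val) = p) : n ≠ 0 := by
  haveI := S.nzq; haveI := S.nzp
  intro hn
  subst hn
  rw [pv_zero, mul_one] at h
  have haq : a ^ q = 1 := S.ha ▸ pow_orderOf_eq_one a
  have h1 : (a ^ l.val) ^ q = 1 := by
    rw [← pow_mul, mul_comm, pow_mul, haq, one_pow]
  have h2 : p ∣ q := h ▸ orderOf_dvd_of_pow_eq_one h1
  exact S.p_ne_q ((Nat.prime_dvd_prime_iff_eq S.hp S.hq).mp h2)

open Classical in
lemma exists_phi (hgen : Subgroup.closure ({a, b} : Set G) = ⊤)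
    {s : ZMod q} (hs : s ≠ 0) :
    ∃ ω : G ≃* G, ∀ (l : ZMod q) (n : ZMod p),
      ω (a ^ l.val * b ^ n.val) = a ^ (s * l).val * b ^ n.val := by
  haveI := S.nzq; haveI := S.nzp
  haveI : Fact q.Prime := ⟨S.hq⟩
  have hsurj : ∀ g : G, ∃ ln : ZMod q × ZMod p, g = a ^ ln.1.val * b ^ ln.2.val := by
    intro g
    obtain ⟨l, n, h⟩ := S.repr_surj hgen g
    exact ⟨(l, n), h⟩
  let dec : G → ZMod q × ZMod p := fun g => (hsurj g).choose
  have dspec : ∀ g : G, g = a ^ (dec g).1.val * b ^ (dec g).2.val := fun g => (hsurj g).choose_spec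
  let f : ZMod q → G → G := fun t g => a ^ (t * (dec g).1).val * b ^ ((dec g).2).val
  have fspec : ∀ (t : ZMod q) (l : ZMod q) (n : ZMod p),
      f t (a ^ l.val * b ^ n.val) = a ^ (t * l).val * b ^ n.val := by
    intro t l n
    have h := (dspec (a ^ l.val * b ^ n.val)).symm
    obtain ⟨h1, h2⟩ := S.repr_uniq h
    simp only [f, h1, h2]
  have hinv : ∀ (t t' : ZMod q), t' * t = 1 → ∀ g, f t' (f t g) = g := by
    intro t t' htt g
    rw [dspec g, fspec t ((dec g).1) ((dec g).2), fspec t' (t * (dec g).1) ((dec g).2),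
      ← mul_assoc, htt, one_mul]
  have hm : ∀ g h : G, f s (g * h) = f s g * f s h := ?_
  · exact ⟨MulEquiv.mk' ⟨f s, f s⁻¹, fun g => hinv s s⁻¹ (inv_mul_cancel₀ hs) g,
      fun g => hinv s⁻¹ s (mul_inv_cancel₀ hs) g⟩ hm, fun l n => fspec s l n⟩
  intro g h
  obtain ⟨l, n, hg⟩ := S.repr_surj hgen g
  obtain ⟨l', n', hh⟩ := S.repr_surj hgen h
  subst hg hh
  rw [S.mul_rule l l' n n', fspec s _ (n + n'), fspec s l n, fspec s l' n', S.mul_rule]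
  have e : s * (l + (r : ZMod q) ^ n.val * l') = s * l + (r : ZMod q) ^ n.val * (s * l') := by
    ring
  rw [e]

end PQSetup

namespace PQSetup
variable {G : Type*} [Group G] {p q r : ℕ} {a b : G} (S : PQSetup p q r a b)
include S

lemma r_pow_ne_one {n : ZMod p} (hn : n ≠ 0) : (r : ZMod q) ^ n.val ≠ 1 := by
  haveI := S.nzp
  intro h
  have hd := orderOf_dvd_of_pow_eq_one h
  rw [S.hr] at hd
  exact hn ((ZMod.val_eq_zero n).mp (Nat.eq_zero_of_dvd_of_lt hd n.val_lt))

lemma conj_formula (t l : ZMod q) (n : ZMod p) :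
    a ^ t.val * (a ^ l.val * b ^ n.val) * (a ^ t.val)⁻¹
      = a ^ (l + t * (1 - (r : ZMod q) ^ n.val)).val * b ^ n.val := by
  haveI := S.nzq; haveI := S.nzp
  have h1 : a ^ t.val * (a ^ l.val * b ^ n.val) * (a ^ t.val)⁻¹
      = (a ^ (t + l).val * b ^ n.val) * (a ^ (-t).val * b ^ ((0 : ZMod p)).val) := by
    rw [pv_zero, mul_one, pv_add S.ha, pv_neg S.ha]
    group
  rw [h1, S.mul_rule]
  have e1 : t + l + (r : ZMod q) ^ n.val * -t = l + t * (1 - (r : ZMod q) ^ n.val) := by ring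
  rw [e1, add_zero]

/-- The last stage: scale the second slot to have `a`-exponent `1`. -/
lemma final_step (hgen : Subgroup.closure ({a, b} : Set G) = ⊤)
    {m₁ m₂ m₃ m₄ : ZMod p} {k₂ k₃ k₄ : ZMod q}
    (hm₁ : m₁ ≠ 0) (hm₂ : m₂ ≠ 0) (hm₃ : m₃ ≠ 0) (hm₄ : m₄ ≠ 0) (hk₂ : k₂ ≠ 0)
    (hprod : b ^ m₁.val * (a ^ k₂.val * b ^ m₂.val) * (a ^ k₃.val * b ^ m₃.val)
        * (a ^ k₄.val * b ^ m₄.val) = 1) :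
    ∃ (N₁ N₂ N₃ : ZMod p) (L₃ : ZMod q),
      N₁ ≠ 0 ∧ N₂ ≠ 0 ∧ N₃ ≠ 0 ∧ N₁ + N₂ + N₃ ≠ 0 ∧
      Relation.EqvGen BraidAutStep
        (b ^ m₁.val, a ^ k₂.val * b ^ m₂.val, a ^ k₃.val * b ^ m₃.val, a ^ k₄.val * b ^ m₄.val)
        (b ^ N₁.val, a * b ^ N₂.val, a ^ L₃.val * b ^ N₃.val,
          (b ^ N₁.val * (a * b ^ N₂.val) * (a ^ L₃.val * b ^ N₃.val))⁻¹) := by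
  haveI := S.nzq; haveI := S.nzp
  haveI : Fact q.Prime := ⟨S.hq⟩
  haveI : Fact (1 < q) := ⟨S.hq.one_lt⟩
  have hB1 : (b : G) ^ m₁.val = a ^ ((0 : ZMod q)).val * b ^ m₁.val := by
    rw [pv_zero, one_mul]
  -- sum of the b-exponents is zero
  have hsum : m₁ + m₂ + m₃ + m₄ = 0 := by
    have e : a ^ ((0 : ZMod q)).val * b ^ m₁.val * (a ^ k₂.val * b ^ m₂.val)
        * (a ^ k₃.val * b ^ m₃.val) * (a ^ k₄.val * b ^ m₄.val)
        = a ^ ((0 : ZMod q)).val * b ^ ((0 : ZMod p)).val := by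
      simp only [pv_zero, one_mul, mul_one]
      exact hprod
    rw [S.mul_rule, S.mul_rule, S.mul_rule] at e
    exact (S.repr_uniq e).2
  have hs : k₂⁻¹ ≠ 0 := inv_ne_zero hk₂
  obtain ⟨ω, hω⟩ := S.exists_phi hgen hs
  refine ⟨m₁, m₂, m₃, k₂⁻¹ * k₃, hm₁, hm₂, hm₃, ?_, ?_⟩
  · intro h
    apply hm₄
    have : m₄ = -(m₁ + m₂ + m₃) := by linear_combination hsum
    rw [this, h, neg_zero]
  · have step := eqv_aut ω (b ^ m₁.val) (a ^ k₂.val * b ^ m₂.val)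
      (a ^ k₃.val * b ^ m₃.val) (a ^ k₄.val * b ^ m₄.val)
    have c1 : ω (b ^ m₁.val) = b ^ m₁.val := by
      rw [hB1, hω, mul_zero, pv_zero, one_mul]
    have c2 : ω (a ^ k₂.val * b ^ m₂.val) = a * b ^ m₂.val := by
      rw [hω, inv_mul_cancel₀ hk₂, ZMod.val_one, pow_one]
    have c3 : ω (a ^ k₃.val * b ^ m₃.val) = a ^ (k₂⁻¹ * k₃).val * b ^ m₃.val := hω k₃ m₃
    have c4 : ω (a ^ k₄.val * b ^ m₄.val)
        = (b ^ m₁.val * (a * b ^ m₂.val) * (a ^ (k₂⁻¹ * k₃).val * b ^ m₃.val))⁻¹ := by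
      have hp4 : ω (b ^ m₁.val) * ω (a ^ k₂.val * b ^ m₂.val) * ω (a ^ k₃.val * b ^ m₃.val)
          * ω (a ^ k₄.val * b ^ m₄.val) = 1 := by
        rw [← map_mul, ← map_mul, ← map_mul, hprod, map_one]
      rw [c1, c2, c3] at hp4
      exact eq_inv_of_mul_eq_one_right hp4
    rw [c1, c2, c3, c4] at step
    exact step


/-- The middle stage: given a tuple whose first entry lies in `⟨b⟩`, use braid moves to make
the second slot have nonzero `a`-part, then finish. -/
lemma mid_step (hgen : Subgroup.closure ({a, b} : Set G) = ⊤)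
    {n₁ n₂ n₃ n₄ : ZMod p} {l₂ l₃ l₄ : ZMod q}
    (hn₁ : n₁ ≠ 0) (hn₂ : n₂ ≠ 0) (hn₃ : n₃ ≠ 0) (hn₄ : n₄ ≠ 0)
    (hprod : b ^ n₁.val * (a ^ l₂.val * b ^ n₂.val) * (a ^ l₃.val * b ^ n₃.val)
        * (a ^ l₄.val * b ^ n₄.val) = 1)
    (hcl : Subgroup.closure ({b ^ n₁.val, a ^ l₂.val * b ^ n₂.val, a ^ l₃.val * b ^ n₃.val,
        a ^ l₄.val * b ^ n₄.val} : Set G) = ⊤) :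
    ∃ (N₁ N₂ N₃ : ZMod p) (L₃ : ZMod q),
      N₁ ≠ 0 ∧ N₂ ≠ 0 ∧ N₃ ≠ 0 ∧ N₁ + N₂ + N₃ ≠ 0 ∧
      Relation.EqvGen BraidAutStep
        (b ^ n₁.val, a ^ l₂.val * b ^ n₂.val, a ^ l₃.val * b ^ n₃.val, a ^ l₄.val * b ^ n₄.val)
        (b ^ N₁.val, a * b ^ N₂.val, a ^ L₃.val * b ^ N₃.val,
          (b ^ N₁.val * (a * b ^ N₂.val) * (a ^ L₃.val * b ^ N₃.val))⁻¹) := by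
  haveI := S.nzq; haveI := S.nzp
  by_cases hl₂ : l₂ ≠ 0
  · exact S.final_step hgen hn₁ hn₂ hn₃ hn₄ hl₂ hprod
  push_neg at hl₂
  by_cases hl₃ : l₃ ≠ 0
  · -- braid move at position 2 brings the third entry to the second slot
    have step1 := eqv_braid3 (b ^ n₁.val) (a ^ l₂.val * b ^ n₂.val)
      (a ^ l₃.val * b ^ n₃.val) (a ^ l₄.val * b ^ n₄.val)
    set g : G := (a ^ l₃.val * b ^ n₃.val)⁻¹ * (a ^ l₂.val * b ^ n₂.val)
      * (a ^ l₃.val * b ^ n₃.val) with hg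
    obtain ⟨k₃, m₃, eg⟩ := S.repr_surj hgen g
    have hog : orderOf g = p := by
      have : g = (MulAut.conj (a ^ l₃.val * b ^ n₃.val)⁻¹) (a ^ l₂.val * b ^ n₂.val) := by
        rw [MulAut.conj_apply, hg, inv_inv]
      rw [this, MulEquiv.orderOf_eq]
      exact S.order_eq_p l₂ hn₂
    have hm₃ : m₃ ≠ 0 := S.n_ne_zero (by rw [← eg]; exact hog)
    have hprod2 : b ^ n₁.val * (a ^ l₃.val * b ^ n₃.val) * (a ^ k₃.val * b ^ m₃.val)
        * (a ^ l₄.val * b ^ n₄.val) = 1 := by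
      rw [← eg, hg, ← hprod]
      group
    obtain ⟨N₁, N₂, N₃, L₃, c1, c2, c3, c4, heqv⟩ :=
      S.final_step hgen hn₁ hn₃ hm₃ hn₄ hl₃ hprod2
    rw [eg] at step1
    exact ⟨N₁, N₂, N₃, L₃, c1, c2, c3, c4, Relation.EqvGen.trans _ _ _ step1 heqv⟩
  push_neg at hl₃
  by_cases hl₄ : l₄ ≠ 0
  · -- two braid moves bring the fourth entry to the second slot
    have step1 := eqv_braid4 (b ^ n₁.val) (a ^ l₂.val * b ^ n₂.val)
      (a ^ l₃.val * b ^ n₃.val) (a ^ l₄.val * b ^ n₄.val)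
    have step2 := eqv_braid3 (b ^ n₁.val) (a ^ l₂.val * b ^ n₂.val)
      (a ^ l₄.val * b ^ n₄.val)
      ((a ^ l₄.val * b ^ n₄.val)⁻¹ * (a ^ l₃.val * b ^ n₃.val) * (a ^ l₄.val * b ^ n₄.val))
    set g₂ : G := (a ^ l₄.val * b ^ n₄.val)⁻¹ * (a ^ l₂.val * b ^ n₂.val)
      * (a ^ l₄.val * b ^ n₄.val) with hg₂
    set g₃ : G := (a ^ l₄.val * b ^ n₄.val)⁻¹ * (a ^ l₃.val * b ^ n₃.val)
      * (a ^ l₄.val * b ^ n₄.val) with hg₃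
    obtain ⟨k₃, m₃, eg₂⟩ := S.repr_surj hgen g₂
    obtain ⟨k₄, m₄, eg₃⟩ := S.repr_surj hgen g₃
    have hog₂ : orderOf g₂ = p := by
      have : g₂ = (MulAut.conj (a ^ l₄.val * b ^ n₄.val)⁻¹) (a ^ l₂.val * b ^ n₂.val) := by
        rw [MulAut.conj_apply, hg₂, inv_inv]
      rw [this, MulEquiv.orderOf_eq]
      exact S.order_eq_p l₂ hn₂
    have hog₃ : orderOf g₃ = p := by
      have : g₃ = (MulAut.conj (a ^ l₄.val * b ^ n₄.val)⁻¹) (a ^ l₃.val * b ^ n₃.val) := by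
        rw [MulAut.conj_apply, hg₃, inv_inv]
      rw [this, MulEquiv.orderOf_eq]
      exact S.order_eq_p l₃ hn₃
    have hm₃ : m₃ ≠ 0 := S.n_ne_zero (by rw [← eg₂]; exact hog₂)
    have hm₄ : m₄ ≠ 0 := S.n_ne_zero (by rw [← eg₃]; exact hog₃)
    have hprod2 : b ^ n₁.val * (a ^ l₄.val * b ^ n₄.val) * (a ^ k₃.val * b ^ m₃.val)
        * (a ^ k₄.val * b ^ m₄.val) = 1 := by
      rw [← eg₂, ← eg₃, hg₂, hg₃, ← hprod]
      group
    obtain ⟨N₁, N₂, N₃, L₃, c1, c2, c3, c4, heqv⟩ :=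
      S.final_step hgen hn₁ hn₄ hm₃ hm₄ hl₄ hprod2
    rw [eg₃] at step1
    rw [eg₂, eg₃] at step2
    exact ⟨N₁, N₂, N₃, L₃, c1, c2, c3, c4, Relation.EqvGen.trans _ _ _ (Relation.EqvGen.trans _ _ _ step1 step2) heqv⟩
  push_neg at hl₄
  -- all `a`-parts vanish: the four entries lie in `⟨b⟩`, contradicting generation
  exfalso
  subst hl₂ hl₃ hl₄
  rw [pv_zero, one_mul, one_mul, one_mul] at hcl
  have hle : Subgroup.closure ({b ^ n₁.val, b ^ n₂.val, b ^ n₃.val, b ^ n₄.val} : Set G)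
      ≤ Subgroup.zpowers b := by
    rw [Subgroup.closure_le]
    rintro x (rfl | rfl | rfl | rfl) <;>
      exact SetLike.mem_coe.mpr (Subgroup.mem_zpowers_iff.mpr ⟨_, zpow_natCast b _⟩)
  rw [hcl] at hle
  have haz : a ∈ Subgroup.zpowers b := hle (Subgroup.mem_top a)
  have : q ≤ p := by
    have := orderOf_dvd_of_mem_zpowers haz
    rw [S.ha, S.hb] at this
    exact Nat.le_of_dvd S.ppos this
  exact absurd S.p_lt_q (not_lt.mpr this)

end PQSetup

/-- Normal form for signature `(0; p,p,p,p)` (Theorem 4(1)): every generating quadruple of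
elements of order `p` with trivial product is equivalent, under the smallest equivalence
relation `Relation.EqvGen BraidAutStep` generated by automorphisms and braid moves, to a normal form
`(b^{n₁}, a b^{n₂}, a^{l₃} b^{n₃}, ⋯)`; hence there are at most `q(p-1)(p²-3p+3)` classes. -/
theorem normal_form_signature_pppp
    {G : Type*} [Group G] (p q : ℕ) (hp : p.Prime) (hq : q.Prime)
    (hp2 : Odd p) (hq2 : Odd q) (hpq : p ∣ q - 1) (r : ℕ)
    (hr : orderOf (r : ZMod q) = p) (a b : G)
    (ha : orderOf a = q) (hb : orderOf b = p)
    (hrel : b * a * b⁻¹ = a ^ r)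
    (hgen : Subgroup.closure ({a, b} : Set G) = ⊤)
    (hcard : Nat.card G = p * q) :
    (∀ x₁ x₂ x₃ x₄ : G, orderOf x₁ = p → orderOf x₂ = p → orderOf x₃ = p → orderOf x₄ = p →
      x₁ * x₂ * x₃ * x₄ = 1 →
      Subgroup.closure ({x₁, x₂, x₃, x₄} : Set G) = ⊤ →
      ∃ (n₁ n₂ n₃ : ZMod p) (l₃ : ZMod q),
        n₁ ≠ 0 ∧ n₂ ≠ 0 ∧ n₃ ≠ 0 ∧ n₁ + n₂ + n₃ ≠ 0 ∧
        Relation.EqvGen BraidAutStep (x₁, x₂, x₃, x₄)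
          (b ^ n₁.val, a * b ^ n₂.val, a ^ l₃.val * b ^ n₃.val,
            (b ^ n₁.val * (a * b ^ n₂.val) * (a ^ l₃.val * b ^ n₃.val))⁻¹)) ∧
    (∃ T : Finset (G × G × G × G), T.card ≤ q * (p - 1) * (p ^ 2 + 3 - 3 * p) ∧
      ∀ x₁ x₂ x₃ x₄ : G, orderOf x₁ = p → orderOf x₂ = p → orderOf x₃ = p → orderOf x₄ = p →
        x₁ * x₂ * x₃ * x₄ = 1 →
        Subgroup.closure ({x₁, x₂, x₃, x₄} : Set G) = ⊤ →
        ∃ t ∈ T, Relation.EqvGen BraidAutStep (x₁, x₂, x₃, x₄) t) := by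
  classical
  have S : PQSetup p q r a b := ⟨hp, hq, hpq, hr, ha, hb, hrel⟩
  haveI := S.nzp; haveI := S.nzq
  have main : ∀ x₁ x₂ x₃ x₄ : G, orderOf x₁ = p → orderOf x₂ = p → orderOf x₃ = p →
      orderOf x₄ = p → x₁ * x₂ * x₃ * x₄ = 1 →
      Subgroup.closure ({x₁, x₂, x₃, x₄} : Set G) = ⊤ →
      ∃ (n₁ n₂ n₃ : ZMod p) (l₃ : ZMod q),
        n₁ ≠ 0 ∧ n₂ ≠ 0 ∧ n₃ ≠ 0 ∧ n₁ + n₂ + n₃ ≠ 0 ∧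
        Relation.EqvGen BraidAutStep (x₁, x₂, x₃, x₄)
          (b ^ n₁.val, a * b ^ n₂.val, a ^ l₃.val * b ^ n₃.val,
            (b ^ n₁.val * (a * b ^ n₂.val) * (a ^ l₃.val * b ^ n₃.val))⁻¹) := by
    intro x₁ x₂ x₃ x₄ h₁ h₂ h₃ h₄ hprod hcl
    obtain ⟨l₁, m₁, e₁⟩ := S.repr_surj hgen x₁
    obtain ⟨l₂, m₂, e₂⟩ := S.repr_surj hgen x₂
    obtain ⟨l₃, m₃, e₃⟩ := S.repr_surj hgen x₃
    obtain ⟨l₄, m₄, e₄⟩ := S.repr_surj hgen x₄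
    subst e₁ e₂ e₃ e₄
    have hm₁ := S.n_ne_zero h₁
    have hm₂ := S.n_ne_zero h₂
    have hm₃ := S.n_ne_zero h₃
    have hm₄ := S.n_ne_zero h₄
    have hc : (1 : ZMod q) - (r : ZMod q) ^ m₁.val ≠ 0 :=
      sub_ne_zero.mpr (Ne.symm (S.r_pow_ne_one hm₁))
    haveI : Fact q.Prime := ⟨hq⟩
    set t : ZMod q := -l₁ * ((1 : ZMod q) - (r : ZMod q) ^ m₁.val)⁻¹ with hterm
    have ht : l₁ + t * (1 - (r : ZMod q) ^ m₁.val) = 0 := by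
      rw [hterm, mul_assoc, inv_mul_cancel₀ hc, mul_one, add_neg_cancel]
    set ω₀ : G ≃* G := (MulAut.conj (a ^ t.val) : G ≃* G) with hω₀def
    have hconj : ∀ (l : ZMod q) (n : ZMod p),
        ω₀ (a ^ l.val * b ^ n.val)
          = a ^ (l + t * (1 - (r : ZMod q) ^ n.val)).val * b ^ n.val := by
      intro l n
      rw [hω₀def, MulAut.conj_apply]
      exact S.conj_formula t l n
    have w₁ : ω₀ (a ^ l₁.val * b ^ m₁.val) = b ^ m₁.val := by
      rw [hconj, ht, pv_zero, one_mul]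
    have step0 := eqv_aut ω₀ (a ^ l₁.val * b ^ m₁.val) (a ^ l₂.val * b ^ m₂.val)
      (a ^ l₃.val * b ^ m₃.val) (a ^ l₄.val * b ^ m₄.val)
    rw [w₁, hconj l₂ m₂, hconj l₃ m₃, hconj l₄ m₄] at step0
    have hprod' : ω₀ (a ^ l₁.val * b ^ m₁.val) * ω₀ (a ^ l₂.val * b ^ m₂.val)
        * ω₀ (a ^ l₃.val * b ^ m₃.val) * ω₀ (a ^ l₄.val * b ^ m₄.val) = 1 := by
      rw [← map_mul, ← map_mul, ← map_mul, hprod, map_one]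
    rw [w₁, hconj l₂ m₂, hconj l₃ m₃, hconj l₄ m₄] at hprod'
    have hcl' : Subgroup.closure ({ω₀ (a ^ l₁.val * b ^ m₁.val),
        ω₀ (a ^ l₂.val * b ^ m₂.val), ω₀ (a ^ l₃.val * b ^ m₃.val),
        ω₀ (a ^ l₄.val * b ^ m₄.val)} : Set G) = ⊤ := by
      have himg : ({ω₀ (a ^ l₁.val * b ^ m₁.val), ω₀ (a ^ l₂.val * b ^ m₂.val),
          ω₀ (a ^ l₃.val * b ^ m₃.val), ω₀ (a ^ l₄.val * b ^ m₄.val)} : Set G)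
          = ω₀.toMonoidHom '' {a ^ l₁.val * b ^ m₁.val, a ^ l₂.val * b ^ m₂.val,
              a ^ l₃.val * b ^ m₃.val, a ^ l₄.val * b ^ m₄.val} := by
        simp [Set.image_insert_eq]
      rw [himg, ← MonoidHom.map_closure, hcl]
      exact Subgroup.map_top_of_surjective _ ω₀.surjective
    rw [w₁, hconj l₂ m₂, hconj l₃ m₃, hconj l₄ m₄] at hcl'
    obtain ⟨N₁, N₂, N₃, L₃, c1, c2, c3, c4, heqv⟩ :=
      S.mid_step hgen hm₁ hm₂ hm₃ hm₄ hprod' hcl'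
    exact ⟨N₁, N₂, N₃, L₃, c1, c2, c3, c4, Relation.EqvGen.trans _ _ _ step0 heqv⟩
  refine ⟨main, ?_⟩
  -- the counting part
  have hp3 : 3 ≤ p := by
    have h2 := hp.two_le
    have : p ≠ 2 := by
      rintro rfl
      exact (Nat.not_odd_iff_even.mpr (by norm_num)) hp2
    omega
  set U : Finset (ZMod p) := Finset.univ.erase 0 with hUdef
  have hU : U.card = p - 1 := by
    rw [hUdef, Finset.card_erase_of_mem (Finset.mem_univ 0), Finset.card_univ, ZMod.card]
  set E3 : Finset (ZMod p × ZMod p × ZMod p) := U ×ˢ U ×ˢ U with hE3def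
  set S3 : Finset (ZMod p × ZMod p × ZMod p) :=
    E3.filter (fun v => ¬ (v.1 + v.2.1 + v.2.2 = 0)) with hS3def
  set Z3 : Finset (ZMod p × ZMod p × ZMod p) :=
    E3.filter (fun v => v.1 + v.2.1 + v.2.2 = 0) with hZ3def
  have hE3card : E3.card = (p - 1) * ((p - 1) * (p - 1)) := by
    rw [hE3def, Finset.card_product, Finset.card_product, hU]
  have hsplit : Z3.card + S3.card = (p - 1) * ((p - 1) * (p - 1)) := by
    rw [← hE3card, hZ3def, hS3def]
    exact Finset.card_filter_add_card_filter_not _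
  set W : Finset (ZMod p × ZMod p) :=
    (U ×ˢ U).filter (fun v => ¬ (v.1 + v.2 = 0)) with hWdef
  set Wz : Finset (ZMod p × ZMod p) := (U ×ˢ U).filter (fun v => v.1 + v.2 = 0) with hWzdef
  have hWsplit : Wz.card + W.card = (p - 1) * (p - 1) := by
    rw [hWzdef, hWdef, ← hU, ← Finset.card_product]
    exact Finset.card_filter_add_card_filter_not _
  have hZW : Z3.card = W.card := by
    apply Finset.card_nbij' (fun v => (v.1, v.2.1)) (fun w => (w.1, w.2, -(w.1 + w.2)))
    · intro v hv
      simp only [hZ3def, hE3def, hWdef, hUdef, Finset.mem_coe, Finset.mem_filter, Finset.mem_product,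
        Finset.mem_erase, Finset.mem_univ, and_true] at hv ⊢
      obtain ⟨⟨h1, h2, h3⟩, hsum⟩ := hv
      exact ⟨⟨h1, h2⟩, fun h0 => h3 (by linear_combination hsum - h0)⟩
    · intro w hw
      simp only [hZ3def, hE3def, hWdef, hUdef, Finset.mem_coe, Finset.mem_filter, Finset.mem_product,
        Finset.mem_erase, Finset.mem_univ, and_true] at hw ⊢
      obtain ⟨⟨h1, h2⟩, h0⟩ := hw
      exact ⟨⟨h1, h2, fun h => h0 (by linear_combination -h)⟩, by ring⟩
    · intro v hv
      simp only [hZ3def, hE3def, Finset.mem_coe, Finset.mem_filter] at hv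
      have : -(v.1 + v.2.1) = v.2.2 := by linear_combination -hv.2
      show (v.1, v.2.1, -(v.1 + v.2.1)) = v
      rw [this]
    · intro w _
      rfl
  have hWzcard : Wz.card = p - 1 := by
    rw [← hU]
    apply Finset.card_nbij' (fun v => v.1) (fun u => (u, -u))
    · intro v hv
      simp only [hWzdef, Finset.mem_coe, Finset.mem_filter, Finset.mem_product] at hv
      exact hv.1.1
    · intro u hu
      simp only [hWzdef, hUdef, Finset.mem_coe, Finset.mem_filter, Finset.mem_product, Finset.mem_erase,
        Finset.mem_univ, and_true] at hu ⊢
      exact ⟨⟨hu, fun h => hu (by linear_combination -h)⟩, by ring⟩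
    · intro v hv
      simp only [hWzdef, Finset.mem_coe, Finset.mem_filter] at hv
      have : -v.1 = v.2 := by linear_combination -hv.2
      show (v.1, -v.1) = v
      rw [this]
    · intro u _
      rfl
  have hS3card : S3.card = (p - 1) * (p ^ 2 + 3 - 3 * p) := by
    obtain ⟨m, hm⟩ : ∃ m, p = m + 3 := ⟨p - 3, by omega⟩
    have hp1 : p - 1 = m + 2 := by omega
    have e1 : p ^ 2 + 3 - 3 * p = m * m + 3 * m + 3 := by
      have e : p ^ 2 + 3 = (m * m + 3 * m + 3) + 3 * p := by rw [hm]; ring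
      rw [e, Nat.add_sub_cancel]
    have key : S3.card + (p - 1) * (p - 1) = (p - 1) * ((p - 1) * (p - 1)) + (p - 1) := by
      calc S3.card + (p - 1) * (p - 1) = S3.card + (Wz.card + W.card) := by rw [hWsplit]
        _ = S3.card + ((p - 1) + Z3.card) := by rw [hWzcard, hZW]
        _ = (Z3.card + S3.card) + (p - 1) := by omega
        _ = (p - 1) * ((p - 1) * (p - 1)) + (p - 1) := by rw [hsplit]
    have key2 : (p - 1) * (p ^ 2 + 3 - 3 * p) + (p - 1) * (p - 1)
        = (p - 1) * ((p - 1) * (p - 1)) + (p - 1) := by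
      rw [e1, hp1]; ring
    exact Nat.add_right_cancel (key.trans key2.symm)
  -- assemble the finite set of normal forms
  set F : (ZMod p × ZMod p × ZMod p) × ZMod q → G × G × G × G := fun v =>
    (b ^ v.1.1.val, a * b ^ v.1.2.1.val, a ^ v.2.val * b ^ v.1.2.2.val,
      (b ^ v.1.1.val * (a * b ^ v.1.2.1.val) * (a ^ v.2.val * b ^ v.1.2.2.val))⁻¹) with hFdef
  refine ⟨(S3 ×ˢ (Finset.univ : Finset (ZMod q))).image F, ?_, ?_⟩
  · calc ((S3 ×ˢ (Finset.univ : Finset (ZMod q))).image F).card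
        ≤ (S3 ×ˢ (Finset.univ : Finset (ZMod q))).card := Finset.card_image_le
      _ = S3.card * q := by rw [Finset.card_product, Finset.card_univ, ZMod.card]
      _ = q * (p - 1) * (p ^ 2 + 3 - 3 * p) := by rw [hS3card]; ring
  · intro x₁ x₂ x₃ x₄ h₁ h₂ h₃ h₄ hprod hcl
    obtain ⟨n₁, n₂, n₃, l₃, d1, d2, d3, d4, heqv⟩ := main x₁ x₂ x₃ x₄ h₁ h₂ h₃ h₄ hprod hcl
    refine ⟨F ((n₁, n₂, n₃), l₃), Finset.mem_image_of_mem F ?_, heqv⟩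
    rw [Finset.mem_product]
    refine ⟨?_, Finset.mem_univ _⟩
    rw [hS3def, Finset.mem_filter, hE3def]
    simp only [Finset.mem_product, hUdef, Finset.mem_erase, Finset.mem_univ, and_true]
    exact ⟨⟨d1, d2, d3⟩, d4⟩
end

section
/- (Claim 1 in the proof of Theorem 4(2).) Let G' = ⟨a, c : a^q = c^{2p} = 1, c a c⁻¹ = a^{−r}⟩ be the group of order 2pq, and set b := c² and t := c^p. Then for every L ∈ ℤ/qℤ and every nonzero N ∈ ℤ/pℤ, the four elements t a^L, t a^{L−1}, a b^N, b^{−N} have orders 2, 2, p, p respectively, their product (t a^L)(t a^{L−1})(a b^N)(b^{−N}) equals 1, and they generate G'. (This shows the action of G_{p,q} with signature (0; p,p,p,p) extends, on certain strata, to an action of C_q ⋊ C_{2p} with signature (0; 2,2,p,p).) -/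
private lemma conj_pow_zpow {G : Type*} [Group G] (a c : G) (s : ℤ)
    (h : c * a * c⁻¹ = a ^ s) (m : ℕ) (n : ℤ) :
    c ^ m * a ^ n * (c ^ m)⁻¹ = a ^ (s ^ m * n) := by
  induction m with
  | zero => simp
  | succ m ih =>
    have h1 : c ^ (m+1) * a ^ n * (c ^ (m+1))⁻¹ = c * (c ^ m * a ^ n * (c ^ m)⁻¹) * c⁻¹ := by
      group
    rw [h1, ih, ← conj_zpow, h, ← zpow_mul]
    congr 1
    ring

private lemma mul_pow_formula {G : Type*} [Group G] (a g : G) (s : ℤ)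
    (h : g * a * g⁻¹ = a ^ s) (n : ℕ) :
    (a * g) ^ n = a ^ (∑ i ∈ Finset.range n, s ^ i) * g ^ n := by
  induction n with
  | zero => simp
  | succ n ih =>
    have hg : g ^ n * a * (g ^ n)⁻¹ = a ^ (s ^ n) := by
      have := conj_pow_zpow a g s h n 1
      simpa using this
    have h2 : g ^ n * a = a ^ (s ^ n) * g ^ n := by
      rw [← hg]; group
    rw [pow_succ, ih, Finset.sum_range_succ, zpow_add, mul_assoc (a ^ _), ← mul_assoc (g ^ n),
      h2]
    group

/-- Claim 1 in the proof of Theorem 4(2): in `G' = ⟨a, c : a^q = c^{2p} = 1,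
c a c⁻¹ = a^{-r}⟩` with `b = c²`, `t = c^p`, for every `L ∈ ℤ/q` and nonzero `N ∈ ℤ/p` the
elements `t a^L, t a^{L-1}, a b^N, b^{-N}` have orders `2, 2, p, p`, have trivial product,
and generate `G'`. -/
theorem extension_generating_vector_22pp
    (p q : ℕ) (hp : p.Prime) (hq : q.Prime)
    (hp2 : Odd p) (hq2 : Odd q) (hpq : p ∣ q - 1) (r : ℕ)
    (hr : orderOf (r : ZMod q) = p)
    {G' : Type*} [Group G'] (a c : G')
    (ha : orderOf a = q) (hc : orderOf c = 2 * p)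
    (hrel : c * a * c⁻¹ = (a ^ r)⁻¹)
    (hgen : Subgroup.closure ({a, c} : Set G') = ⊤)
    (hcard : Nat.card G' = 2 * p * q)
    (L : ZMod q) (N : ZMod p) (hN : N ≠ 0) :
    orderOf (c ^ p * a ^ L.val) = 2 ∧
    orderOf (c ^ p * a ^ (L - 1).val) = 2 ∧
    orderOf (a * (c ^ 2) ^ N.val) = p ∧
    orderOf ((c ^ 2) ^ (-N).val) = p ∧
    (c ^ p * a ^ L.val) * (c ^ p * a ^ (L - 1).val) *
      (a * (c ^ 2) ^ N.val) * ((c ^ 2) ^ (-N).val) = 1 ∧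
    Subgroup.closure ({c ^ p * a ^ L.val, c ^ p * a ^ (L - 1).val,
      a * (c ^ 2) ^ N.val, (c ^ 2) ^ (-N).val} : Set G') = ⊤ := by
  have hfin : Finite G' := (Nat.card_pos_iff.mp (by
    rw [hcard]; exact Nat.mul_pos (Nat.mul_pos two_pos hp.pos) hq.pos)).2
  have hq1 : 1 < q := hq.one_lt
  have hp1 : 1 < p := hp.one_lt
  have hp0 : 0 < p := hp.pos
  have hpodd : p % 2 = 1 := Nat.odd_iff.mp hp2
  have hqodd : q % 2 = 1 := Nat.odd_iff.mp hq2
  have hple : p < q := by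
    have := Nat.le_of_dvd (by omega) hpq
    omega
  haveI : NeZero q := ⟨hq.ne_zero⟩
  haveI : NeZero p := ⟨hp.ne_zero⟩
  haveI : Fact q.Prime := ⟨hq⟩
  haveI : Fact p.Prime := ⟨hp⟩
  haveI : Fact (Nat.Prime 2) := ⟨Nat.prime_two⟩
  -- relation in zpow form
  have hrel' : c * a * c⁻¹ = a ^ (-(r : ℤ)) := by
    rw [hrel, ← zpow_natCast, ← zpow_neg]
  have hconj : ∀ (m : ℕ) (n : ℤ), c ^ m * a ^ n * (c ^ m)⁻¹ = a ^ ((-(r : ℤ)) ^ m * n) :=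
    conj_pow_zpow a c _ hrel'
  -- power equality transfer
  have hz : ∀ x y : ℤ, ((x : ZMod q) = (y : ZMod q)) → a ^ x = a ^ y := by
    intro x y hxy
    have hd : ((x - y : ℤ) : ZMod q) = 0 := by push_cast; rw [hxy]; ring
    have hdvd : (q : ℤ) ∣ x - y := (ZMod.intCast_zmod_eq_zero_iff_dvd _ q).mp hd
    have h1 : a ^ (x - y) = 1 := by
      rw [← orderOf_dvd_iff_zpow_eq_one, ha]; exact hdvd
    rwa [zpow_sub, mul_inv_eq_one] at h1
  have hrp : (r : ZMod q) ^ p = 1 := by rw [← hr]; exact pow_orderOf_eq_one _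
  -- conjugation by t = c^p inverts a
  have htconj : ∀ n : ℤ, c ^ p * a ^ n * (c ^ p)⁻¹ = a ^ (-n) := by
    intro n
    rw [hconj p n]
    apply hz
    push_cast
    rw [hp2.neg_pow, hrp]
    ring
  have hcp2 : c ^ (2 * p) = 1 := by rw [← hc]; exact pow_orderOf_eq_one c
  have ht2 : c ^ p * c ^ p = 1 := by rw [← pow_add, ← two_mul]; exact hcp2
  -- orders of c^p and c^2
  have hotp : orderOf (c ^ p) = 2 := by
    rw [orderOf_pow, hc, Nat.gcd_comm, Nat.gcd_eq_left ⟨2, by ring⟩,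
      Nat.mul_div_cancel _ hp0]
  have hot2 : orderOf (c ^ 2) = p := by
    rw [orderOf_pow, hc, Nat.gcd_comm, Nat.gcd_eq_left ⟨p, rfl⟩,
      Nat.mul_div_cancel_left _ (by norm_num : 0 < 2)]
  -- order 2 of t * a^l for any l
  have horder2 : ∀ l : ℕ, orderOf (c ^ p * a ^ l) = 2 := by
    intro l
    have h1 : c ^ p * a ^ (l : ℤ) * (c ^ p)⁻¹ = a ^ (-(l : ℤ)) := htconj l
    have hsq : (c ^ p * a ^ l) ^ 2 = 1 := by
      have e1 : (c ^ p * a ^ l) ^ 2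
          = (c ^ p * a ^ (l : ℤ) * (c ^ p)⁻¹) * (c ^ p * c ^ p) * a ^ (l : ℤ) := by
        rw [pow_two]; simp only [zpow_natCast]; group
      rw [e1, h1, ht2, mul_one, ← zpow_add]
      simp
    have hne : c ^ p * a ^ l ≠ 1 := by
      intro h
      have heq : c ^ p = (a ^ l)⁻¹ := by
        rw [eq_inv_iff_mul_eq_one]; exact h
      have h2 : orderOf (c ^ p) ∣ q := by
        rw [heq, orderOf_inv, ← ha]
        exact orderOf_pow_dvd l
      rw [hotp] at h2
      have := Nat.le_of_dvd (by omega) h2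
      rcases h2 with ⟨k, hk⟩
      omega
    exact orderOf_eq_prime hsq hne
  -- val facts
  have hNv : N.val ≠ 0 := fun h => hN ((ZMod.val_eq_zero N).mp h)
  have hNv' : (-N).val ≠ 0 := fun h => (neg_ne_zero.mpr hN) ((ZMod.val_eq_zero (-N)).mp h)
  have hNvlt : N.val < p := N.val_lt
  have hNvlt' : (-N).val < p := (-N).val_lt
  have hndvd : ¬ p ∣ 2 * N.val := by
    intro hd
    rcases (Nat.Prime.dvd_mul hp).mp hd with h | h
    · have := Nat.le_of_dvd (by norm_num) h; omega
    · have := Nat.le_of_dvd (Nat.pos_of_ne_zero hNv) h; omega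
  -- u = r^(2 Nv) in ZMod q
  have hu1 : (r : ZMod q) ^ (2 * N.val) ≠ 1 := by
    intro h
    have hd := orderOf_dvd_iff_pow_eq_one.mpr h
    rw [hr] at hd
    exact hndvd hd
  have hup : ((r : ZMod q) ^ (2 * N.val)) ^ p = 1 := by
    rw [← pow_mul, mul_comm (2 * N.val) p, pow_mul, hrp, one_pow]
  have hsum : (∑ i ∈ Finset.range p, ((r : ZMod q) ^ (2 * N.val)) ^ i) = 0 := by
    have hgeo := geom_sum_mul ((r : ZMod q) ^ (2 * N.val)) p
    rw [hup, sub_self] at hgeo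
    rcases mul_eq_zero.mp hgeo with h | h
    · exact h
    · exact absurd (sub_eq_zero.mp h) hu1
  -- conjugation by b^N
  have hbconj : (c ^ 2) ^ N.val * a * ((c ^ 2) ^ N.val)⁻¹ = a ^ ((-(r : ℤ)) ^ (2 * N.val)) := by
    have h := hconj (2 * N.val) 1
    rw [mul_one, zpow_one] at h
    rw [← pow_mul, h]
  have hscast : (((-(r : ℤ)) ^ (2 * N.val) : ℤ) : ZMod q) = (r : ZMod q) ^ (2 * N.val) := by
    push_cast
    rw [Even.neg_pow ⟨N.val, by ring⟩]
  -- (c^2)^Nv ^ p = 1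
  have hbNp : ((c ^ 2) ^ N.val) ^ p = 1 := by
    rw [← pow_mul, ← pow_mul]
    exact orderOf_dvd_iff_pow_eq_one.mp (by rw [hc]; exact ⟨N.val, by ring⟩)
  -- order p of a * b^N
  have habp : (a * (c ^ 2) ^ N.val) ^ p = 1 := by
    rw [mul_pow_formula a _ _ hbconj p, hbNp, mul_one]
    have h0 : a ^ (∑ i ∈ Finset.range p, ((-(r : ℤ)) ^ (2 * N.val)) ^ i) = a ^ (0 : ℤ) := by
      apply hz
      push_cast
      rw [Even.neg_pow ⟨N.val, by ring⟩]
      exact hsum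
    rw [h0, zpow_zero]
  have habne : a * (c ^ 2) ^ N.val ≠ 1 := by
    intro h
    have heq : a = ((c ^ 2) ^ N.val)⁻¹ := by
      rw [eq_inv_iff_mul_eq_one]; exact h
    have h2 : orderOf a ∣ p := by
      have hdp := orderOf_pow_dvd (x := c ^ 2) N.val
      rw [hot2] at hdp
      rw [heq, orderOf_inv]
      exact hdp
    rw [ha] at h2
    have := Nat.le_of_dvd (by omega) h2
    omega
  have hord3 : orderOf (a * (c ^ 2) ^ N.val) = p := orderOf_eq_prime habp habne
  -- order p of b^{-N}
  have hord4 : orderOf ((c ^ 2) ^ (-N).val) = p := by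
    rw [orderOf_pow, hot2,
      Nat.Coprime.gcd_eq_one (hp.coprime_iff_not_dvd.mpr (fun hd => by
        have := Nat.le_of_dvd (Nat.pos_of_ne_zero hNv') hd; omega)),
      Nat.div_one]
  -- product is 1
  have hLcast : ((L.val : ℕ) : ZMod q) = L := ZMod.natCast_rightInverse L
  have hL1cast : (((L - 1).val : ℕ) : ZMod q) = L - 1 := ZMod.natCast_rightInverse (L - 1)
  have hprod : (c ^ p * a ^ L.val) * (c ^ p * a ^ (L - 1).val) *
      (a * (c ^ 2) ^ N.val) * ((c ^ 2) ^ (-N).val) = 1 := by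
    have k1 : c ^ p * a ^ (L.val : ℤ) * c ^ p = a ^ (-(L.val : ℤ)) := by
      have e : c ^ p * a ^ (L.val : ℤ) * c ^ p
          = (c ^ p * a ^ (L.val : ℤ) * (c ^ p)⁻¹) * (c ^ p * c ^ p) := by group
      rw [e, htconj, ht2, mul_one]
    have k4 : (c ^ 2) ^ N.val * (c ^ 2) ^ (-N).val = 1 := by
      rw [← pow_add]
      apply orderOf_dvd_iff_pow_eq_one.mp
      rw [hot2]
      apply (ZMod.natCast_eq_zero_iff _ p).mp
      push_cast
      rw [ZMod.natCast_rightInverse N, ZMod.natCast_rightInverse (-N)]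
      ring
    have e : (c ^ p * a ^ L.val) * (c ^ p * a ^ (L - 1).val) *
        (a * (c ^ 2) ^ N.val) * ((c ^ 2) ^ (-N).val)
        = (c ^ p * a ^ (L.val : ℤ) * c ^ p) * (a ^ ((L - 1).val : ℤ) * a)
          * ((c ^ 2) ^ N.val * (c ^ 2) ^ (-N).val) := by
      rw [zpow_natCast, zpow_natCast]; group
    rw [e, k1, k4, mul_one]
    have k2 : a ^ (-(L.val : ℤ)) * (a ^ ((L - 1).val : ℤ) * a)
        = a ^ (-(L.val : ℤ) + (((L - 1).val : ℤ) + 1)) := by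
      rw [zpow_add, zpow_add, zpow_one]
    rw [k2]
    have k3 : a ^ (-(L.val : ℤ) + (((L - 1).val : ℤ) + 1)) = a ^ (0 : ℤ) := by
      apply hz
      push_cast
      rw [hLcast, hL1cast]
      ring
    rw [k3, zpow_zero]
  -- generation
  have hgen' : Subgroup.closure ({c ^ p * a ^ L.val, c ^ p * a ^ (L - 1).val,
      a * (c ^ 2) ^ N.val, (c ^ 2) ^ (-N).val} : Set G') = ⊤ := by
    set K := Subgroup.closure ({c ^ p * a ^ L.val, c ^ p * a ^ (L - 1).val,
      a * (c ^ 2) ^ N.val, (c ^ 2) ^ (-N).val} : Set G') with hK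
    have hb2 : (c ^ 2) ^ (-N).val ∈ K := Subgroup.subset_closure (by simp)
    have hcsq : c ^ 2 ∈ K := by
      have hmk : (c ^ 2) ^ ((-N).val * ((-N)⁻¹).val) = (c ^ 2) ^ 1 := by
        rw [pow_eq_pow_iff_modEq, hot2, ← ZMod.natCast_eq_natCast_iff]
        push_cast
        rw [ZMod.natCast_rightInverse (-N), ZMod.natCast_rightInverse (-N)⁻¹]
        exact mul_inv_cancel₀ (neg_ne_zero.mpr hN)
      have : ((c ^ 2) ^ (-N).val) ^ ((-N)⁻¹).val = c ^ 2 := by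
        rw [← pow_mul, hmk, pow_one]
      rw [← this]
      exact K.pow_mem hb2 _
    have hbN : (c ^ 2) ^ N.val ∈ K := K.pow_mem hcsq N.val
    have haK : a ∈ K := by
      have h := K.mul_mem (Subgroup.subset_closure
        (show a * (c ^ 2) ^ N.val ∈ _ by simp)) (K.inv_mem hbN)
      simpa [mul_assoc] using h
    have htK : c ^ p ∈ K := by
      have h := K.mul_mem (Subgroup.subset_closure
        (show c ^ p * a ^ L.val ∈ _ by simp)) (K.inv_mem (K.pow_mem haK L.val))
      simpa [mul_assoc] using h
    have hcK : c ∈ K := by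
      obtain ⟨k, hk⟩ := hp2
      have he : c ^ p * ((c ^ 2) ^ k)⁻¹ = c := by
        rw [← pow_mul, hk]
        group
      rw [← he]
      exact K.mul_mem htK (K.inv_mem (K.pow_mem hcsq k))
    rw [eq_top_iff, ← hgen]
    refine (Subgroup.closure_le _).mpr ?_
    intro x hx
    rcases hx with rfl | hx
    · exact haK
    · rcases hx with rfl; exact hcK
  exact ⟨horder2 L.val, horder2 (L - 1).val, hord3, hord4, hprod, hgen'⟩
end

section
/- (Claim 2 in the proof of Theorem 4(2).) Let G'' be a group of order 4pq containing a subgroup isomorphic to G_{p,q}. Then the subgroup of G'' generated by all elements of order 2 is a proper subgroup of G''; in particular, G'' cannot be generated by three involutions. (This rules out extending actions in the family C_{4,0} to a group of order 4pq acting with signature (0; 2,2,2,p).) -/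
/-- Claim 2 in the proof of Theorem 4(2): in a group of order `4pq` containing a copy of
`G_{p,q}`, the involutions generate a proper subgroup; in particular the group is not
generated by three involutions. -/
theorem involutions_generate_proper_subgroup
    {G : Type*} [Group G] (p q : ℕ) (hp : p.Prime) (hq : q.Prime)
    (hp2 : Odd p) (hq2 : Odd q) (hpq : p ∣ q - 1) (r : ℕ)
    (hr : orderOf (r : ZMod q) = p) (a b : G)
    (ha : orderOf a = q) (hb : orderOf b = p)
    (hrel : b * a * b⁻¹ = a ^ r)
    (hgen : Subgroup.closure ({a, b} : Set G) = ⊤)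
    (hcard : Nat.card G = p * q)
    {G'' : Type*} [Group G''] (hcard'' : Nat.card G'' = 4 * p * q)
    (H : Subgroup G'') (hH : Nonempty (H ≃* G)) :
    Subgroup.closure {g : G'' | orderOf g = 2} ≠ ⊤ ∧
    ∀ t₁ t₂ t₃ : G'', orderOf t₁ = 2 → orderOf t₂ = 2 → orderOf t₃ = 2 →
      Subgroup.closure ({t₁, t₂, t₃} : Set G'') ≠ ⊤ := by
  classical
  obtain ⟨e⟩ := hH
  haveI : Fact q.Prime := ⟨hq⟩
  haveI : Fact p.Prime := ⟨hp⟩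
  -- basic numerical facts
  have hp2' : p % 2 = 1 := Nat.odd_iff.mp hp2
  have hq2' : q % 2 = 1 := Nat.odd_iff.mp hq2
  have hp3 : 3 ≤ p := by have := hp.two_le; omega
  have hq3 : 3 ≤ q := by have := hq.two_le; omega
  have h2pq : 2 * p ∣ q - 1 := by
    have h2 : (2 : ℕ) ∣ q - 1 := by omega
    have hcop : Nat.Coprime 2 p :=
      (Nat.Prime.coprime_iff_not_dvd Nat.prime_two).mpr (by omega)
    exact Nat.Coprime.mul_dvd_of_dvd_of_dvd hcop h2 hpq
  have hq2p : 2 * p + 1 ≤ q := by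
    have := Nat.le_of_dvd (by omega) h2pq
    omega
  have hqne2 : q ≠ 2 := by omega
  have hqnep : q ≠ p := by
    intro hqp
    subst hqp
    have := Nat.le_of_dvd (by omega) hpq
    omega
  have hq4p : ¬ q ∣ 4 * p := by
    intro h
    rcases (Nat.Prime.dvd_mul hq).mp h with h4 | hp'
    · have h4' : q ∣ 2 ^ 2 := by norm_num; exact h4
      have := (Nat.prime_dvd_prime_iff_eq hq Nat.prime_two).mp (hq.dvd_of_dvd_pow h4')
      exact hqne2 this
    · exact hqnep ((Nat.prime_dvd_prime_iff_eq hq hp).mp hp')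
  -- the finite group
  haveI : Finite G'' := Nat.finite_of_card_ne_zero (by rw [hcard'']; positivity)
  -- elements of G'' corresponding to a, b
  set A : H := e.symm a with hA
  set B : H := e.symm b with hB
  set a'' : G'' := (A : G'') with ha''def
  set b'' : G'' := (B : G'') with hb''def
  have haA : orderOf A = q := by
    rw [← ha]; exact orderOf_injective e.symm.toMonoidHom e.symm.injective a
  have ha'' : orderOf a'' = q := by
    rw [← haA]; exact orderOf_injective H.subtype H.subtype_injective A
  have hrelH : B * A * B⁻¹ = A ^ r := by
    apply e.injective
    rw [map_mul, map_mul, map_inv, map_pow, hA, hB, MulEquiv.apply_symm_apply,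
      MulEquiv.apply_symm_apply, hrel]
  have hrel'' : b'' * a'' * b''⁻¹ = a'' ^ r := by
    have := congrArg (H.subtype) hrelH
    simpa using this
  -- Sylow q-subgroup containing a''
  have hPg : IsPGroup q (Subgroup.zpowers a'') :=
    IsPGroup.of_card (by rw [Nat.card_zpowers, ha'', pow_one])
  obtain ⟨P, hP⟩ := hPg.exists_le_sylow
  -- number of Sylow q-subgroups is 1
  have hmodeq : Nat.card (Sylow q G'') ≡ 1 [MOD q] := card_sylow_modEq_one q G''
  set n : ℕ := Nat.card (Sylow q G'') with hn
  have hmod1 : n % q = 1 := by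
    have h1 : (1 : ℕ) % q = 1 := Nat.mod_eq_of_lt (by omega)
    have := hmodeq
    unfold Nat.ModEq at this
    omega
  have hnq : ¬ q ∣ n := by
    intro hdvd
    have h0 : n % q = 0 := Nat.mod_eq_zero_of_dvd hdvd
    exact one_ne_zero (hmod1 ▸ h0)
  have hndvd : n ∣ 4 * p := by
    have h1 : n ∣ (P : Subgroup G'').index := Sylow.card_dvd_index P
    have h2 : (P : Subgroup G'').index ∣ Nat.card G'' := Subgroup.index_dvd_card _
    have h3 : n ∣ 4 * p * q := by rw [← hcard'']; exact h1.trans h2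
    have hcop : Nat.Coprime n q := ((hq.coprime_iff_not_dvd).mpr hnq).symm
    exact hcop.dvd_of_dvd_mul_right h3
  have hn1 : n = 1 := by
    have hnle : n ≤ 4 * p := Nat.le_of_dvd (by omega) hndvd
    have hdm := Nat.div_add_mod n q
    rw [hmod1] at hdm
    have hklt : n / q < 2 := by
      by_contra hk
      push_neg at hk
      have : q * 2 ≤ q * (n / q) := Nat.mul_le_mul_left q hk
      omega
    interval_cases h : n / q
    · omega
    · -- n = q + 1
      exfalso
      have hnqq : n = q + 1 := by omega
      rw [hnqq] at hndvd
      have hpq1 : ¬ p ∣ q + 1 := by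
        intro hd
        have : p ∣ (q + 1) - (q - 1) := Nat.dvd_sub hd hpq
        have h2' : (q + 1) - (q - 1) = 2 := by omega
        rw [h2'] at this
        have := Nat.le_of_dvd (by omega) this
        omega
      have hcop : Nat.Coprime (q + 1) p := ((hp.coprime_iff_not_dvd).mpr hpq1).symm
      have h4 : q + 1 ∣ 4 := hcop.dvd_of_dvd_mul_right hndvd
      have := Nat.le_of_dvd (by omega) h4
      omega
  -- the Sylow q-subgroup is normal
  haveI hnorm : (P : Subgroup G'').Normal := by
    have hidx := Sylow.card_eq_index_normalizer P
    rw [← hn, hn1] at hidx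
    exact Subgroup.normalizer_eq_top_iff.mp (Subgroup.index_eq_one.mp hidx.symm)
  -- card P = q
  have hcardP : Nat.card (P : Subgroup G'') = q := by
    obtain ⟨k, hk⟩ := P.2.exists_card_eq
    have hqP : q ∣ Nat.card (P : Subgroup G'') := by
      have := Subgroup.card_dvd_of_le hP
      rwa [Nat.card_zpowers, ha''] at this
    have hk1 : 1 ≤ k := by
      rcases Nat.eq_zero_or_pos k with h0 | h1
      · rw [h0, pow_zero] at hk
        rw [hk] at hqP
        have := Nat.le_of_dvd (by omega) hqP
        omega
      · exact h1
    have hk2 : k < 2 := by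
      by_contra hk2
      push_neg at hk2
      have hq2d : q ^ 2 ∣ Nat.card (P : Subgroup G'') := by
        rw [hk]; exact pow_dvd_pow q hk2
      have : q ^ 2 ∣ 4 * p * q := by
        rw [← hcard'']
        exact hq2d.trans (Subgroup.card_subgroup_dvd_card _)
      have : q ∣ 4 * p := by
        have h := this
        rw [pow_two] at h
        exact (Nat.mul_dvd_mul_iff_right (by omega : 0 < q)).mp h
      exact hq4p this
    have : k = 1 := by omega
    rw [this, pow_one] at hk
    exact hk
  haveI : IsCyclic (P : Subgroup G'') := isCyclic_of_prime_card hcardP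
  -- conjugation homomorphism
  set φ : G'' →* MulAut (P : Subgroup G'') := MulAut.conjNormal with hφ
  have hcomm : ∀ σ τ : MulAut ↥(P : Subgroup G''), σ * τ = τ * σ := by
    intro σ τ
    obtain ⟨m, hm⟩ := MonoidHom.map_cyclic σ.toMonoidHom
    obtain ⟨k, hk⟩ := MonoidHom.map_cyclic τ.toMonoidHom
    have hm' : ∀ g : (P : Subgroup G''), σ g = g ^ m := hm
    have hk' : ∀ g : (P : Subgroup G''), τ g = g ^ k := hk
    ext x
    simp only [MulAut.mul_apply]
    have e1 : σ (τ x) = x ^ (m * k) := by rw [hk' x, map_zpow, hm' x, ← zpow_mul]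
    have e2 : τ (σ x) = x ^ (k * m) := by rw [hm' x, map_zpow, hk' x, ← zpow_mul]
    rw [e1, e2, mul_comm]
  -- the subgroup of square-one automorphisms
  set K : Subgroup (MulAut (P : Subgroup G'')) :=
    { carrier := {σ | σ * σ = 1}
      one_mem' := by simp
      mul_mem' := by
        intro x y hx hy
        simp only [Set.mem_setOf_eq] at hx hy ⊢
        calc x * y * (x * y) = x * (y * x) * y := by group
          _ = x * (x * y) * y := by rw [hcomm y x]
          _ = (x * x) * (y * y) := by group
          _ = 1 := by rw [hx, hy, one_mul]
      inv_mem' := by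
        intro x hx
        simp only [Set.mem_setOf_eq] at hx ⊢
        rw [← mul_inv_rev, hx, inv_one] } with hK
  -- main claim
  have key : Subgroup.closure {g : G'' | orderOf g = 2} ≠ ⊤ := by
    intro htop
    have hb'' : b'' ∈ Subgroup.closure {g : G'' | orderOf g = 2} := by
      rw [htop]; exact Subgroup.mem_top b''
    have hmem : φ b'' ∈ Subgroup.map φ (Subgroup.closure {g : G'' | orderOf g = 2}) :=
      Subgroup.mem_map_of_mem φ hb''
    rw [MonoidHom.map_closure] at hmem
    have hsub : Subgroup.closure (φ '' {g : G'' | orderOf g = 2}) ≤ K := by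
      rw [Subgroup.closure_le]
      rintro _ ⟨g, hg, rfl⟩
      show φ g * φ g = 1
      have hg2 : g * g = 1 := by
        have := pow_orderOf_eq_one g
        rwa [hg, pow_two] at this
      rw [← map_mul, hg2, map_one]
    have hφb : φ b'' * φ b'' = 1 := hsub (hmem)
    -- evaluate at a''
    have haP : a'' ∈ (P : Subgroup G'') := hP (Subgroup.mem_zpowers a'')
    have hconj : ∀ x : (P : Subgroup G''), ((φ b'') x : G'') = b'' * x * b''⁻¹ := by
      intro x
      exact MulAut.conjNormal_apply b'' x
    have c1 : (φ b'') ⟨a'', haP⟩ = ⟨a'' ^ r, pow_mem haP r⟩ := by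
      apply Subtype.ext
      rw [hconj]
      exact hrel''
    have c2 : (φ b'') ⟨a'' ^ r, pow_mem haP r⟩ = ⟨a'' ^ (r * r), pow_mem haP (r * r)⟩ := by
      apply Subtype.ext
      rw [hconj]
      show b'' * a'' ^ r * b''⁻¹ = a'' ^ (r * r)
      have : b'' * a'' ^ r * b''⁻¹ = (b'' * a'' * b''⁻¹) ^ r := by
        have := map_pow (MulAut.conj b'') a'' r
        simpa [MulAut.conj_apply] using this.symm
      rw [this, hrel'', ← pow_mul]
    have heval := congrArg (fun σ : MulAut (P : Subgroup G'') => σ ⟨a'', haP⟩) hφb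
    simp only [MulAut.mul_apply, MulAut.one_apply] at heval
    rw [c1, c2] at heval
    have heq : a'' ^ (r * r) = a'' ^ 1 := by
      have := congrArg (fun x : (P : Subgroup G'') => (x : G'')) heval
      simpa using this
    have hmodq : r * r ≡ 1 [MOD q] := by
      rw [pow_eq_pow_iff_modEq, ha''] at heq
      exact heq
    have hzm : ((r * r : ℕ) : ZMod q) = ((1 : ℕ) : ZMod q) :=
      (ZMod.natCast_eq_natCast_iff _ _ _).mpr hmodq
    have hzm2 : (r : ZMod q) ^ 2 = 1 := by push_cast at hzm; rw [pow_two]; simpa using hzm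
    have hord : orderOf ((r : ZMod q)) ∣ 2 := orderOf_dvd_of_pow_eq_one hzm2
    rw [hr] at hord
    have := Nat.le_of_dvd (by omega) hord
    omega
  refine ⟨key, ?_⟩
  intro t₁ t₂ t₃ h1 h2 h3 htop
  apply key
  apply top_unique
  rw [← htop]
  apply Subgroup.closure_mono
  intro x hx
  rcases hx with rfl | rfl | rfl
  · exact h1
  · exact h2
  · exact h3
end

section
/- (Group-theoretic content of Theorem 4(3).) Let G'' be the group of order 4pq presented as ⟨a, c, t : a^q = c^{2p} = t² = 1, c a c⁻¹ = a^{−r}, t a t⁻¹ = a⁻¹, t c = c t⟩, i.e. ((ℤ/qℤ) ⋊ (ℤ/2pℤ)) ⋊ C_2 where c acts on ℤ/qℤ by multiplication by −r and t inverts a and commutes with c. Then the elements t a, a⁻¹ c and c⁻¹ t have orders 2, 2p and 2p respectively, their product (t a)(a⁻¹ c)(c⁻¹ t) equals 1, and they generate G''. (This yields a quasiplatonic surface with a group of automorphisms of order 4pq of signature (0; 2, 2p, 2p) in the closure of the family C_{4,0}.) -/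
private lemma order_eq_two_mul_prime {G : Type*} [Group G] {p : ℕ} (hp : p.Prime) (hp2 : Odd p)
    {x : G} (h2p : x ^ (2 * p) = 1) (h2 : x ^ 2 ≠ 1) (hpp : x ^ p ≠ 1) :
    orderOf x = 2 * p := by
  have hd : orderOf x ∣ 2 * p := orderOf_dvd_of_pow_eq_one h2p
  have hnd2 : ¬ orderOf x ∣ 2 := fun h => h2 (orderOf_dvd_iff_pow_eq_one.mp h)
  have hndp : ¬ orderOf x ∣ p := fun h => hpp (orderOf_dvd_iff_pow_eq_one.mp h)
  have h2d : 2 ∣ orderOf x := by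
    by_contra h
    have hcop : Nat.Coprime (orderOf x) 2 :=
      ((Nat.Prime.coprime_iff_not_dvd Nat.prime_two).mpr h).symm
    exact hndp (hcop.dvd_of_dvd_mul_left hd)
  have hpd : p ∣ orderOf x := by
    by_contra h
    have hcop : Nat.Coprime (orderOf x) p :=
      ((Nat.Prime.coprime_iff_not_dvd hp).mpr h).symm
    exact hnd2 (hcop.dvd_of_dvd_mul_right hd)
  have hcop2p : Nat.Coprime 2 p := by
    refine (Nat.Prime.coprime_iff_not_dvd Nat.prime_two).mpr ?_
    obtain ⟨k, hk⟩ := hp2; omega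
  exact Nat.dvd_antisymm hd (hcop2p.mul_dvd_of_dvd_of_dvd h2d hpd)

/-- Group-theoretic content of Theorem 4(3): in the group
`G'' = ⟨a, c, t : a^q = c^{2p} = t² = 1, c a c⁻¹ = a^{-r}, t a t⁻¹ = a⁻¹, tc = ct⟩` of
order `4pq`, the elements `ta`, `a⁻¹c`, `c⁻¹t` have orders `2`, `2p`, `2p`, their product
is `1`, and they generate `G''`. -/
theorem quasiplatonic_2_2p_2p
    (p q : ℕ) (hp : p.Prime) (hq : q.Prime)
    (hp2 : Odd p) (hq2 : Odd q) (hpq : p ∣ q - 1) (r : ℕ)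
    (hr : orderOf (r : ZMod q) = p)
    {G'' : Type*} [Group G''] (a c t : G'')
    (ha : orderOf a = q) (hc : orderOf c = 2 * p) (ht : orderOf t = 2)
    (hrel₁ : c * a * c⁻¹ = (a ^ r)⁻¹)
    (hrel₂ : t * a * t⁻¹ = a⁻¹)
    (hrel₃ : t * c = c * t)
    (hgen : Subgroup.closure ({a, c, t} : Set G'') = ⊤)
    (hcard : Nat.card G'' = 4 * p * q) :
    orderOf (t * a) = 2 ∧ orderOf (a⁻¹ * c) = 2 * p ∧ orderOf (c⁻¹ * t) = 2 * p ∧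
    (t * a) * (a⁻¹ * c) * (c⁻¹ * t) = 1 ∧
    Subgroup.closure ({t * a, a⁻¹ * c, c⁻¹ * t} : Set G'') = ⊤ := by
  haveI : Fact q.Prime := ⟨hq⟩
  haveI : Fact p.Prime := ⟨hp⟩
  have hpne2 : p ≠ 2 := by obtain ⟨k, hk⟩ := hp2; omega
  have hqne2 : q ≠ 2 := by obtain ⟨k, hk⟩ := hq2; omega
  have hppos : 0 < p := hp.pos
  -- basic consequences of the order hypotheses
  have ht2 : t * t = 1 := by
    have := pow_orderOf_eq_one t; rwa [ht, pow_two] at this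
  have htinv : t⁻¹ = t := inv_eq_of_mul_eq_one_left ht2
  have hc2p : c ^ (2 * p) = 1 := by rw [← hc]; exact pow_orderOf_eq_one c
  have hcp_ne : c ^ p ≠ 1 := by
    intro h
    have h2 : orderOf c ∣ p := orderOf_dvd_of_pow_eq_one h
    rw [hc] at h2
    have := Nat.le_of_dvd hppos h2
    omega
  have hc2_ne : c ^ 2 ≠ 1 := by
    intro h
    have h2 : orderOf c ∣ 2 := orderOf_dvd_of_pow_eq_one h
    rw [hc] at h2
    have := Nat.le_of_dvd (by norm_num) h2
    have := hp.two_le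
    omega
  -- arithmetic mod q
  have hrp : (r : ZMod q) ^ p = 1 := by rw [← hr]; exact pow_orderOf_eq_one _
  have hrne0 : (r : ZMod q) ≠ 0 := by
    intro h; rw [h, zero_pow hp.ne_zero] at hrp; exact zero_ne_one hrp
  have hrne1 : (r : ZMod q) ≠ 1 := by
    intro h; rw [h, orderOf_one] at hr; exact hp.one_lt.ne' hr.symm
  have hSne1 : (-(r : ZMod q)) ≠ 1 := by
    intro h
    have h2 : (r : ZMod q) ^ 2 = 1 := by
      have : (r : ZMod q) = -1 := by linear_combination -h
      rw [this]; ring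
    have h3 : orderOf (r : ZMod q) ∣ 2 := orderOf_dvd_of_pow_eq_one h2
    rw [hr] at h3
    have := Nat.le_of_dvd (by norm_num) h3
    have := hp.two_le
    omega
  -- a^n = 1 whenever n ≡ 0 mod q
  have hamod : ∀ n : ℤ, ((n : ZMod q) = 0) → a ^ n = 1 := by
    intro n h
    refine orderOf_dvd_iff_zpow_eq_one.mp ?_
    rw [ha]
    exact (ZMod.intCast_zmod_eq_zero_iff_dvd n q).mp h
  -- conjugation formulas
  have hs1 : c * a * c⁻¹ = a ^ (-(r : ℤ)) := by
    rw [hrel₁, ← zpow_natCast, ← zpow_neg]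
  have hconj : ∀ n : ℤ, c * a ^ n * c⁻¹ = a ^ (-(r : ℤ) * n) := by
    intro n
    calc c * a ^ n * c⁻¹ = (c * a * c⁻¹) ^ n := by rw [conj_zpow]
      _ = (a ^ (-(r : ℤ))) ^ n := by rw [hs1]
      _ = a ^ (-(r : ℤ) * n) := by rw [← zpow_mul]
  have hconjk : ∀ k : ℕ, ∀ n : ℤ, c ^ k * a ^ n * (c ^ k)⁻¹ = a ^ ((-(r : ℤ)) ^ k * n) := by
    intro k
    induction k with
    | zero => intro n; simp
    | succ k ih =>
      intro n
      have hstep : c ^ (k + 1) = c * c ^ k := by rw [pow_succ']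
      rw [hstep, mul_inv_rev]
      calc c * c ^ k * a ^ n * ((c ^ k)⁻¹ * c⁻¹)
          = c * (c ^ k * a ^ n * (c ^ k)⁻¹) * c⁻¹ := by group
        _ = c * a ^ ((-(r : ℤ)) ^ k * n) * c⁻¹ := by rw [ih n]
        _ = a ^ (-(r : ℤ) * ((-(r : ℤ)) ^ k * n)) := hconj _
        _ = a ^ ((-(r : ℤ)) ^ (k + 1) * n) := by
            rw [show -(r : ℤ) * ((-(r : ℤ)) ^ k * n) = (-(r : ℤ)) ^ (k + 1) * n by ring]
  -- powers of a⁻¹ * c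
  have key : ∀ k : ℕ, ∃ m : ℤ, (a⁻¹ * c) ^ k = a ^ m * c ^ k ∧
      (m : ZMod q) * ((-(r : ZMod q)) - 1) = 1 - (-(r : ZMod q)) ^ k := by
    intro k
    induction k with
    | zero => exact ⟨0, by simp, by simp⟩
    | succ k ih =>
      obtain ⟨m, hm, hmod⟩ := ih
      refine ⟨m - (-(r : ℤ)) ^ k, ?_, ?_⟩
      · have h1 : c ^ k * a⁻¹ = a ^ (-((-(r : ℤ)) ^ k)) * c ^ k := by
          have h0 := hconjk k (-1)
          have h2 : c ^ k * a ^ (-1 : ℤ) * (c ^ k)⁻¹ * c ^ k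
              = a ^ ((-(r : ℤ)) ^ k * (-1)) * c ^ k := by rw [h0]
          rw [inv_mul_cancel_right, zpow_neg_one] at h2
          rw [h2]
          congr 2
          ring
        calc (a⁻¹ * c) ^ (k + 1) = (a⁻¹ * c) ^ k * (a⁻¹ * c) := pow_succ _ _
          _ = a ^ m * (c ^ k * a⁻¹) * c := by rw [hm]; simp only [mul_assoc]
          _ = a ^ m * (a ^ (-((-(r : ℤ)) ^ k)) * c ^ k) * c := by rw [h1]
          _ = a ^ (m - (-(r : ℤ)) ^ k) * c ^ (k + 1) := by
              rw [pow_succ, sub_eq_add_neg, zpow_add]; simp only [mul_assoc]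
      · push_cast
        linear_combination hmod
  -- (a⁻¹ c)^(2p) = 1
  obtain ⟨m2p, h2peq, h2pmod⟩ := key (2 * p)
  have hS2p : (-(r : ZMod q)) ^ (2 * p) = 1 := by
    rw [Even.neg_pow (even_two_mul p), mul_comm, pow_mul, hrp, one_pow]
  have hy2p : (a⁻¹ * c) ^ (2 * p) = 1 := by
    have hm0 : (m2p : ZMod q) = 0 := by
      have hne : (-(r : ZMod q)) - 1 ≠ 0 := sub_ne_zero.mpr hSne1
      have h0 : (m2p : ZMod q) * ((-(r : ZMod q)) - 1) = 0 := by rw [h2pmod, hS2p]; ring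
      exact (mul_eq_zero.mp h0).resolve_right hne
    rw [h2peq, hc2p, mul_one, hamod m2p hm0]
  -- (a⁻¹ c)^p ≠ 1
  have hyp_ne : (a⁻¹ * c) ^ p ≠ 1 := by
    obtain ⟨m, hm, _⟩ := key p
    intro h
    rw [hm] at h
    have hcp : c ^ p = (a ^ m)⁻¹ := (inv_eq_of_mul_eq_one_right h).symm
    have hocp : orderOf (c ^ p) = 2 := by
      refine orderOf_eq_prime ?_ hcp_ne
      rw [← pow_mul, mul_comm]; exact hc2p
    have hq1 : (c ^ p) ^ q = 1 := by
      rw [hcp, ← zpow_natCast, ← zpow_neg, ← zpow_mul]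
      exact hamod _ (by push_cast; simp [ZMod.natCast_self])
    have h2q : (2 : ℕ) ∣ q := by
      have := orderOf_dvd_of_pow_eq_one hq1
      rwa [hocp] at this
    obtain ⟨k, hk⟩ := hq2; omega
  -- (a⁻¹ c)^2 ≠ 1
  have hy2_ne : (a⁻¹ * c) ^ 2 ≠ 1 := by
    obtain ⟨m, hm, _⟩ := key 2
    intro h
    rw [hm] at h
    have hcp : c ^ 2 = (a ^ m)⁻¹ := (inv_eq_of_mul_eq_one_right h).symm
    have hocp : orderOf (c ^ 2) = p := by
      refine orderOf_eq_prime ?_ hc2_ne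
      rw [← pow_mul]; exact hc2p
    have hq1 : (c ^ 2) ^ q = 1 := by
      rw [hcp, ← zpow_natCast, ← zpow_neg, ← zpow_mul]
      exact hamod _ (by push_cast; simp [ZMod.natCast_self])
    have hpq' : p ∣ q := by
      have := orderOf_dvd_of_pow_eq_one hq1
      rwa [hocp] at this
    have hd1 : p ∣ q - (q - 1) := Nat.dvd_sub hpq' hpq
    have hq2le := hq.two_le
    have hd1' : p ∣ 1 := by rwa [show q - (q - 1) = 1 by omega] at hd1
    have := Nat.le_of_dvd one_pos hd1'
    have := hp.two_le
    omega
  have hy : orderOf (a⁻¹ * c) = 2 * p := order_eq_two_mul_prime hp hp2 hy2p hy2_ne hyp_ne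
  -- order of t * a
  have hta : orderOf (t * a) = 2 := by
    haveI : Fact (Nat.Prime 2) := ⟨Nat.prime_two⟩
    refine orderOf_eq_prime ?_ ?_
    · have h1 : (t * a) ^ 2 = t * a * t⁻¹ * a := by rw [pow_two, htinv, ← mul_assoc]
      rw [h1, hrel₂, inv_mul_cancel]
    · intro h
      have h2 : a = t := by
        have h3 : a = t⁻¹ := eq_inv_of_mul_eq_one_right h
        rw [h3, htinv]
      rw [h2, ht] at ha
      exact hqne2 ha.symm
  -- commuting c⁻¹ and t
  have hcomm : Commute c⁻¹ t := by
    have h0 : Commute t c := hrel₃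
    exact h0.symm.inv_left
  have hzpow : ∀ k : ℕ, (c⁻¹ * t) ^ k = (c ^ k)⁻¹ * t ^ k := by
    intro k; rw [hcomm.mul_pow, inv_pow]
  -- t ≠ c^p (uses the cardinality)
  have htcp : t ≠ c ^ p := by
    intro hct
    haveI : Finite G'' := Nat.finite_of_card_ne_zero (by
      rw [hcard]
      exact Nat.mul_ne_zero (Nat.mul_ne_zero (by norm_num) hp.pos.ne') hq.pos.ne')
    -- c⁻¹ a c ∈ zpowers a
    have hSk : ∃ k : ℤ, c⁻¹ * a * c = a ^ k := by
      set ι : ZMod q := (-(r : ZMod q))⁻¹ with hι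
      refine ⟨(ι.val : ℤ), ?_⟩
      have h1 : c * a ^ (ι.val : ℤ) * c⁻¹ = a ^ (-(r : ℤ) * (ι.val : ℤ)) := hconj _
      have h2 : a ^ (-(r : ℤ) * (ι.val : ℤ)) = a := by
        have h3 : a ^ (-(r : ℤ) * (ι.val : ℤ) - 1) = 1 := by
          refine hamod _ ?_
          have h4 : (-(r : ZMod q)) * ι = 1 := mul_inv_cancel₀ (neg_ne_zero.mpr hrne0)
          push_cast
          rw [ZMod.natCast_val, ZMod.cast_id]
          linear_combination h4
        calc a ^ (-(r : ℤ) * (ι.val : ℤ))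
            = a ^ (-(r : ℤ) * (ι.val : ℤ) - 1) * a ^ (1 : ℤ) := by
              rw [← zpow_add]; congr 1; ring
          _ = a := by rw [h3, one_mul, zpow_one]
      rw [h2] at h1
      calc c⁻¹ * a * c = c⁻¹ * (c * a ^ (ι.val : ℤ) * c⁻¹) * c := by rw [h1]
        _ = a ^ (ι.val : ℤ) := by group
    obtain ⟨k, hk⟩ := hSk
    -- zpowers a is normal
    have hN : (Subgroup.zpowers a).Normal := by
      rw [← Subgroup.normalizer_eq_top_iff, eq_top_iff, ← hgen]
      refine (Subgroup.closure_le _).mpr ?_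
      intro x hx
      simp only [Set.mem_insert_iff, Set.mem_singleton_iff] at hx
      have hmem : ∀ y : G'', y ∈ Subgroup.normalizer (Subgroup.zpowers a : Set G'') →
          y ∈ (↑(Subgroup.normalizer (Subgroup.zpowers a : Set G'')) : Set G'') := fun y hy => hy
      rcases hx with rfl | rfl | rfl
      · refine hmem _ (Subgroup.mem_normalizer_iff.mpr fun h => ⟨fun hh => ?_, fun hh => ?_⟩)
        · obtain ⟨n, rfl⟩ := Subgroup.mem_zpowers_iff.mp hh
          exact Subgroup.mem_zpowers_iff.mpr ⟨n, by group⟩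
        · obtain ⟨n, hn⟩ := Subgroup.mem_zpowers_iff.mp hh
          refine Subgroup.mem_zpowers_iff.mpr ⟨n, ?_⟩
          have h1 : h = x⁻¹ * (x * h * x⁻¹) * x := by group
          rw [h1, ← hn]; group
      · refine hmem _ (Subgroup.mem_normalizer_iff.mpr fun h => ⟨fun hh => ?_, fun hh => ?_⟩)
        · obtain ⟨n, rfl⟩ := Subgroup.mem_zpowers_iff.mp hh
          exact Subgroup.mem_zpowers_iff.mpr ⟨-(r : ℤ) * n, (hconj n).symm⟩
        · obtain ⟨n, hn⟩ := Subgroup.mem_zpowers_iff.mp hh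
          refine Subgroup.mem_zpowers_iff.mpr ⟨k * n, ?_⟩
          have h1 : h = x⁻¹ * (x * h * x⁻¹) * x := by group
          have h2 : x⁻¹ * a ^ n * x = a ^ (k * n) := by
            calc x⁻¹ * a ^ n * x = (x⁻¹ * a * (x⁻¹)⁻¹) ^ n := by rw [conj_zpow, inv_inv]
              _ = (a ^ k) ^ n := by rw [inv_inv, hk]
              _ = a ^ (k * n) := by rw [← zpow_mul]
          rw [h1, ← hn, h2]
      · refine hmem _ (Subgroup.mem_normalizer_iff.mpr fun h => ⟨fun hh => ?_, fun hh => ?_⟩)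
        · obtain ⟨n, rfl⟩ := Subgroup.mem_zpowers_iff.mp hh
          refine Subgroup.mem_zpowers_iff.mpr ⟨-n, ?_⟩
          have e1 : x * a ^ n * x⁻¹ = a ^ (-n) := by
            calc x * a ^ n * x⁻¹ = (x * a * x⁻¹) ^ n := by rw [conj_zpow]
              _ = (a⁻¹) ^ n := by rw [hrel₂]
              _ = a ^ (-n) := by rw [inv_zpow, ← zpow_neg]
          exact e1.symm
        · obtain ⟨n, hn⟩ := Subgroup.mem_zpowers_iff.mp hh
          refine Subgroup.mem_zpowers_iff.mpr ⟨-n, ?_⟩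
          have h1 : h = x⁻¹ * (x * h * x⁻¹) * x := by group
          have h2 : x⁻¹ * a ^ n * x = a ^ (-n) := by
            have e1 : x * a ^ n * x⁻¹ = a ^ (-n) := by
              calc x * a ^ n * x⁻¹ = (x * a * x⁻¹) ^ n := by rw [conj_zpow]
                _ = (a⁻¹) ^ n := by rw [hrel₂]
                _ = a ^ (-n) := by rw [inv_zpow, ← zpow_neg]
            calc x⁻¹ * a ^ n * x = x * a ^ n * x⁻¹ := by rw [htinv]
              _ = a ^ (-n) := e1
          rw [h1, ← hn, h2]
    -- quotient by zpowers a
    set N := Subgroup.zpowers a with hNdef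
    have hNcard : Nat.card N = q := by rw [hNdef, Nat.card_zpowers, ha]
    have hGcard : Nat.card G'' = Nat.card (G'' ⧸ N) * Nat.card N :=
      Subgroup.card_eq_card_quotient_mul_card_subgroup N
    have hQcard : Nat.card (G'' ⧸ N) = 4 * p := by
      rw [hNcard, hcard] at hGcard
      have hq0 : 0 < q := hq.pos
      exact Nat.eq_of_mul_eq_mul_right hq0 (by omega)
    set φ := QuotientGroup.mk' N with hφ
    have hφa : φ a = 1 := (QuotientGroup.eq_one_iff a).mpr (Subgroup.mem_zpowers a)
    have htop : Subgroup.zpowers (φ c) = ⊤ := by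
      rw [eq_top_iff, ← Subgroup.map_top_of_surjective φ (QuotientGroup.mk'_surjective N),
        ← hgen, MonoidHom.map_closure]
      refine (Subgroup.closure_le _).mpr ?_
      rintro x ⟨y, hy, rfl⟩
      simp only [Set.mem_insert_iff, Set.mem_singleton_iff] at hy
      rcases hy with rfl | rfl | rfl
      · rw [hφa]; exact one_mem _
      · exact Subgroup.mem_zpowers _
      · rw [hct, map_pow]
        exact SetLike.mem_coe.mpr (pow_mem (Subgroup.mem_zpowers (φ c)) p)
    have hQord : Nat.card (G'' ⧸ N) = orderOf (φ c) := by
      rw [← Nat.card_zpowers, htop, Subgroup.card_top]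
    have hdvd : orderOf (φ c) ∣ 2 * p := by
      have := orderOf_map_dvd φ c
      rwa [hc] at this
    rw [hQord] at hQcard
    have := Nat.le_of_dvd (by omega) hdvd
    omega
  -- order of c⁻¹ * t
  have ht2p : t ^ (2 * p) = 1 := by
    refine orderOf_dvd_iff_pow_eq_one.mp ?_
    rw [ht]; exact dvd_mul_right 2 p
  have hz2p : (c⁻¹ * t) ^ (2 * p) = 1 := by
    rw [hzpow, hc2p, inv_one, one_mul, ht2p]
  have hz2 : (c⁻¹ * t) ^ 2 ≠ 1 := by
    rw [hzpow, pow_two t, ht2, mul_one]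
    intro h
    exact hc2_ne (inv_eq_one.mp h)
  have htp : t ^ p = t := by
    obtain ⟨j, hj⟩ := hp2
    rw [hj, pow_add, pow_mul, pow_two, ht2, one_pow, pow_one, one_mul]
  have hzp : (c⁻¹ * t) ^ p ≠ 1 := by
    rw [hzpow, htp]
    intro h
    exact htcp (inv_mul_eq_one.mp h).symm
  have hz : orderOf (c⁻¹ * t) = 2 * p := order_eq_two_mul_prime hp hp2 hz2p hz2 hzp
  -- product is 1
  have hprod : (t * a) * (a⁻¹ * c) * (c⁻¹ * t) = 1 := by
    have h1 : (t * a) * (a⁻¹ * c) * (c⁻¹ * t) = t * t := by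
      simp only [mul_assoc, mul_inv_cancel_left]
    rw [h1, ht2]
  -- generation
  have hgen' : Subgroup.closure ({t * a, a⁻¹ * c, c⁻¹ * t} : Set G'') = ⊤ := by
    set K := Subgroup.closure ({t * a, a⁻¹ * c, c⁻¹ * t} : Set G'') with hK
    have hxK : t * a ∈ K := Subgroup.subset_closure (by simp)
    have hyK : a⁻¹ * c ∈ K := Subgroup.subset_closure (by simp)
    have hzK : c⁻¹ * t ∈ K := Subgroup.subset_closure (by simp)
    have huK : c * a ∈ K := by
      have h1 : (c⁻¹ * t)⁻¹ * (t * a) = c * a := by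
        rw [mul_inv_rev, inv_inv, htinv, hrel₃, mul_assoc c t, ← mul_assoc t t, ht2, one_mul]
      rw [← h1]; exact mul_mem (inv_mem hzK) hxK
    have hwK : a ^ ((1 : ℤ) - (r : ℤ)) ∈ K := by
      have h1 : (c * a) * (a⁻¹ * c)⁻¹ = a ^ ((1 : ℤ) - (r : ℤ)) := by
        have h2 : (c * a) * (a⁻¹ * c)⁻¹ = (c * a * c⁻¹) * a := by
          rw [mul_inv_rev, inv_inv]; simp only [mul_assoc]
        have h3 : a ^ (-(r : ℤ)) * a ^ (1 : ℤ) = a ^ ((1 : ℤ) - (r : ℤ)) := by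
          rw [← zpow_add]; congr 1; ring
        rw [h2, hs1, ← h3, zpow_one]
      rw [← h1]; exact mul_mem huK (inv_mem hyK)
    have haK : a ∈ K := by
      have h1mr : ((1 : ZMod q) - (r : ZMod q)) ≠ 0 := by
        intro h
        apply hrne1
        linear_combination -h
      set ι : ZMod q := ((1 : ZMod q) - (r : ZMod q))⁻¹ with hι
      have h2 : (a ^ ((1 : ℤ) - (r : ℤ))) ^ (ι.val : ℤ) = a := by
        rw [← zpow_mul]
        have h3 : a ^ (((1 : ℤ) - (r : ℤ)) * (ι.val : ℤ) - 1) = 1 := by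
          refine hamod _ ?_
          have h4 : ((1 : ZMod q) - (r : ZMod q)) * ι = 1 := mul_inv_cancel₀ h1mr
          push_cast
          rw [ZMod.natCast_val, ZMod.cast_id]
          linear_combination h4
        calc a ^ (((1 : ℤ) - (r : ℤ)) * (ι.val : ℤ))
            = a ^ (((1 : ℤ) - (r : ℤ)) * (ι.val : ℤ) - 1) * a ^ (1 : ℤ) := by
              rw [← zpow_add]; congr 1; ring
          _ = a := by rw [h3, one_mul, zpow_one]
      rw [← h2]
      exact Subgroup.zpow_mem _ hwK _
    have hcK : c ∈ K := by
      have h1 : a * (a⁻¹ * c) = c := by rw [← mul_assoc, mul_inv_cancel, one_mul]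
      rw [← h1]; exact mul_mem haK hyK
    have htK : t ∈ K := by
      have h1 : (t * a) * a⁻¹ = t := mul_inv_cancel_right t a
      rw [← h1]; exact mul_mem hxK (inv_mem haK)
    rw [eq_top_iff, ← hgen]
    refine (Subgroup.closure_le _).mpr ?_
    intro x hx
    simp only [Set.mem_insert_iff, Set.mem_singleton_iff] at hx
    rcases hx with rfl | rfl | rfl
    · exact haK
    · exact hcK
    · exact htK
  exact ⟨hta, hy, hz, hprod, hgen'⟩
end

section
/- (Normal form for signature (0; p,p,p,q), Theorem 5(1).) Suppose x_1, x_2, x_3, y_1 ∈ G_{p,q} are such that x_1, x_2, x_3 have order p, y_1 has order q, x_1 x_2 x_3 y_1 = 1, and these four elements generate G_{p,q}. Then there exist an automorphism ω of G_{p,q}, an element l ∈ ℤ/qℤ and nonzero n_1, n_2 ∈ ℤ/pℤ with n_1 + n_2 ≠ 0 such that ω(x_1) = a^{−1−l·r^{n_1}} b^{n_1}, ω(x_2) = a^l b^{n_2}, ω(x_3) = b^{−n_1−n_2} and ω(y_1) = a (here r^{n_1} is well defined mod q since r has order p mod q). Consequently, the number of orbits of such quadruples under the entrywise action of Aut(G_{p,q})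 is at most q(p − 1)(p − 2). -/
namespace NFPPPQ

def E {G : Type*} [Group G] (q p : ℕ) (a b : G) (z : ZMod q × ZMod p) : G :=
  a ^ z.1.val * b ^ z.2.val

noncomputable def sigma (q p r : ℕ) [Fact q.Prime] (j : ZMod p) : ZMod q :=
  ((r : ZMod q) ^ j.val - 1) / ((r : ZMod q) - 1)

def mulEquivOfEquiv {G : Type*} [Group G] {α : Type*} (e : α ≃ G) (ψ : α ≃ α)
    (h : ∀ g g' : G, e (ψ (e.symm (g * g'))) = e (ψ (e.symm g)) * e (ψ (e.symm g'))) :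
    G ≃* G :=
  { e.symm.trans (ψ.trans e) with map_mul' := h }

lemma mulEquivOfEquiv_apply {G : Type*} [Group G] {α : Type*} (e : α ≃ G) (ψ : α ≃ α) (h) (g : G) :
    mulEquivOfEquiv e ψ h g = e (ψ (e.symm g)) := rfl

noncomputable def psiAff (q p : ℕ) [Fact q.Prime] (t c : ZMod q) (ht : t ≠ 0)
    (σ : ZMod p → ZMod q) : (ZMod q × ZMod p) ≃ (ZMod q × ZMod p) where
  toFun z := (t * z.1 + c * σ z.2, z.2)
  invFun z := (t⁻¹ * (z.1 - c * σ z.2), z.2)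
  left_inv z := by
    obtain ⟨x, y⟩ := z
    simp only [Prod.mk.injEq]
    constructor
    · field_simp
      ring
    · trivial
  right_inv z := by
    obtain ⟨x, y⟩ := z
    simp only [Prod.mk.injEq]
    constructor
    · field_simp
      ring
    · trivial

lemma psiAff_apply (q p : ℕ) [Fact q.Prime] (t c : ZMod q) (ht : t ≠ 0)
    (σ : ZMod p → ZMod q) (z : ZMod q × ZMod p) :
    psiAff q p t c ht σ z = (t * z.1 + c * σ z.2, z.2) := rfl

end NFPPPQ

open NFPPPQ Finset

/-- Normal form for signature `(0; p,p,p,q)` (Theorem 5(1)): every generating quadruple is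
equivalent, under `Aut(G_{p,q})`, to a normal form
`(a^{-1-l r^{n₁}} b^{n₁}, a^l b^{n₂}, b^{-n₁-n₂}, a)`; hence there are at most
`q(p-1)(p-2)` orbits. -/
theorem normal_form_signature_pppq
    {G : Type*} [Group G] (p q : ℕ) (hp : p.Prime) (hq : q.Prime)
    (hp2 : Odd p) (hq2 : Odd q) (hpq : p ∣ q - 1) (r : ℕ)
    (hr : orderOf (r : ZMod q) = p) (a b : G)
    (ha : orderOf a = q) (hb : orderOf b = p)
    (hrel : b * a * b⁻¹ = a ^ r)
    (hgen : Subgroup.closure ({a, b} : Set G) = ⊤)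
    (hcard : Nat.card G = p * q) :
    (∀ x₁ x₂ x₃ y₁ : G, orderOf x₁ = p → orderOf x₂ = p → orderOf x₃ = p →
      orderOf y₁ = q →
      x₁ * x₂ * x₃ * y₁ = 1 →
      Subgroup.closure ({x₁, x₂, x₃, y₁} : Set G) = ⊤ →
      ∃ (ω : G ≃* G) (l : ZMod q) (n₁ n₂ : ZMod p),
        n₁ ≠ 0 ∧ n₂ ≠ 0 ∧ n₁ + n₂ ≠ 0 ∧
        ω x₁ = a ^ (-1 - l * (r : ZMod q) ^ n₁.val).val * b ^ n₁.val ∧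
        ω x₂ = a ^ l.val * b ^ n₂.val ∧
        ω x₃ = b ^ (-n₁ - n₂).val ∧
        ω y₁ = a) ∧
    (∃ T : Finset (G × G × G × G), T.card ≤ q * (p - 1) * (p - 2) ∧
      ∀ x₁ x₂ x₃ y₁ : G, orderOf x₁ = p → orderOf x₂ = p → orderOf x₃ = p →
        orderOf y₁ = q →
        x₁ * x₂ * x₃ * y₁ = 1 →
        Subgroup.closure ({x₁, x₂, x₃, y₁} : Set G) = ⊤ →
        ∃ ω : G ≃* G, (ω x₁, ω x₂, ω x₃, ω y₁) ∈ T) := by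
  classical
  haveI hqF : Fact q.Prime := ⟨hq⟩
  haveI hpF : Fact p.Prime := ⟨hp⟩
  have hq1 : 1 < q := hq.one_lt
  have hp1 : 1 < p := hp.one_lt
  haveI : Fact (1 < q) := ⟨hq1⟩
  have hplt : p < q := lt_of_le_of_lt (Nat.le_of_dvd (by omega) hpq) (by omega)
  have hGfin : Finite G := Nat.finite_of_card_ne_zero (by rw [hcard]; exact Nat.mul_ne_zero (by omega) (by omega))
  set rr : ZMod q := (r : ZMod q) with hrr
  -- powers of a, b, rr depend only on residues
  have key_a : ∀ (n : ℕ) (x : ZMod q), (n : ZMod q) = x → a ^ n = a ^ x.val := by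
    intro n x hx
    rw [← hx, ZMod.val_natCast, ← ha, pow_mod_orderOf]
  have key_b : ∀ (n : ℕ) (x : ZMod p), (n : ZMod p) = x → b ^ n = b ^ x.val := by
    intro n x hx
    rw [← hx, ZMod.val_natCast, ← hb, pow_mod_orderOf]
  have key_r : ∀ (n : ℕ) (x : ZMod p), (n : ZMod p) = x → rr ^ n = rr ^ x.val := by
    intro n x hx
    rw [← hx, ZMod.val_natCast, ← hr, pow_mod_orderOf]
  have hval_cast : ∀ x : ZMod q, ((x.val : ℕ) : ZMod q) = x := by
    intro x; simp [ZMod.natCast_val, ZMod.cast_id]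
  have hval_castp : ∀ x : ZMod p, ((x.val : ℕ) : ZMod p) = x := by
    intro x; simp [ZMod.natCast_val, ZMod.cast_id]
  -- conjugation formula
  have hconj1 : ∀ m : ℕ, b * a ^ m = a ^ (m * r) * b := by
    intro m
    have h1 : (b * a * b⁻¹) ^ m = b * a ^ m * b⁻¹ := conj_pow
    rw [hrel, ← pow_mul, mul_comm r m] at h1
    rw [h1]
    group
  have hconj : ∀ (j m : ℕ), b ^ j * a ^ m = a ^ (m * r ^ j) * b ^ j := by
    intro j
    induction j with
    | zero => intro m; simp
    | succ n ih =>
      intro m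
      calc b ^ (n + 1) * a ^ m = b ^ n * (b * a ^ m) := by rw [pow_succ]; group
        _ = b ^ n * a ^ (m * r) * b := by rw [hconj1]; group
        _ = a ^ (m * r * r ^ n) * b ^ n * b := by rw [ih]
        _ = a ^ (m * r ^ (n + 1)) * b ^ (n + 1) := by
            rw [pow_succ]; ring_nf; group
  -- multiplication formula for E
  have hEmul : ∀ z w : ZMod q × ZMod p,
      E q p a b z * E q p a b w = E q p a b (z.1 + w.1 * rr ^ z.2.val, z.2 + w.2) := by
    intro ⟨i, j⟩ ⟨k, l⟩
    show a ^ i.val * b ^ j.val * (a ^ k.val * b ^ l.val) = _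
    have h1 : b ^ j.val * a ^ k.val = a ^ (k.val * r ^ j.val) * b ^ j.val := hconj _ _
    have h2 : a ^ (i.val + k.val * r ^ j.val) = a ^ ((i + k * rr ^ j.val).val) := by
      apply key_a
      push_cast
      rw [hval_cast, hval_cast]
    have h3 : b ^ (j.val + l.val) = b ^ ((j + l).val) := by
      apply key_b
      push_cast
      rw [hval_castp, hval_castp]
    calc a ^ i.val * b ^ j.val * (a ^ k.val * b ^ l.val)
        = a ^ i.val * (b ^ j.val * a ^ k.val) * b ^ l.val := by group
      _ = a ^ i.val * (a ^ (k.val * r ^ j.val) * b ^ j.val) * b ^ l.val := by rw [h1]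
      _ = a ^ (i.val + k.val * r ^ j.val) * b ^ (j.val + l.val) := by
          rw [pow_add, pow_add]; group
      _ = _ := by rw [h2, h3]; rfl
  have hE00 : E q p a b (0, 0) = 1 := by
    show a ^ (0 : ZMod q).val * b ^ (0 : ZMod p).val = 1
    simp [ZMod.val_zero]
  have hE0j : ∀ j : ZMod p, E q p a b (0, j) = b ^ j.val := by
    intro j
    show a ^ (0 : ZMod q).val * b ^ j.val = _
    simp [ZMod.val_zero]
  have hEj0 : ∀ i : ZMod q, E q p a b (i, 0) = a ^ i.val := by
    intro i
    show a ^ i.val * b ^ (0 : ZMod p).val = _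
    simp [ZMod.val_zero]
  -- injectivity of E
  have hcop : Nat.Coprime q p := (Nat.coprime_primes hq hp).mpr (by omega)
  have hEinj : Function.Injective (E q p a b) := by
    rintro ⟨i, j⟩ ⟨k, l⟩ h
    have heq : a ^ i.val * b ^ j.val = a ^ k.val * b ^ l.val := h
    have hmain : (a ^ k.val)⁻¹ * a ^ i.val = b ^ l.val * (b ^ j.val)⁻¹ := by
      calc (a ^ k.val)⁻¹ * a ^ i.val
          = (a ^ k.val)⁻¹ * (a ^ i.val * b ^ j.val) * (b ^ j.val)⁻¹ := by group
        _ = (a ^ k.val)⁻¹ * (a ^ k.val * b ^ l.val) * (b ^ j.val)⁻¹ := by rw [heq]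
        _ = b ^ l.val * (b ^ j.val)⁻¹ := by group
    set g : G := (a ^ k.val)⁻¹ * a ^ i.val with hgdef
    have hga : g ∈ Subgroup.zpowers a :=
      Subgroup.mul_mem _ (Subgroup.inv_mem _ (Subgroup.pow_mem _ (Subgroup.mem_zpowers a) _))
        (Subgroup.pow_mem _ (Subgroup.mem_zpowers a) _)
    have hgb : g ∈ Subgroup.zpowers b := by
      rw [hmain]
      exact Subgroup.mul_mem _ (Subgroup.pow_mem _ (Subgroup.mem_zpowers b) _)
        (Subgroup.inv_mem _ (Subgroup.pow_mem _ (Subgroup.mem_zpowers b) _))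
    have hdq : orderOf g ∣ q := ha ▸ orderOf_dvd_of_mem_zpowers hga
    have hdp : orderOf g ∣ p := hb ▸ orderOf_dvd_of_mem_zpowers hgb
    have hg1 : g = 1 := orderOf_eq_one_iff.mp
      (Nat.dvd_one.mp (hcop ▸ Nat.dvd_gcd hdq hdp))
    have hik : i = k := by
      have h1 : a ^ i.val = a ^ k.val := inv_mul_eq_one.mp hg1 |>.symm
      have hmod := pow_eq_pow_iff_modEq.mp h1
      rw [ha] at hmod
      exact ZMod.val_injective q ((Nat.mod_eq_of_lt i.val_lt) ▸ (Nat.mod_eq_of_lt k.val_lt) ▸ hmod)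
    have hjl : j = l := by
      have h2 : b ^ l.val * (b ^ j.val)⁻¹ = 1 := by rw [← hmain]; exact hg1
      have h1 : b ^ j.val = b ^ l.val := (mul_inv_eq_one.mp h2).symm
      have hmod := pow_eq_pow_iff_modEq.mp h1
      rw [hb] at hmod
      exact ZMod.val_injective p ((Nat.mod_eq_of_lt j.val_lt) ▸ (Nat.mod_eq_of_lt l.val_lt) ▸ hmod)
    rw [hik, hjl]
  have hEbij : Function.Bijective (E q p a b) := by
    rw [Nat.bijective_iff_injective_and_card]
    refine ⟨hEinj, ?_⟩
    rw [hcard, Nat.card_prod, Nat.card_zmod, Nat.card_zmod, mul_comm]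
  have hrne1 : rr ≠ 1 := by
    intro h
    rw [h, orderOf_one] at hr
    omega
  have hden : rr - 1 ≠ 0 := sub_ne_zero.mpr hrne1
  have hrp1 : rr ^ p = 1 := hr ▸ pow_orderOf_eq_one rr
  have hrpow_ne1 : ∀ j : ZMod p, j ≠ 0 → rr ^ j.val ≠ 1 := by
    intro j hj h1
    have hdvd : p ∣ j.val := by
      have := orderOf_dvd_of_pow_eq_one h1
      rwa [hr] at this
    have hlt := j.val_lt
    have : j.val = 0 := Nat.eq_zero_of_dvd_of_lt hdvd hlt
    exact hj (by rwa [← ZMod.val_eq_zero])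
  have hσ0 : sigma q p r 0 = 0 := by
    simp [sigma, ZMod.val_zero]
  have hσ_add : ∀ j l : ZMod p,
      sigma q p r (j + l) = sigma q p r j + sigma q p r l * rr ^ j.val := by
    intro j l
    have hpow : rr ^ (j + l).val = rr ^ j.val * rr ^ l.val := by
      rw [← pow_add]
      exact (key_r (j.val + l.val) (j + l) (by push_cast [hval_castp]; ring)).symm
    simp only [sigma, ← hrr]
    rw [hpow]
    field_simp
    ring
  have hσne : ∀ j : ZMod p, j ≠ 0 → sigma q p r j ≠ 0 := by
    intro j hj
    have hnum : rr ^ j.val - 1 ≠ 0 := sub_ne_zero.mpr (hrpow_ne1 j hj)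
    simp only [sigma, ← hrr]
    exact div_ne_zero hnum hden
  -- powers of E
  have hEpow : ∀ (z : ZMod q × ZMod p) (n : ℕ),
      E q p a b z ^ n = E q p a b (z.1 * ∑ i ∈ Finset.range n, (rr ^ z.2.val) ^ i, n • z.2) := by
    intro z n
    induction n with
    | zero => simpa using hE00.symm
    | succ n ih =>
      rw [pow_succ, ih, hEmul]
      congr 1
      have h1 : rr ^ (n • z.2).val = (rr ^ z.2.val) ^ n := by
        rw [← pow_mul]
        refine (key_r (z.2.val * n) (n • z.2) ?_).symm
        push_cast [hval_castp]
        rw [nsmul_eq_mul]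
        ring
      refine Prod.ext ?_ ?_
      · show z.1 * ∑ i ∈ Finset.range n, (rr ^ z.2.val) ^ i + z.1 * rr ^ (n • z.2).val
            = z.1 * ∑ i ∈ Finset.range (n + 1), (rr ^ z.2.val) ^ i
        rw [h1, Finset.sum_range_succ]
        ring
      · show n • z.2 + z.2 = (n + 1) • z.2
        rw [succ_nsmul]
  have hEordp : ∀ (i : ZMod q) (j : ZMod p), j ≠ 0 → E q p a b (i, j) ^ p = 1 := by
    intro i j hj
    rw [hEpow]
    have hx : (rr ^ j.val) ^ p = 1 := by
      rw [← pow_mul, mul_comm, pow_mul, hrp1, one_pow]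
    have hsum : ∑ i ∈ Finset.range p, (rr ^ (j, j).2.val) ^ i = 0 := by
      rw [geom_sum_eq (hrpow_ne1 j hj) p, hx]
      simp
    have hsmul : p • j = 0 := by
      rw [nsmul_eq_mul, ZMod.natCast_self, zero_mul]
    simp only [hsum]
    rw [hsmul]
    simpa using hE00
  -- order classification
  have horder_q : ∀ (k : ZMod q) (m : ZMod p), orderOf (E q p a b (k, m)) = q →
      m = 0 ∧ k ≠ 0 := by
    intro k m hord
    have hm : m = 0 := by
      by_contra hm
      have h1 := hEordp k m hm
      have h2 : orderOf (E q p a b (k, m)) ∣ p := orderOf_dvd_of_pow_eq_one h1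
      rw [hord] at h2
      exact absurd ((Nat.prime_dvd_prime_iff_eq hq hp).mp h2) (by omega)
    refine ⟨hm, ?_⟩
    intro hk
    rw [hm, hk, hE00, orderOf_one] at hord
    omega
  have horder_p : ∀ (s : ZMod q) (m : ZMod p), orderOf (E q p a b (s, m)) = p →
      m ≠ 0 := by
    intro s m hord hm
    rw [hm, hEj0] at hord
    have h2 : orderOf (a ^ s.val) ∣ q := by
      have := orderOf_pow_dvd (x := a) s.val
      rwa [ha] at this
    rw [hord] at h2
    exact absurd ((Nat.prime_dvd_prime_iff_eq hp hq).mp h2) (by omega)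
  -- the equivalence
  set e : (ZMod q × ZMod p) ≃ G := Equiv.ofBijective _ hEbij with he
  have heE : ∀ z, e z = E q p a b z := fun z => rfl
  have hesymmE : ∀ z, e.symm (E q p a b z) = z := by
    intro z; rw [← heE]; exact e.symm_apply_apply z
  have key : ∀ x₁ x₂ x₃ y₁ : G, orderOf x₁ = p → orderOf x₂ = p → orderOf x₃ = p →
      orderOf y₁ = q → x₁ * x₂ * x₃ * y₁ = 1 →
      ∃ (ω : G ≃* G) (l : ZMod q) (n₁ n₂ : ZMod p),
        n₁ ≠ 0 ∧ n₂ ≠ 0 ∧ n₁ + n₂ ≠ 0 ∧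
        ω x₁ = a ^ (-1 - l * rr ^ n₁.val).val * b ^ n₁.val ∧
        ω x₂ = a ^ l.val * b ^ n₂.val ∧
        ω x₃ = b ^ (-n₁ - n₂).val ∧
        ω y₁ = a := by
    intro x₁ x₂ x₃ y₁ ho1 ho2 ho3 hoy hprod
    obtain ⟨⟨s₁, m₁⟩, hx₁⟩ := hEbij.2 x₁
    obtain ⟨⟨s₂, m₂⟩, hx₂⟩ := hEbij.2 x₂
    obtain ⟨⟨s₃, m₃⟩, hx₃⟩ := hEbij.2 x₃
    obtain ⟨⟨k, m⟩, hy⟩ := hEbij.2 y₁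
    subst hx₁ hx₂ hx₃ hy
    have hm₁ : m₁ ≠ 0 := horder_p _ _ ho1
    have hm₂ : m₂ ≠ 0 := horder_p _ _ ho2
    have hm₃ : m₃ ≠ 0 := horder_p _ _ ho3
    obtain ⟨hm0, hk⟩ := horder_q _ _ hoy
    subst hm0
    -- the sum of the m's is zero
    have h4 : E q p a b (s₁ + s₂ * rr ^ m₁.val + s₃ * rr ^ (m₁ + m₂).val
        + k * rr ^ (m₁ + m₂ + m₃).val, m₁ + m₂ + m₃ + 0) = E q p a b (0, 0) := by
      rw [hE00, ← hprod, hEmul, hEmul, hEmul]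
    have hmsum : m₁ + m₂ + m₃ = 0 := by
      have h5 := congrArg Prod.snd (hEinj h4)
      simpa using h5
    have hm₃eq : m₃ = -m₁ - m₂ := by linear_combination hmsum
    -- construct the automorphism
    set t : ZMod q := k⁻¹ with htdef
    have ht : t ≠ 0 := inv_ne_zero hk
    set c : ZMod q := -(t * s₃) / sigma q p r m₃ with hcdef
    set ψ := psiAff q p t c ht (sigma q p r) with hψdef
    have hmul : ∀ g g' : G, e (ψ (e.symm (g * g'))) = e (ψ (e.symm g)) * e (ψ (e.symm g')) := by
      intro g g'
      obtain ⟨z, rfl⟩ := hEbij.2 g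
      obtain ⟨w, rfl⟩ := hEbij.2 g'
      rw [hEmul, hesymmE, hesymmE, hesymmE, heE, heE, heE, hEmul]
      congr 1
      rw [hψdef, psiAff_apply, psiAff_apply, psiAff_apply]
      refine Prod.ext ?_ rfl
      show t * (z.1 + w.1 * rr ^ z.2.val) + c * sigma q p r (z.2 + w.2)
          = (t * z.1 + c * sigma q p r z.2) + (t * w.1 + c * sigma q p r w.2) * rr ^ z.2.val
      rw [hσ_add]
      ring
    set ω : G ≃* G := mulEquivOfEquiv e ψ hmul with hω
    have hωE : ∀ z, ω (E q p a b z) = E q p a b (ψ z) := by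
      intro z
      rw [hω, mulEquivOfEquiv_apply, hesymmE, heE]
    have hσm₃ := hσne m₃ hm₃
    have hc3 : t * s₃ + c * sigma q p r m₃ = 0 := by
      rw [hcdef, div_mul_cancel₀ _ hσm₃]
      ring
    -- value on y₁
    have hωy : ω (E q p a b (k, 0)) = E q p a b (1, 0) := by
      rw [hωE, hψdef, psiAff_apply]
      refine congrArg (E q p a b) (Prod.ext ?_ rfl)
      show t * k + c * sigma q p r 0 = 1
      rw [hσ0, htdef, inv_mul_cancel₀ hk]
      ring
    -- value on x₃
    have hωx₃ : ω (E q p a b (s₃, m₃)) = E q p a b (0, m₃) := by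
      rw [hωE, hψdef, psiAff_apply]
      exact congrArg (E q p a b) (Prod.ext hc3 rfl)
    -- value on x₂
    set l : ZMod q := t * s₂ + c * sigma q p r m₂ with hldef
    have hωx₂ : ω (E q p a b (s₂, m₂)) = E q p a b (l, m₂) := by
      rw [hωE, hψdef, psiAff_apply]
    -- value on x₁
    set u : ZMod q := -1 - l * rr ^ m₁.val with hudef
    have h6 : ω (E q p a b (s₁, m₁)) * ω (E q p a b (s₂, m₂)) * ω (E q p a b (s₃, m₃))
        * ω (E q p a b (k, 0)) = 1 := by
      rw [← map_mul, ← map_mul, ← map_mul, hprod, map_one]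
    have h7 : E q p a b (u, m₁) * ω (E q p a b (s₂, m₂)) * ω (E q p a b (s₃, m₃))
        * ω (E q p a b (k, 0)) = 1 := by
      rw [hωx₂, hωx₃, hωy, hEmul, hEmul]
      show E q p a b (u + l * rr ^ m₁.val + 0 * rr ^ (m₁ + m₂).val, m₁ + m₂ + m₃)
          * E q p a b (1, 0) = 1
      rw [hmsum, hEmul]
      rw [← hE00]
      congr 2
      · rw [hudef, ZMod.val_zero, pow_zero]
        ring
      · rw [add_zero]
    have hωx₁ : ω (E q p a b (s₁, m₁)) = E q p a b (u, m₁) :=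
      mul_right_cancel (mul_right_cancel (mul_right_cancel (h6.trans h7.symm)))
    refine ⟨ω, l, m₁, m₂, hm₁, hm₂, ?_, ?_, ?_, ?_, ?_⟩
    · intro h12
      apply hm₃
      calc m₃ = m₁ + m₂ + m₃ - (m₁ + m₂) := by ring
        _ = 0 := by rw [hmsum, h12]; ring
    · rw [hωx₁, hudef]
      rfl
    · rw [hωx₂]
      rfl
    · rw [hωx₃, hm₃eq, hE0j]
    · rw [hωy, hEj0, ZMod.val_one, pow_one]
  constructor
  · intro x₁ x₂ x₃ y₁ h1 h2 h3 h4 h5 _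
    exact key x₁ x₂ x₃ y₁ h1 h2 h3 h4 h5
  · set pairs : Finset (ZMod p × ZMod p) :=
      (Finset.univ.erase (0 : ZMod p)).biUnion
        (fun n₁ => ((Finset.univ.erase (0 : ZMod p)).erase (-n₁)).image (fun n₂ => (n₁, n₂)))
      with hpairs
    set quad : ZMod q × ZMod p × ZMod p → G × G × G × G := fun z =>
      (a ^ (-1 - z.1 * rr ^ z.2.1.val).val * b ^ z.2.1.val,
       a ^ z.1.val * b ^ z.2.2.val,
       b ^ (-z.2.1 - z.2.2).val,
       a) with hquad
    refine ⟨((Finset.univ : Finset (ZMod q)) ×ˢ pairs).image quad, ?_, ?_⟩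
    · calc (((Finset.univ : Finset (ZMod q)) ×ˢ pairs).image quad).card
          ≤ ((Finset.univ : Finset (ZMod q)) ×ˢ pairs).card := Finset.card_image_le
        _ = q * pairs.card := by
            rw [Finset.card_product, Finset.card_univ, ZMod.card]
        _ ≤ q * ((p - 1) * (p - 2)) := by
            refine Nat.mul_le_mul le_rfl ?_
            calc pairs.card
                ≤ ∑ n₁ ∈ Finset.univ.erase (0 : ZMod p),
                  (((Finset.univ.erase (0 : ZMod p)).erase (-n₁)).image
                    (fun n₂ => (n₁, n₂))).card := Finset.card_biUnion_le
              _ ≤ ∑ _n₁ ∈ Finset.univ.erase (0 : ZMod p), (p - 2) := by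
                  refine Finset.sum_le_sum ?_
                  intro n₁ hn₁
                  have hn₁0 : n₁ ≠ 0 := (Finset.mem_erase.mp hn₁).1
                  calc (((Finset.univ.erase (0 : ZMod p)).erase (-n₁)).image
                        (fun n₂ => (n₁, n₂))).card
                      ≤ ((Finset.univ.erase (0 : ZMod p)).erase (-n₁)).card :=
                        Finset.card_image_le
                    _ ≤ p - 2 := by
                        rw [Finset.card_erase_of_mem
                            (Finset.mem_erase.mpr ⟨neg_ne_zero.mpr hn₁0, Finset.mem_univ _⟩),
                          Finset.card_erase_of_mem (Finset.mem_univ _),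
                          Finset.card_univ, ZMod.card]
                        omega
              _ = (p - 1) * (p - 2) := by
                  rw [Finset.sum_const, Finset.card_erase_of_mem (Finset.mem_univ _),
                    Finset.card_univ, ZMod.card, smul_eq_mul]
        _ = q * (p - 1) * (p - 2) := by ring
    · intro x₁ x₂ x₃ y₁ h1 h2 h3 h4 h5 _
      obtain ⟨ω, l, n₁, n₂, hn₁, hn₂, hn12, e1, e2, e3, e4⟩ := key x₁ x₂ x₃ y₁ h1 h2 h3 h4 h5
      refine ⟨ω, Finset.mem_image.mpr ⟨(l, n₁, n₂),
        Finset.mem_product.mpr ⟨Finset.mem_univ _, ?_⟩, ?_⟩⟩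
      · refine Finset.mem_biUnion.mpr ⟨n₁, Finset.mem_erase.mpr ⟨hn₁, Finset.mem_univ _⟩, ?_⟩
        refine Finset.mem_image.mpr ⟨n₂, Finset.mem_erase.mpr ⟨?_,
          Finset.mem_erase.mpr ⟨hn₂, Finset.mem_univ _⟩⟩, rfl⟩
        intro h
        apply hn12
        rw [h]
        ring
      · rw [hquad]
        rw [e1, e2, e3, e4]
end

section
/- (Group-theoretic content of Theorem 5(3).) In the direct product G' = G_{p,q} × C_2, where C_2 = ⟨t : t² = 1⟩ and t is identified with the central element (1, t), the elements a⁻¹b, b⁻¹t and t a have orders p, 2p and 2q respectively, their product (a⁻¹b)(b⁻¹t)(t a) equals 1, and they generate G'. (This yields a quasiplatonic surface with group of automorphisms (C_q ⋊ C_p) × C_2 of signature (0; p, 2p, 2q) in the closure of the family C_{3,1}.) -/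
private lemma aux_ht2 : (Multiplicative.ofAdd (1 : ZMod 2)) ^ 2 = 1 := by decide

private lemma aux_ht1 : (Multiplicative.ofAdd (1 : ZMod 2)) ≠ 1 := by decide

private lemma aux_htt :
    Multiplicative.ofAdd (1 : ZMod 2) * Multiplicative.ofAdd 1 = 1 := by decide

private lemma aux_cases :
    ∀ c : Multiplicative (ZMod 2), c = 1 ∨ c = Multiplicative.ofAdd 1 := by decide

/-- Group-theoretic content of Theorem 5(3): in `G' = G_{p,q} × C₂` with `t` the generator
of the central `C₂`, the elements `a⁻¹b`, `b⁻¹t`, `ta` have orders `p`, `2p`, `2q`, their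
product equals `1`, and they generate `G'`. -/
theorem quasiplatonic_p_2p_2q
    {G : Type*} [Group G] (p q : ℕ) (hp : p.Prime) (hq : q.Prime)
    (hp2 : Odd p) (hq2 : Odd q) (hpq : p ∣ q - 1) (r : ℕ)
    (hr : orderOf (r : ZMod q) = p) (a b : G)
    (ha : orderOf a = q) (hb : orderOf b = p)
    (hrel : b * a * b⁻¹ = a ^ r)
    (hgen : Subgroup.closure ({a, b} : Set G) = ⊤)
    (hcard : Nat.card G = p * q) :
    orderOf ((a⁻¹ * b, 1) : G × Multiplicative (ZMod 2)) = p ∧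
    orderOf ((b⁻¹, Multiplicative.ofAdd 1) : G × Multiplicative (ZMod 2)) = 2 * p ∧
    orderOf ((a, Multiplicative.ofAdd 1) : G × Multiplicative (ZMod 2)) = 2 * q ∧
    ((a⁻¹ * b, 1) : G × Multiplicative (ZMod 2)) * (b⁻¹, Multiplicative.ofAdd 1) *
      (a, Multiplicative.ofAdd 1) = 1 ∧
    Subgroup.closure ({(a⁻¹ * b, 1), (b⁻¹, Multiplicative.ofAdd 1),
      (a, Multiplicative.ofAdd 1)} : Set (G × Multiplicative (ZMod 2))) = ⊤ := by
  haveI : Fact q.Prime := ⟨hq⟩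
  haveI : Fact p.Prime := ⟨hp⟩
  have hpltq : p < q := by
    have h1 : 1 ≤ q - 1 := by have := hq.two_le; omega
    have := Nat.le_of_dvd h1 hpq
    omega
  haveI : Fact (Nat.Prime 2) := ⟨Nat.prime_two⟩
  have hpne2 : p ≠ 2 := by rintro rfl; exact (by decide : ¬ Odd 2) hp2
  have hqne2 : q ≠ 2 := by rintro rfl; exact (by decide : ¬ Odd 2) hq2
  have ht2 := aux_ht2
  have htt := aux_htt
  have hordt : orderOf (Multiplicative.ofAdd (1 : ZMod 2)) = 2 :=
    orderOf_eq_prime aux_ht2 aux_ht1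
  -- conjugation lemma
  have hconj : ∀ n : ℕ, b ^ n * a * (b ^ n)⁻¹ = a ^ (r ^ n) := by
    intro n
    induction n with
    | zero => simp
    | succ n ih =>
      have h1 : b ^ (n + 1) * a * (b ^ (n + 1))⁻¹ = b * (b ^ n * a * (b ^ n)⁻¹) * b⁻¹ := by
        group
      have h2 : b * a ^ r ^ n * b⁻¹ = (b * a * b⁻¹) ^ r ^ n := by rw [conj_pow]
      rw [h1, ih, h2, hrel, ← pow_mul, pow_succ, Nat.mul_comm]
  -- power formula for a⁻¹ * b
  have key : ∀ n : ℕ, (a⁻¹ * b) ^ n = (a ^ (∑ i ∈ Finset.range n, r ^ i))⁻¹ * b ^ n := by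
    intro n
    induction n with
    | zero => simp
    | succ n ih =>
      have hba : b ^ n * a⁻¹ = (a ^ (r ^ n))⁻¹ * b ^ n := by
        have h := hconj n
        calc b ^ n * a⁻¹ = (a * (b ^ n)⁻¹)⁻¹ := by group
          _ = ((b ^ n)⁻¹ * (b ^ n * a * (b ^ n)⁻¹))⁻¹ := by group
          _ = ((b ^ n)⁻¹ * a ^ (r ^ n))⁻¹ := by rw [h]
          _ = (a ^ (r ^ n))⁻¹ * b ^ n := by group
      rw [Finset.sum_range_succ]
      calc (a⁻¹ * b) ^ (n + 1) = (a⁻¹ * b) ^ n * (a⁻¹ * b) := by rw [pow_succ]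
        _ = (a ^ ∑ i ∈ Finset.range n, r ^ i)⁻¹ * (b ^ n * a⁻¹) * b := by rw [ih]; group
        _ = (a ^ ∑ i ∈ Finset.range n, r ^ i)⁻¹ * ((a ^ (r ^ n))⁻¹ * b ^ n) * b := by rw [hba]
        _ = (a ^ (r ^ n) * a ^ ∑ i ∈ Finset.range n, r ^ i)⁻¹ * b ^ (n + 1) := by
            rw [mul_inv_rev, pow_succ]; group
        _ = (a ^ ((∑ i ∈ Finset.range n, r ^ i) + r ^ n))⁻¹ * b ^ (n + 1) := by
            rw [← pow_add, Nat.add_comm]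
  -- geometric sum is divisible by q
  have hsum : q ∣ ∑ i ∈ Finset.range p, r ^ i := by
    have hx1 : (r : ZMod q) ≠ 1 := by
      intro h
      rw [h, orderOf_one] at hr
      exact hp.one_lt.ne hr
    have hcast : ((∑ i ∈ Finset.range p, r ^ i : ℕ) : ZMod q) = 0 := by
      push_cast
      rw [geom_sum_eq hx1, ← hr, pow_orderOf_eq_one]
      simp
    exact (ZMod.natCast_eq_zero_iff _ _).mp hcast
  -- order of a⁻¹ * b is p
  have hpow : (a⁻¹ * b) ^ p = 1 := by
    rw [key p]
    have h1 : a ^ (∑ i ∈ Finset.range p, r ^ i) = 1 :=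
      orderOf_dvd_iff_pow_eq_one.mp (ha ▸ hsum)
    have h2 : b ^ p = 1 := hb ▸ pow_orderOf_eq_one b
    rw [h1, h2]; simp
  have hne : a⁻¹ * b ≠ 1 := by
    intro h
    rw [inv_mul_eq_one] at h
    rw [h, hb] at ha
    omega
  have hord1 : orderOf (a⁻¹ * b) = p := orderOf_eq_prime hpow hne
  refine ⟨?_, ?_, ?_, ?_, ?_⟩
  · rw [Prod.orderOf]
    simp [hord1]
  · rw [Prod.orderOf]
    simp only [orderOf_inv, hb, hordt]
    have hcop : Nat.Coprime p 2 := (Nat.coprime_primes hp Nat.prime_two).mpr hpne2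
    rw [Nat.Coprime.lcm_eq_mul hcop, Nat.mul_comm]
  · rw [Prod.orderOf]
    simp only [ha, hordt]
    have hcop : Nat.Coprime q 2 := (Nat.coprime_primes hq Nat.prime_two).mpr hqne2
    rw [Nat.Coprime.lcm_eq_mul hcop, Nat.mul_comm]
  · simp only [Prod.mk_mul_mk, Prod.mk_eq_one]
    constructor
    · group
    · rw [one_mul, htt]
  · set H := Subgroup.closure ({(a⁻¹ * b, 1), (b⁻¹, Multiplicative.ofAdd 1), (a, Multiplicative.ofAdd 1)} : Set (G × Multiplicative (ZMod 2)))
      with hH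
    have hz : ((a, Multiplicative.ofAdd 1) : G × Multiplicative (ZMod 2)) ∈ H :=
      Subgroup.subset_closure (by simp)
    have hy : ((b⁻¹, Multiplicative.ofAdd 1) : G × Multiplicative (ZMod 2)) ∈ H :=
      Subgroup.subset_closure (by simp)
    have h1t : ((1, Multiplicative.ofAdd 1) : G × Multiplicative (ZMod 2)) ∈ H := by
      have hm := H.pow_mem hz q
      have heq : ((a, Multiplicative.ofAdd 1) : G × Multiplicative (ZMod 2)) ^ q = (1, Multiplicative.ofAdd 1) := by
        refine Prod.ext ?_ ?_
        · show a ^ q = 1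
          exact ha ▸ pow_orderOf_eq_one a
        · show Multiplicative.ofAdd (1 : ZMod 2) ^ q = Multiplicative.ofAdd 1
          have hmod : Multiplicative.ofAdd (1 : ZMod 2) ^ q
              = Multiplicative.ofAdd (1 : ZMod 2) ^ (q % 2) := by
            conv_lhs => rw [← Nat.div_add_mod q 2, pow_add, pow_mul]
            rw [ht2, one_pow, one_mul]
          rw [hmod, Nat.odd_iff.mp hq2, pow_one]
      rwa [heq] at hm
    have hat : ((a, 1) : G × Multiplicative (ZMod 2)) ∈ H := by
      have hm := H.mul_mem hz h1t
      rwa [Prod.mk_mul_mk, mul_one, htt] at hm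
    have hbt : ((b, 1) : G × Multiplicative (ZMod 2)) ∈ H := by
      have hm := H.mul_mem hy h1t
      rw [Prod.mk_mul_mk, mul_one, htt] at hm
      have := H.inv_mem hm
      rwa [Prod.inv_mk, inv_inv, inv_one] at this
    have hGin : ∀ g : G, ((g, 1) : G × Multiplicative (ZMod 2)) ∈ H := by
      intro g
      have hsub : Subgroup.closure ({a, b} : Set G)
          ≤ H.comap (MonoidHom.inl G (Multiplicative (ZMod 2))) := by
        rw [Subgroup.closure_le]
        rintro x (rfl | rfl)
        · exact hat
        · exact hbt
      have hg : g ∈ Subgroup.closure ({a, b} : Set G) := hgen ▸ Subgroup.mem_top g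
      exact hsub hg
    rw [eq_top_iff]
    rintro ⟨g, c⟩ -
    have hc : c = 1 ∨ c = Multiplicative.ofAdd 1 := aux_cases c
    rcases hc with rfl | rfl
    · exact hGin g
    · have hm := H.mul_mem (hGin g) h1t
      rwa [Prod.mk_mul_mk, mul_one, one_mul] at hm
end
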